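/- arXiv:2408.16143 — 7 statements merged into one kernel-verified Lean document; each statement's English description precedes it below -/
import Mathlib

section
/- Let a, b, k be integers with 0 ≤ a ≤ b and k ≥ 1. A multigraph G satisfies 2ka ≤ δ(G) and Δ(G) ≤ 2kb if and only if G can be edge-decomposed into k spanning subgraphs G_1,...,G_k with 2a ≤ δ(G_i) and Δ(G_i) ≤ 2b for each i. -/
set_option linter.unusedSectionVars false
set_option maxHeartbeats 1000000
open Finset
namespace Stmt9Aux



variable {E V : Type*} [Fintype E] [DecidableEq E] [DecidableEq V]

/-- degree of `v` within `F` under endpoint map `P` -/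
def pdeg (P : E → V) (F : Finset E) (v : V) : ℕ := (F.filter fun e => P e = v).card

def srcf (ends : E → V × V) (o : E → Bool) (e : E) : V :=
  if o e then (ends e).1 else (ends e).2

def dstf (ends : E → V × V) (o : E → Bool) (e : E) : V :=
  if o e then (ends e).2 else (ends e).1

lemma pdeg_split (P : E → V) (F : Finset E) (e : E) (he : e ∈ F) (v : V) :
    pdeg P F v = pdeg P (F.erase e) v + (if P e = v then 1 else 0) := by
  rw [pdeg, pdeg, Finset.card_filter, Finset.card_filter,
    ← Finset.sum_erase_add _ _ he]

lemma pdeg_congr {P Q : E → V} {F : Finset E} (h : ∀ e ∈ F, P e = Q e) (v : V) :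
    pdeg P F v = pdeg Q F v := by
  unfold pdeg
  congr 1
  apply Finset.filter_congr
  intro e he
  rw [h e he]

lemma orient_eq (ends : E → V × V) (o' : E → Bool) (e : E) (x y : V)
    (hxy : ends e = (x, y) ∨ ends e = (y, x))
    (ho : o' e = decide ((ends e).1 = x)) :
    srcf ends o' e = x ∧ dstf ends o' e = y := by
  rcases hxy with hxy | hxy <;> by_cases h : (ends e).1 = x <;>
    simp [srcf, dstf, ho, h, hxy] at * <;> simp [hxy, h]

theorem exists_balanced_orientation (N : ℕ) :
    ∀ (ends : E → V × V) (F : Finset E), F.card ≤ N →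
    ∃ o : E → Bool, ∀ v : V,
      pdeg (srcf ends o) F v ≤ pdeg (dstf ends o) F v + 1 ∧
      pdeg (dstf ends o) F v ≤ pdeg (srcf ends o) F v + 1 := by
  induction N with
  | zero =>
    intro ends F hF
    have : F = ∅ := Finset.card_eq_zero.mp (Nat.le_zero.mp hF)
    subst this
    exact ⟨fun _ => true, fun v => by simp [pdeg]⟩
  | succ N ih =>
    intro ends F hF
    by_cases h : ∃ v : V, ∃ e1 ∈ F, ∃ e2 ∈ F, e1 ≠ e2 ∧
        ((ends e1).1 = v ∨ (ends e1).2 = v) ∧ ((ends e2).1 = v ∨ (ends e2).2 = v)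
    · obtain ⟨v, e1, he1, e2, he2, hne, hi1, hi2⟩ := h
      set u := if (ends e1).1 = v then (ends e1).2 else (ends e1).1 with hu
      set w := if (ends e2).1 = v then (ends e2).2 else (ends e2).1 with hw
      have hpair1 : ends e1 = (v, u) ∨ ends e1 = (u, v) := by
        by_cases h1 : (ends e1).1 = v
        · left; rw [hu, if_pos h1, ← h1]
        · right; rw [hu, if_neg h1, ← hi1.resolve_left h1]
      have hpair2 : ends e2 = (v, w) ∨ ends e2 = (w, v) := by
        by_cases h2 : (ends e2).1 = v
        · left; rw [hw, if_pos h2, ← h2]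
        · right; rw [hw, if_neg h2, ← hi2.resolve_left h2]
      set ends' := Function.update ends e1 (u, w) with hends'
      set F' := F.erase e2 with hF'
      have he2F' : e2 ∉ F' := Finset.notMem_erase _ _
      have he1F' : e1 ∈ F' := Finset.mem_erase.mpr ⟨hne, he1⟩
      have hcard : F'.card ≤ N := by
        have h1 : F'.card = F.card - 1 := by
          rw [hF']; exact Finset.card_erase_of_mem he2
        have h2 := Finset.card_pos.mpr ⟨e2, he2⟩
        omega
      obtain ⟨o, ho⟩ := ih ends' F' hcard
      set t1 : V := if o e1 then u else v with ht1
      set s1 : V := if o e1 then v else u with hs1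
      set t2 : V := if o e1 then v else w with ht2
      set s2 : V := if o e1 then w else v with hs2
      set o' : E → Bool :=
        Function.update (Function.update o e1 (decide ((ends e1).1 = t1)))
          e2 (decide ((ends e2).1 = t2)) with ho'
      have ho'e1 : o' e1 = decide ((ends e1).1 = t1) := by
        rw [ho', Function.update_of_ne hne, Function.update_self]
      have ho'e2 : o' e2 = decide ((ends e2).1 = t2) := by
        rw [ho', Function.update_self]
      have ho'e : ∀ e, e ≠ e1 → e ≠ e2 → o' e = o e := by
        intro e h1 h2
        rw [ho', Function.update_of_ne h2, Function.update_of_ne h1]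
      have hxy1 : ends e1 = (t1, s1) ∨ ends e1 = (s1, t1) := by
        rcases hpair1 with h1 | h1 <;> cases hoe : o e1 <;>
          simp only [ht1, hs1, hoe, if_true, if_false, Bool.false_eq_true] <;> simp [h1]
      have hxy2 : ends e2 = (t2, s2) ∨ ends e2 = (s2, t2) := by
        rcases hpair2 with h2 | h2 <;> cases hoe : o e1 <;>
          simp only [ht2, hs2, hoe, if_true, if_false, Bool.false_eq_true] <;> simp [h2]
      obtain ⟨hsrc1, hdst1⟩ := orient_eq ends o' e1 t1 s1 hxy1 ho'e1
      obtain ⟨hsrc2, hdst2⟩ := orient_eq ends o' e2 t2 s2 hxy2 ho'e2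
      -- merged edge endpoints under old orientation
      have hm : srcf ends' o e1 = (if o e1 then u else w) ∧
          dstf ends' o e1 = (if o e1 then w else u) := by
        constructor <;> cases hoe : o e1 <;>
          simp [srcf, dstf, hends', Function.update_self, hoe]
      -- agreement away from e1, e2
      have hagree : ∀ e ∈ F'.erase e1, srcf ends o' e = srcf ends' o e ∧
          dstf ends o' e = dstf ends' o e := by
        intro e he
        have h1 : e ≠ e1 := (Finset.mem_erase.mp he).1
        have h2 : e ≠ e2 := (Finset.mem_erase.mp (Finset.mem_of_mem_erase he)).1
        constructor <;>
          simp [srcf, dstf, ho'e e h1 h2, hends', Function.update_of_ne h1]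
      have main : ∀ x : V,
          (pdeg (srcf ends o') F x = pdeg (srcf ends' o) F' x + (if x = v then 1 else 0)) ∧
          (pdeg (dstf ends o') F x = pdeg (dstf ends' o) F' x + (if x = v then 1 else 0)) := by
        intro x
        have e2F : F.erase e2 = F' := rfl
        rw [pdeg_split (srcf ends o') F e2 he2 x, pdeg_split (dstf ends o') F e2 he2 x, e2F,
          pdeg_split (srcf ends o') F' e1 he1F' x, pdeg_split (dstf ends o') F' e1 he1F' x,
          pdeg_split (srcf ends' o) F' e1 he1F' x, pdeg_split (dstf ends' o) F' e1 he1F' x,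
          pdeg_congr (fun e he => (hagree e he).1) x, pdeg_congr (fun e he => (hagree e he).2) x,
          hsrc1, hsrc2, hdst1, hdst2, hm.1, hm.2]
        have hxv : (if x = v then (1:ℕ) else 0) = (if v = x then 1 else 0) := by
          simp only [eq_comm]
        rw [hxv]
        cases hoe : o e1 <;>
          simp only [ht1, ht2, hs1, hs2, hoe, if_true, if_false, Bool.false_eq_true,
            ite_true, ite_false] <;>
          constructor <;> first | trivial | (split_ifs <;> omega)
      refine ⟨o', fun x => ?_⟩
      have h1 := (main x).1
      have h2 := (main x).2
      have h3 := (ho x).1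
      have h4 := (ho x).2
      omega
    · -- base: every vertex has at most one incident edge in F
      refine ⟨fun _ => true, fun v => ?_⟩
      have hone : (F.filter fun e => (ends e).1 = v ∨ (ends e).2 = v).card ≤ 1 := by
        rw [Finset.card_le_one]
        intro a ha b hb
        by_contra hab
        exact h ⟨v, a, (Finset.mem_filter.mp ha).1, b, (Finset.mem_filter.mp hb).1, hab,
          (Finset.mem_filter.mp ha).2, (Finset.mem_filter.mp hb).2⟩
      have h1 : pdeg (srcf ends (fun _ => true)) F v ≤ 1 := by
        refine le_trans (Finset.card_le_card ?_) hone
        intro e he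
        simp only [Finset.mem_filter, srcf] at *
        exact ⟨he.1, Or.inl he.2⟩
      have h2 : pdeg (dstf ends (fun _ => true)) F v ≤ 1 := by
        refine le_trans (Finset.card_le_card ?_) hone
        intro e he
        simp only [Finset.mem_filter, dstf] at *
        exact ⟨he.1, Or.inr he.2⟩
      omega




variable {E X Y : Type*} [Fintype E] [DecidableEq E] [Fintype X] [DecidableEq X]
  [Fintype Y] [DecidableEq Y]

theorem regular_coloring :
    ∀ (k : ℕ) (L : E → X) (R : E → Y) (F : Finset E),
    (∀ x, (F.filter fun e => L e = x).card = k) →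
    (∀ y, (F.filter fun e => R e = y).card = k) →
    ∃ c : E → ℕ, (∀ e ∈ F, c e < k) ∧
      ∀ e ∈ F, ∀ e' ∈ F, e ≠ e' → c e = c e' → L e ≠ L e' ∧ R e ≠ R e' := by
  intro k
  induction k with
  | zero =>
    intro L R F hL hR
    have hF : F = ∅ := by
      by_contra h
      obtain ⟨e, he⟩ := Finset.nonempty_of_ne_empty h
      have := hL (L e)
      have he' : e ∈ F.filter fun e' => L e' = L e := Finset.mem_filter.mpr ⟨he, rfl⟩
      rw [Finset.card_eq_zero] at this
      rw [this] at he'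
      exact absurd he' (Finset.notMem_empty e)
    subst hF
    exact ⟨fun _ => 0, fun e he => absurd he (Finset.notMem_empty e),
      fun e he => absurd he (Finset.notMem_empty e)⟩
  | succ k ih =>
    intro L R F hL hR
    set t : X → Finset Y := fun x => (F.filter fun e => L e = x).image R with ht
    have hfibL : ∀ (S : Finset X), (F.filter fun e => L e ∈ S).card = (k+1) * S.card := by
      intro S
      rw [Finset.card_eq_sum_card_fiberwise (f := L) (s := F.filter fun e => L e ∈ S) (t := S)
        (fun e he => (Finset.mem_filter.mp he).2)]
      rw [Finset.sum_congr rfl (fun x hx => ?_), Finset.sum_const, smul_eq_mul, mul_comm]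
      rw [Finset.filter_filter]
      rw [show (F.filter fun e => L e ∈ S ∧ L e = x) = F.filter fun e => L e = x from
        Finset.filter_congr (fun e _ => by
          constructor
          · exact fun h => h.2
          · exact fun h => ⟨h ▸ hx, h⟩)]
      exact hL x
    have hfibR : ∀ (T : Finset Y), (F.filter fun e => R e ∈ T).card = (k+1) * T.card := by
      intro T
      rw [Finset.card_eq_sum_card_fiberwise (f := R) (s := F.filter fun e => R e ∈ T) (t := T)
        (fun e he => (Finset.mem_filter.mp he).2)]
      rw [Finset.sum_congr rfl (fun y hy => ?_), Finset.sum_const, smul_eq_mul, mul_comm]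
      rw [Finset.filter_filter]
      rw [show (F.filter fun e => R e ∈ T ∧ R e = y) = F.filter fun e => R e = y from
        Finset.filter_congr (fun e _ => by
          constructor
          · exact fun h => h.2
          · exact fun h => ⟨h ▸ hy, h⟩)]
      exact hR y
    have hall : ∀ S : Finset X, S.card ≤ (S.biUnion t).card := by
      intro S
      have hsub : (F.filter fun e => L e ∈ S) ⊆ (F.filter fun e => R e ∈ S.biUnion t) := by
        intro e he
        obtain ⟨heF, heS⟩ := Finset.mem_filter.mp he
        refine Finset.mem_filter.mpr ⟨heF, Finset.mem_biUnion.mpr ⟨L e, heS, ?_⟩⟩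
        exact Finset.mem_image.mpr ⟨e, Finset.mem_filter.mpr ⟨heF, rfl⟩, rfl⟩
      have := Finset.card_le_card hsub
      rw [hfibL, hfibR] at this
      exact Nat.le_of_mul_le_mul_left this (Nat.succ_pos k)
    obtain ⟨f, hfinj, hf⟩ := (Finset.all_card_le_biUnion_card_iff_exists_injective t).mp hall
    have hgex : ∀ x : X, ∃ e, e ∈ F ∧ L e = x ∧ R e = f x := by
      intro x
      obtain ⟨e, he, hre⟩ := Finset.mem_image.mp (hf x)
      obtain ⟨heF, hle⟩ := Finset.mem_filter.mp he
      exact ⟨e, heF, hle, hre⟩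
    choose g hg1 hg2 hg3 using hgex
    have hginj : Function.Injective g := by
      intro x x' h
      rw [← hg2 x, ← hg2 x', h]
    set M : Finset E := Finset.univ.image g with hM
    have hMF : M ⊆ F := by
      intro e he
      obtain ⟨x, _, rfl⟩ := Finset.mem_image.mp he
      exact hg1 x
    have hML : ∀ x, M.filter (fun e => L e = x) = {g x} := by
      intro x
      ext e
      simp only [Finset.mem_filter, Finset.mem_singleton, hM, Finset.mem_image,
        Finset.mem_univ, true_and]
      constructor
      · rintro ⟨⟨x', rfl⟩, hLe⟩
        rw [hg2 x'] at hLe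
        rw [hLe]
      · rintro rfl
        exact ⟨⟨x, rfl⟩, hg2 x⟩
    have hcXY : Fintype.card X = Fintype.card Y := by
      have h1 : F.card = (k+1) * Fintype.card X := by
        have := hfibL Finset.univ
        simpa using this
      have h2 : F.card = (k+1) * Fintype.card Y := by
        have := hfibR Finset.univ
        simpa using this
      have := h1.symm.trans h2
      exact Nat.eq_of_mul_eq_mul_left (Nat.succ_pos k) this
    have hcardM : M.card = Fintype.card X := by
      rw [hM, Finset.card_image_of_injective _ hginj, Finset.card_univ]
    have hRinj : Set.InjOn R M := by
      intro e he e' he' hre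
      obtain ⟨x, _, rfl⟩ := Finset.mem_image.mp he
      obtain ⟨x', _, rfl⟩ := Finset.mem_image.mp he'
      rw [hg3 x, hg3 x'] at hre
      rw [hfinj hre]
    have himg : M.image R = Finset.univ := by
      apply Finset.eq_univ_of_card
      rw [Finset.card_image_of_injOn hRinj, hcardM, hcXY]
    have hMR : ∀ y, (M.filter fun e => R e = y).card = 1 := by
      intro y
      have hy : y ∈ M.image R := by rw [himg]; exact Finset.mem_univ y
      obtain ⟨e, heM, hre⟩ := Finset.mem_image.mp hy
      rw [Finset.card_eq_one]
      refine ⟨e, ?_⟩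
      ext e'
      simp only [Finset.mem_filter, Finset.mem_singleton]
      constructor
      · rintro ⟨h1, h2⟩
        exact hRinj h1 heM (h2.trans hre.symm)
      · rintro rfl
        exact ⟨heM, hre⟩
    have filter_sdiff : ∀ (p : E → Prop) [DecidablePred p],
        (F \ M).filter p = F.filter p \ M.filter p := by
      intro p hp
      ext e
      simp only [Finset.mem_sdiff, Finset.mem_filter]
      tauto
    set F' : Finset E := F \ M with hF'
    have hdL : ∀ x, (F'.filter fun e => L e = x).card = k := by
      intro x
      rw [hF', filter_sdiff, Finset.card_sdiff_of_subset (Finset.filter_subset_filter _ hMF)]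
      rw [hL x, hML x, Finset.card_singleton]
      omega
    have hdR : ∀ y, (F'.filter fun e => R e = y).card = k := by
      intro y
      rw [hF', filter_sdiff, Finset.card_sdiff_of_subset (Finset.filter_subset_filter _ hMF)]
      rw [hR y, hMR y]
      omega
    obtain ⟨c', hc'lt, hc'prop⟩ := ih L R F' hdL hdR
    refine ⟨fun e => if e ∈ M then k else c' e, ?_, ?_⟩
    · intro e heF
      by_cases heM : e ∈ M
      · simp [heM]
      · have : e ∈ F' := Finset.mem_sdiff.mpr ⟨heF, heM⟩
        simp only [heM, if_false]
        exact Nat.lt_succ_of_lt (hc'lt e this)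
    · intro e heF e' heF' hne hce
      by_cases heM : e ∈ M <;> by_cases heM' : e' ∈ M
      · constructor
        · intro hLe
          have h1 : e ∈ M.filter fun e'' => L e'' = L e' := Finset.mem_filter.mpr ⟨heM, hLe⟩
          have h2 : e' ∈ M.filter fun e'' => L e'' = L e' := Finset.mem_filter.mpr ⟨heM', rfl⟩
          rw [hML (L e')] at h1 h2
          exact hne ((Finset.mem_singleton.mp h1).trans (Finset.mem_singleton.mp h2).symm)
        · intro hRe
          exact hne (hRinj heM heM' hRe)
      · exfalso
        simp only [heM, heM', if_true, if_false] at hce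
        have : e' ∈ F' := Finset.mem_sdiff.mpr ⟨heF', heM'⟩
        exact absurd hce.symm (Nat.ne_of_lt (hc'lt e' this))
      · exfalso
        simp only [heM, heM', if_true, if_false] at hce
        have : e ∈ F' := Finset.mem_sdiff.mpr ⟨heF, heM⟩
        exact absurd hce (Nat.ne_of_lt (hc'lt e this))
      · simp only [heM, heM', if_false] at hce
        have h1 : e ∈ F' := Finset.mem_sdiff.mpr ⟨heF, heM⟩
        have h2 : e' ∈ F' := Finset.mem_sdiff.mpr ⟨heF', heM'⟩
        exact hc'prop e h1 e' h2 hne hce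






lemma card_filter_sum {α β : Type*} [Fintype α] [Fintype β] (p : α ⊕ β → Prop)
    [DecidablePred p] :
    (univ.filter p).card =
      (univ.filter fun a => p (Sum.inl a)).card + (univ.filter fun b => p (Sum.inr b)).card := by
  rw [Finset.card_filter, Finset.card_filter, Finset.card_filter, Fintype.sum_sum_type]

/-- a function `Fin N → X` with prescribed fiber sizes -/
lemma exists_prescribed_fibers {X : Type*} [DecidableEq X] [Fintype X] (g : X → ℕ) {N : ℕ}
    (h : ∑ x, g x = N) :
    ∃ f : Fin N → X, ∀ x, (univ.filter fun i => f i = x).card = g x := by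
  have hc : Fintype.card (Σ x, Fin (g x)) = N := by
    rw [Fintype.card_sigma]
    simpa using h
  set e := Fintype.equivFinOfCardEq hc with he
  refine ⟨fun i => (e.symm i).1, fun x => ?_⟩
  rw [← Fintype.card_subtype]
  have e2 : {i : Fin N // (e.symm i).1 = x} ≃ {s : Σ x', Fin (g x') // s.1 = x} :=
    Equiv.subtypeEquiv e.symm (fun _ => Iff.rfl)
  have e3 : {s : Σ x', Fin (g x') // s.1 = x} ≃ Fin (g x) :=
    { toFun := fun s => Fin.cast (congrArg g s.2) s.val.2
      invFun := fun j => ⟨⟨x, j⟩, rfl⟩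
      left_inv := fun s => by
        rcases s with ⟨⟨x', j⟩, h⟩
        subst h
        rfl
      right_inv := fun j => rfl }
  rw [Fintype.card_congr (e2.trans e3), Fintype.card_fin]

theorem konig {E X Y : Type*} [Fintype E] [DecidableEq E] [Fintype X] [DecidableEq X]
    [Fintype Y] [DecidableEq Y] (k : ℕ) (L : E → X) (R : E → Y)
    (hL : ∀ x, (univ.filter fun e => L e = x).card ≤ k)
    (hR : ∀ y, (univ.filter fun e => R e = y).card ≤ k) :
    ∃ c : E → ℕ, (∀ e, c e < k) ∧
      ∀ e e', e ≠ e' → c e = c e' → L e ≠ L e' ∧ R e ≠ R e' := by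
  classical
  rcases Nat.eq_zero_or_pos k with hk | hk
  · subst hk
    have hE : IsEmpty E := ⟨fun e => by
      have h1 := hL (L e)
      have h2 : e ∈ univ.filter fun e' => L e' = L e := Finset.mem_filter.mpr ⟨mem_univ e, rfl⟩
      have := Finset.card_pos.mpr ⟨e, h2⟩
      omega⟩
    exact ⟨fun _ => 0, fun e => (hE.false e).elim, fun e => (hE.false e).elim⟩
  set nX := Fintype.card X with hnX
  set nY := Fintype.card Y with hnY
  set nE := Fintype.card E with hnE
  have hsumL : ∑ x : X, (univ.filter fun e => L e = x).card = nE := by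
    rw [hnE, ← Finset.card_univ, Finset.card_eq_sum_card_fiberwise (f := L) (t := univ)
      (fun e _ => mem_univ (L e))]
  have hsumR : ∑ y : Y, (univ.filter fun e => R e = y).card = nE := by
    rw [hnE, ← Finset.card_univ, Finset.card_eq_sum_card_fiberwise (f := R) (t := univ)
      (fun e _ => mem_univ (R e))]
  have hNE : nE ≤ k * nX := by
    calc nE = ∑ x : X, (univ.filter fun e => L e = x).card := hsumL.symm
    _ ≤ ∑ _x : X, k := Finset.sum_le_sum (fun x _ => hL x)
    _ = nX * k := by rw [Finset.sum_const, smul_eq_mul, Finset.card_univ]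
    _ = k * nX := mul_comm _ _
  set N := k * (nX + nY) - nE with hN
  set dL : X ⊕ Fin nY → ℕ :=
    Sum.elim (fun x => k - (univ.filter fun e => L e = x).card) (fun _ => k) with hdL
  set dR : Y ⊕ Fin nX → ℕ :=
    Sum.elim (fun y => k - (univ.filter fun e => R e = y).card) (fun _ => k) with hdR
  have hdLsum : ∑ z, dL z = N := by
    rw [Fintype.sum_sum_type]
    have e1 : ∑ x : X, dL (Sum.inl x) = k * nX - nE := by
      have h1 : ∑ x : X, dL (Sum.inl x) + ∑ x : X, (univ.filter fun e => L e = x).card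
          = ∑ _x : X, k := by
        rw [← Finset.sum_add_distrib]
        refine Finset.sum_congr rfl fun x _ => ?_
        simp only [hdL, Sum.elim_inl]
        exact Nat.sub_add_cancel (hL x)
      rw [hsumL] at h1
      have h2 : ∑ _x : X, k = k * nX := by
        rw [Finset.sum_const, smul_eq_mul, Finset.card_univ, ← hnX, mul_comm]
      omega
    have e2 : ∑ i : Fin nY, dL (Sum.inr i) = k * nY := by
      simp [hdL, Finset.sum_const, mul_comm]
    rw [e1, e2, hN]
    have h3 : k * (nX + nY) = k * nX + k * nY := Nat.mul_add k nX nY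
    omega
  have hdRsum : ∑ z, dR z = N := by
    rw [Fintype.sum_sum_type]
    have e1 : ∑ y : Y, dR (Sum.inl y) = k * nY - nE := by
      have h1 : ∑ y : Y, dR (Sum.inl y) + ∑ y : Y, (univ.filter fun e => R e = y).card
          = ∑ _y : Y, k := by
        rw [← Finset.sum_add_distrib]
        refine Finset.sum_congr rfl fun y _ => ?_
        simp only [hdR, Sum.elim_inl]
        exact Nat.sub_add_cancel (hR y)
      rw [hsumR] at h1
      have h2 : ∑ _y : Y, k = k * nY := by
        rw [Finset.sum_const, smul_eq_mul, Finset.card_univ, ← hnY, mul_comm]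
      omega
    have e2 : ∑ i : Fin nX, dR (Sum.inr i) = k * nX := by
      simp [hdR, Finset.sum_const, mul_comm]
    rw [e1, e2, hN]
    have h3 : k * (nX + nY) = k * nX + k * nY := Nat.mul_add k nX nY
    have h4 : nE ≤ k * nY := by
      calc nE = ∑ y : Y, (univ.filter fun e => R e = y).card := hsumR.symm
      _ ≤ ∑ _y : Y, k := Finset.sum_le_sum (fun y _ => hR y)
      _ = k * nY := by rw [Finset.sum_const, smul_eq_mul, Finset.card_univ, ← hnY, mul_comm]
    omega
  obtain ⟨fL, hfL⟩ := exists_prescribed_fibers dL hdLsum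
  obtain ⟨fR, hfR⟩ := exists_prescribed_fibers dR hdRsum
  set Lh : E ⊕ Fin N → X ⊕ Fin nY := Sum.elim (fun e => Sum.inl (L e)) fL with hLh
  set Rh : E ⊕ Fin N → Y ⊕ Fin nX := Sum.elim (fun e => Sum.inl (R e)) fR with hRh
  have hregL : ∀ z, ((univ : Finset (E ⊕ Fin N)).filter fun s => Lh s = z).card = k := by
    intro z
    rw [card_filter_sum]
    rcases z with x | j
    · have h1 : ((univ : Finset E).filter fun e => Lh (Sum.inl e) = Sum.inl x).card
          = (univ.filter fun e => L e = x).card := by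
        congr 1
        apply Finset.filter_congr
        intro e _
        simp [hLh]
      have h2 : ((univ : Finset (Fin N)).filter fun i => Lh (Sum.inr i) = Sum.inl x).card
          = k - (univ.filter fun e => L e = x).card := by
        have := hfL (Sum.inl x)
        simpa [hLh, hdL] using this
      rw [h1, h2]
      exact Nat.add_sub_cancel' (hL x)
    · have h1 : ((univ : Finset E).filter fun e => Lh (Sum.inl e) = Sum.inr j).card = 0 := by
        rw [Finset.card_eq_zero]
        ext e
        simp [hLh]
      have h2 : ((univ : Finset (Fin N)).filter fun i => Lh (Sum.inr i) = Sum.inr j).card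
          = k := by
        have := hfL (Sum.inr j)
        simpa [hLh, hdL] using this
      rw [h1, h2]
      omega
  have hregR : ∀ z, ((univ : Finset (E ⊕ Fin N)).filter fun s => Rh s = z).card = k := by
    intro z
    rw [card_filter_sum]
    rcases z with y | j
    · have h1 : ((univ : Finset E).filter fun e => Rh (Sum.inl e) = Sum.inl y).card
          = (univ.filter fun e => R e = y).card := by
        congr 1
        apply Finset.filter_congr
        intro e _
        simp [hRh]
      have h2 : ((univ : Finset (Fin N)).filter fun i => Rh (Sum.inr i) = Sum.inl y).card
          = k - (univ.filter fun e => R e = y).card := by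
        have := hfR (Sum.inl y)
        simpa [hRh, hdR] using this
      rw [h1, h2]
      exact Nat.add_sub_cancel' (hR y)
    · have h1 : ((univ : Finset E).filter fun e => Rh (Sum.inl e) = Sum.inr j).card = 0 := by
        rw [Finset.card_eq_zero]
        ext e
        simp [hRh]
      have h2 : ((univ : Finset (Fin N)).filter fun i => Rh (Sum.inr i) = Sum.inr j).card
          = k := by
        have := hfR (Sum.inr j)
        simpa [hRh, hdR] using this
      rw [h1, h2]
      omega
  obtain ⟨ch, hlt, hprop⟩ := regular_coloring k Lh Rh univ hregL hregR
  refine ⟨fun e => ch (Sum.inl e), fun e => hlt _ (mem_univ _), fun e e' hne hce => ?_⟩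
  have hne' : (Sum.inl e : E ⊕ Fin N) ≠ Sum.inl e' := fun h => hne (Sum.inl.inj h)
  have := hprop (Sum.inl e) (mem_univ _) (Sum.inl e') (mem_univ _) hne' hce
  constructor
  · intro hLe
    exact this.1 (by simp [hLh, hLe])
  · intro hRe
    exact this.2 (by simp [hRh, hRe])




variable {E V : Type*} [Fintype E] [DecidableEq E] [Fintype V] [DecidableEq V]

/-- rank of `e` within its fiber under `P` -/
def rkP {n : ℕ} (ι : E ≃ Fin n) (P : E → V) (e : E) : ℕ :=
  ((univ.filter fun e' => P e' = P e).filter fun e' => ι e' < ι e).card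

lemma rank_core {n : ℕ} (ι : E ≃ Fin n) (s : Finset E) :
    Set.InjOn (fun e => (s.filter fun e' => ι e' < ι e).card) s ∧
    (s.image fun e => (s.filter fun e' => ι e' < ι e).card) = range s.card := by
  set f := fun e => (s.filter fun e' => ι e' < ι e).card with hf
  have mono : ∀ a ∈ s, ∀ b ∈ s, ι a < ι b → f a < f b := by
    intro a ha b hb hab
    apply Finset.card_lt_card
    rw [Finset.ssubset_def]
    constructor
    · intro e he
      rw [Finset.mem_filter] at *
      exact ⟨he.1, he.2.trans hab⟩
    · intro hsub
      have h1 : a ∈ s.filter fun e' => ι e' < ι b := Finset.mem_filter.mpr ⟨ha, hab⟩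
      have h2 := hsub h1
      rw [Finset.mem_filter] at h2
      exact lt_irrefl _ h2.2
  have hinj : Set.InjOn f s := by
    intro a ha b hb hfab
    by_contra hne
    rcases lt_trichotomy (ι a) (ι b) with h | h | h
    · exact absurd hfab (Nat.ne_of_lt (mono a ha b hb h))
    · exact hne (ι.injective h)
    · exact absurd hfab.symm (Nat.ne_of_lt (mono b hb a ha h))
  have hsub : (s.image f) ⊆ range s.card := by
    intro r hr
    obtain ⟨a, ha, rfl⟩ := Finset.mem_image.mp hr
    rw [Finset.mem_range]
    have h1 : (s.filter fun e' => ι e' < ι a) ⊆ s.erase a := by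
      intro e he
      rw [Finset.mem_filter] at he
      exact Finset.mem_erase.mpr ⟨fun h => (lt_irrefl _ (h ▸ he.2)), he.1⟩
    calc f a ≤ (s.erase a).card := Finset.card_le_card h1
    _ < s.card := by
        rw [Finset.card_erase_of_mem ha]
        have := Finset.card_pos.mpr ⟨a, ha⟩
        omega
  refine ⟨hinj, Finset.eq_of_subset_of_card_le hsub ?_⟩
  rw [Finset.card_range, Finset.card_image_of_injOn hinj]

lemma rk_eq {n : ℕ} (ι : E ≃ Fin n) (P : E → V) (v : V) (e : E)
    (he : e ∈ univ.filter fun e' => P e' = v) :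
    rkP ι P e = (((univ.filter fun e' => P e' = v)).filter fun e' => ι e' < ι e).card := by
  have hPe : P e = v := (Finset.mem_filter.mp he).2
  rw [rkP, hPe]

lemma image_filter'' (s : Finset E) (f : E → ℕ) (p : ℕ → Prop) [DecidablePred p] :
    (s.filter fun a => p (f a)).image f = (s.image f).filter p := by
  ext r
  simp only [Finset.mem_image, Finset.mem_filter]
  constructor
  · rintro ⟨a, ⟨ha, hpa⟩, rfl⟩
    exact ⟨⟨a, ha, rfl⟩, hpa⟩
  · rintro ⟨⟨a, ha, rfl⟩, hp⟩
    exact ⟨a, ⟨ha, hp⟩, rfl⟩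

lemma fiber_rank_filter {n : ℕ} (ι : E ≃ Fin n) (P : E → V) (v : V) (p : ℕ → Prop)
    [DecidablePred p] :
    (((univ.filter fun e => P e = v)).filter fun e => p (rkP ι P e)).card
      = ((range (univ.filter fun e => P e = v).card).filter p).card := by
  set s := univ.filter fun e => P e = v with hs
  obtain ⟨hinj, himg⟩ := rank_core ι s
  set f := fun e => (s.filter fun e' => ι e' < ι e).card with hf
  have h1 : s.filter (fun e => p (rkP ι P e)) = s.filter (fun e => p (f e)) :=
    Finset.filter_congr (fun e he => by rw [rk_eq ι P v e he])
  rw [h1, ← Finset.card_image_of_injOn (hinj.mono (Finset.filter_subset _ s)),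
    image_filter'', himg]

lemma num_le {k : ℕ} (hk : 0 < k) (j d : ℕ) :
    ((range d).filter fun r => r / k = j).card ≤ k := by
  have hsub : ((range d).filter fun r => r / k = j) ⊆ Ico (j*k) (j*k + k) := by
    intro r hr
    obtain ⟨hrd, hrj⟩ := Finset.mem_filter.mp hr
    rw [Finset.mem_Ico]
    constructor
    · exact (Nat.le_div_iff_mul_le hk).mp (le_of_eq hrj.symm)
    · have h1 : r / k < j + 1 := by omega
      have h2 := (Nat.div_lt_iff_lt_mul hk).mp h1
      have h3 : (j + 1) * k = j * k + k := Nat.succ_mul j k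
      omega
  calc ((range d).filter fun r => r / k = j).card ≤ (Ico (j*k) (j*k + k)).card :=
    Finset.card_le_card hsub
  _ = k := by rw [Nat.card_Ico]; omega

lemma num_eq {k : ℕ} (hk : 0 < k) {j d : ℕ} (h : j * k + k ≤ d) :
    ((range d).filter fun r => r / k = j).card = k := by
  have heq : ((range d).filter fun r => r / k = j) = Ico (j*k) (j*k + k) := by
    apply Finset.Subset.antisymm
    · intro r hr
      obtain ⟨hrd, hrj⟩ := Finset.mem_filter.mp hr
      rw [Finset.mem_Ico]
      constructor
      · exact (Nat.le_div_iff_mul_le hk).mp (le_of_eq hrj.symm)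
      · have h1 : r / k < j + 1 := by omega
        have h2 := (Nat.div_lt_iff_lt_mul hk).mp h1
        have h3 : (j + 1) * k = j * k + k := Nat.succ_mul j k
        omega
    · intro r hr
      rw [Finset.mem_Ico] at hr
      refine Finset.mem_filter.mpr ⟨Finset.mem_range.mpr (by omega), ?_⟩
      have h1 : j ≤ r / k := (Nat.le_div_iff_mul_le hk).mpr (by omega)
      have h2 : r / k < j + 1 := (Nat.div_lt_iff_lt_mul hk).mpr
        (by rw [Nat.succ_mul]; omega)
      omega
  rw [heq, Nat.card_Ico]
  omega

lemma num_ceil {k : ℕ} (hk : 0 < k) {r d : ℕ} (h : r < d) :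
    r / k < (d + k - 1) / k := by
  have h1 : r / k ≤ (d - 1) / k := Nat.div_le_div_right (by omega)
  have h2 : (d - 1 + k) / k = (d - 1) / k + 1 := Nat.add_div_right _ hk
  have h3 : d - 1 + k = d + k - 1 := by omega
  rw [← h3, h2]
  omega

lemma side_bounds {n k : ℕ} (hk : 0 < k) (ι : E ≃ Fin n) (P : E → V) (c : E → ℕ)
    (hlt : ∀ e, c e < k)
    (hprop : ∀ e e', e ≠ e' → c e = c e' → P e = P e' →
      rkP ι P e / k ≠ rkP ι P e' / k)
    (i : ℕ) (hi : i < k) (v : V) :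
    (univ.filter fun e => P e = v).card / k ≤ (univ.filter fun e => P e = v ∧ c e = i).card ∧
    (univ.filter fun e => P e = v ∧ c e = i).card
      ≤ ((univ.filter fun e => P e = v).card + k - 1) / k := by
  classical
  set s := univ.filter fun e => P e = v with hs
  obtain ⟨hinj, himg⟩ := rank_core ι s
  set f := fun e => (s.filter fun e' => ι e' < ι e).card with hf
  have hfeq : ∀ e ∈ s, rkP ι P e = f e := fun e he => rk_eq ι P v e he
  set d := s.card with hd
  set T := s.filter fun e => c e = i with hT
  have hTs : T ⊆ s := Finset.filter_subset _ _
  have hTuniv : T = univ.filter fun e => P e = v ∧ c e = i := by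
    rw [hT, hs, Finset.filter_filter]
  have hPv : ∀ e ∈ s, P e = v := fun e he => (Finset.mem_filter.mp he).2
  have hTinj : Set.InjOn (fun e => f e / k) T := by
    intro e he e' he' hfe
    by_contra hne
    have h1 : c e = c e' := by
      rw [(Finset.mem_filter.mp he).2, (Finset.mem_filter.mp he').2]
    have h2 : P e = P e' := by
      rw [hPv e (hTs he), hPv e' (hTs he')]
    have := hprop e e' hne h1 h2
    rw [hfeq e (hTs he), hfeq e' (hTs he')] at this
    exact this hfe
  have hcard : (T.image fun e => f e / k).card = T.card :=
    Finset.card_image_of_injOn hTinj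
  have hupper : (T.image fun e => f e / k) ⊆ range ((d + k - 1) / k) := by
    intro j hj
    obtain ⟨e, heT, rfl⟩ := Finset.mem_image.mp hj
    have hes : e ∈ s := hTs heT
    have hfd : f e < d := by
      have : f e ∈ s.image f := Finset.mem_image.mpr ⟨e, hes, rfl⟩
      rw [himg, Finset.mem_range] at this
      exact this
    exact Finset.mem_range.mpr (num_ceil hk hfd)
  have hlower : range (d / k) ⊆ (T.image fun e => f e / k) := by
    intro j hj
    rw [Finset.mem_range] at hj
    have hjk : j * k + k ≤ d := by
      have h1 : j + 1 ≤ d / k := hj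
      have h2 := (Nat.le_div_iff_mul_le hk).mp h1
      have h3 : (j + 1) * k = j * k + k := Nat.succ_mul j k
      omega
    set Sj := s.filter fun e => f e / k = j with hSj
    have hSjcard : Sj.card = k := by
      have h1 : Sj = s.filter fun e => rkP ι P e / k = j :=
        (Finset.filter_congr (fun e he => by rw [hfeq e he])).symm
      rw [h1, hs]
      rw [fiber_rank_filter ι P v (fun r => r / k = j)]
      exact num_eq hk (by rw [← hs, ← hd]; exact hjk)
    have hcinj : Set.InjOn c Sj := by
      intro e he e' he' hce
      by_contra hne
      have h2 : P e = P e' := by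
        rw [hPv e (Finset.filter_subset _ _ he), hPv e' (Finset.filter_subset _ _ he')]
      have := hprop e e' hne hce h2
      rw [hfeq e (Finset.filter_subset _ _ he), hfeq e' (Finset.filter_subset _ _ he'),
        (Finset.mem_filter.mp he).2, (Finset.mem_filter.mp he').2] at this
      exact this rfl
    have hcimg : Sj.image c = range k := by
      apply Finset.eq_of_subset_of_card_le
      · intro r hr
        obtain ⟨e, _, rfl⟩ := Finset.mem_image.mp hr
        exact Finset.mem_range.mpr (hlt e)
      · rw [Finset.card_range, Finset.card_image_of_injOn hcinj, hSjcard]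
    have hiin : i ∈ Sj.image c := by rw [hcimg]; exact Finset.mem_range.mpr hi
    obtain ⟨e, heSj, hce⟩ := Finset.mem_image.mp hiin
    have heT : e ∈ T := Finset.mem_filter.mpr
      ⟨Finset.filter_subset _ _ heSj, hce⟩
    exact Finset.mem_image.mpr ⟨e, heT, (Finset.mem_filter.mp heSj).2⟩
  constructor
  · calc d / k = (range (d / k)).card := (Finset.card_range _).symm
    _ ≤ (T.image fun e => f e / k).card := Finset.card_le_card hlower
    _ = T.card := hcard
    _ = (univ.filter fun e => P e = v ∧ c e = i).card := by rw [hTuniv]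
  · calc (univ.filter fun e => P e = v ∧ c e = i).card = T.card := by rw [hTuniv]
    _ = (T.image fun e => f e / k).card := hcard.symm
    _ ≤ (range ((d + k - 1) / k)).card := Finset.card_le_card hupper
    _ = (d + k - 1) / k := Finset.card_range _

theorem balanced_coloring (k : ℕ) (hk : 0 < k) (L R : E → V) :
    ∃ c : E → ℕ, (∀ e, c e < k) ∧ ∀ i < k, ∀ v : V,
      ((univ.filter fun e => L e = v).card / k ≤ (univ.filter fun e => L e = v ∧ c e = i).card ∧
       (univ.filter fun e => L e = v ∧ c e = i).card
         ≤ ((univ.filter fun e => L e = v).card + k - 1) / k) ∧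
      ((univ.filter fun e => R e = v).card / k ≤ (univ.filter fun e => R e = v ∧ c e = i).card ∧
       (univ.filter fun e => R e = v ∧ c e = i).card
         ≤ ((univ.filter fun e => R e = v).card + k - 1) / k) := by
  classical
  set n := Fintype.card E with hn
  set ι := Fintype.equivFin E with hι
  have hrkle : ∀ (P : E → V) (e : E), rkP ι P e < n + 1 := by
    intro P e
    have h1 : rkP ι P e ≤ (univ.filter fun e' => P e' = P e).card :=
      Finset.card_filter_le _ _
    have h2 : (univ.filter fun e' => P e' = P e).card ≤ n := by
      rw [hn, ← Finset.card_univ]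
      exact Finset.card_filter_le _ _
    omega
  set L' : E → V × Fin (n+1) := fun e => (L e, ⟨rkP ι L e / k, by
    have := hrkle L e
    have := Nat.div_le_self (rkP ι L e) k
    omega⟩) with hL'
  set R' : E → V × Fin (n+1) := fun e => (R e, ⟨rkP ι R e / k, by
    have := hrkle R e
    have := Nat.div_le_self (rkP ι R e) k
    omega⟩) with hR'
  have hfib : ∀ (P : E → V) (P' : E → V × Fin (n+1)),
      (∀ e, (P' e).1 = P e) → (∀ e, ((P' e).2 : ℕ) = rkP ι P e / k) →
      ∀ z : V × Fin (n+1), (univ.filter fun e => P' e = z).card ≤ k := by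
    intro P P' h1 h2 z
    rcases z with ⟨v, j⟩
    have heq : (univ.filter fun e => P' e = (v, j))
        = (univ.filter fun e => P e = v).filter fun e => rkP ι P e / k = (j : ℕ) := by
      rw [Finset.filter_filter]
      apply Finset.filter_congr
      intro e _
      rw [Prod.ext_iff]
      constructor
      · rintro ⟨ha, hb⟩
        refine ⟨by rw [← h1 e, ha], ?_⟩
        rw [← h2 e, hb]
      · rintro ⟨ha, hb⟩
        refine ⟨by rw [← ha, h1 e], ?_⟩
        have : ((P' e).2 : ℕ) = (j : ℕ) := by rw [h2 e, hb]
        exact Fin.ext this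
    rw [heq, fiber_rank_filter ι P v (fun r => r / k = (j : ℕ))]
    exact num_le hk _ _
  obtain ⟨c, hclt, hcprop⟩ := konig k L' R'
    (hfib L L' (fun e => rfl) (fun e => rfl))
    (hfib R R' (fun e => rfl) (fun e => rfl))
  refine ⟨c, hclt, fun i hi v => ?_⟩
  have hpropL : ∀ e e', e ≠ e' → c e = c e' → L e = L e' →
      rkP ι L e / k ≠ rkP ι L e' / k := by
    intro e e' hne hce hLe
    have := (hcprop e e' hne hce).1
    intro hdiv
    apply this
    rw [hL']
    exact Prod.ext hLe (Fin.ext hdiv)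
  have hpropR : ∀ e e', e ≠ e' → c e = c e' → R e = R e' →
      rkP ι R e / k ≠ rkP ι R e' / k := by
    intro e e' hne hce hRe
    have := (hcprop e e' hne hce).2
    intro hdiv
    apply this
    rw [hR']
    exact Prod.ext hRe (Fin.ext hdiv)
  exact ⟨side_bounds hk ι L c hclt hpropL i hi v,
    side_bounds hk ι R c hclt hpropR i hi v⟩

end Stmt9Aux

open Finset

variable {V E : Type*} [Fintype V] [Fintype E] [DecidableEq V]

/-- Degree of `v` in the spanning subgraph given by edge set `F` (loops count twice). -/
def mdeg (ends : E → V × V) (F : Finset E) (v : V) : ℕ :=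
  ∑ e ∈ F, ((if (ends e).1 = v then 1 else 0) + (if (ends e).2 = v then 1 else 0))
/-- Kano: [2ka,2kb]-graphs decompose into k [2a,2b]-factors. -/
theorem stmt9 (ends : E → V × V) (k a b : ℕ) (hk : 0 < k) (hab : a ≤ b) :
    ((∀ v : V, 2 * k * a ≤ mdeg ends Finset.univ v) ∧
     (∀ v : V, mdeg ends Finset.univ v ≤ 2 * k * b)) ↔
    ∃ c : E → Fin k, ∀ (i : Fin k) (v : V),
      2 * a ≤ mdeg ends (Finset.univ.filter fun e => c e = i) v ∧
      mdeg ends (Finset.univ.filter fun e => c e = i) v ≤ 2 * b := by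
  classical
  constructor
  · rintro ⟨hlow, hhigh⟩
    obtain ⟨o, ho⟩ := Stmt9Aux.exists_balanced_orientation (E := E) (V := V)
      (Fintype.card E) ends univ (le_of_eq Finset.card_univ)
    set Ls := Stmt9Aux.srcf ends o with hLs
    set Rs := Stmt9Aux.dstf ends o with hRs
    have hsum : ∀ (F : Finset E) (v : V),
        mdeg ends F v = Stmt9Aux.pdeg Ls F v + Stmt9Aux.pdeg Rs F v := by
      intro F v
      rw [mdeg, Stmt9Aux.pdeg, Stmt9Aux.pdeg, Finset.card_filter, Finset.card_filter,
        ← Finset.sum_add_distrib]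
      refine Finset.sum_congr rfl fun e _ => ?_
      rw [hLs, hRs]
      unfold Stmt9Aux.srcf Stmt9Aux.dstf
      by_cases he : o e <;> simp only [he, if_true, if_false, Bool.false_eq_true] <;>
        split_ifs <;> omega
    obtain ⟨c, hclt, hcb⟩ := Stmt9Aux.balanced_coloring k hk Ls Rs
    refine ⟨fun e => ⟨c e, hclt e⟩, fun i v => ?_⟩
    obtain ⟨⟨hL1, hL2⟩, ⟨hR1, hR2⟩⟩ := hcb (i : ℕ) i.isLt v
    -- degrees of the two sides at v
    have h1 := ho v
    have h2 := hsum univ v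
    have h3 := hlow v
    have h4 := hhigh v
    have hpdegL : Stmt9Aux.pdeg Ls univ v = (univ.filter fun e => Ls e = v).card := rfl
    have hpdegR : Stmt9Aux.pdeg Rs univ v = (univ.filter fun e => Rs e = v).card := rfl
    have hout : k * a ≤ (univ.filter fun e => Ls e = v).card ∧
        (univ.filter fun e => Ls e = v).card ≤ k * b ∧
        k * a ≤ (univ.filter fun e => Rs e = v).card ∧
        (univ.filter fun e => Rs e = v).card ≤ k * b := by
      have e1 : 2 * k * a = 2 * (k * a) := by ring
      have e2 : 2 * k * b = 2 * (k * b) := by ring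
      rw [e1] at h3
      rw [e2] at h4
      rw [hpdegL, hpdegR] at h1 h2
      generalize k * a = A at h3 ⊢
      generalize k * b = B at h4 ⊢
      omega
    have hcls : mdeg ends (univ.filter fun e => (⟨c e, hclt e⟩ : Fin k) = i) v
        = (univ.filter fun e => Ls e = v ∧ c e = (i : ℕ)).card
          + (univ.filter fun e => Rs e = v ∧ c e = (i : ℕ)).card := by
      rw [hsum]
      congr 1
      · rw [Stmt9Aux.pdeg, Finset.filter_filter]
        apply congrArg Finset.card
        apply Finset.filter_congr
        intro e _
        simp [Fin.ext_iff, and_comm]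
      · rw [Stmt9Aux.pdeg, Finset.filter_filter]
        apply congrArg Finset.card
        apply Finset.filter_congr
        intro e _
        simp [Fin.ext_iff, and_comm]
    rw [hcls]
    -- lower bounds
    have hla : a ≤ (univ.filter fun e => Ls e = v).card / k :=
      (Nat.le_div_iff_mul_le hk).mpr (by rw [mul_comm]; exact hout.1)
    have hra : a ≤ (univ.filter fun e => Rs e = v).card / k :=
      (Nat.le_div_iff_mul_le hk).mpr (by rw [mul_comm]; exact hout.2.2.1)
    -- upper bounds
    have hlb : ((univ.filter fun e => Ls e = v).card + k - 1) / k ≤ b := by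
      have h5 : ((univ.filter fun e => Ls e = v).card + k - 1) / k < b + 1 := by
        apply (Nat.div_lt_iff_lt_mul hk).mpr
        have e3 : (b + 1) * k = b * k + k := Nat.succ_mul b k
        have e4 : k * b = b * k := mul_comm k b
        have := hout.2.1
        omega
      omega
    have hrb : ((univ.filter fun e => Rs e = v).card + k - 1) / k ≤ b := by
      have h5 : ((univ.filter fun e => Rs e = v).card + k - 1) / k < b + 1 := by
        apply (Nat.div_lt_iff_lt_mul hk).mpr
        have e3 : (b + 1) * k = b * k + k := Nat.succ_mul b k
        have e4 : k * b = b * k := mul_comm k b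
        have := hout.2.2.2
        omega
      omega
    omega
  · rintro ⟨c, hc⟩
    have hdec : ∀ v : V, ∑ i : Fin k, mdeg ends (univ.filter fun e => c e = i) v
        = mdeg ends univ v := by
      intro v
      unfold mdeg
      exact Finset.sum_fiberwise univ c _
    constructor <;> intro v
    · calc 2 * k * a = ∑ _i : Fin k, 2 * a := by
            rw [Finset.sum_const, Finset.card_univ, Fintype.card_fin, smul_eq_mul]
            ring
      _ ≤ ∑ i : Fin k, mdeg ends (univ.filter fun e => c e = i) v :=
          Finset.sum_le_sum fun i _ => (hc i v).1
      _ = mdeg ends univ v := hdec v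
    · calc mdeg ends univ v = ∑ i : Fin k, mdeg ends (univ.filter fun e => c e = i) v :=
            (hdec v).symm
      _ ≤ ∑ _i : Fin k, 2 * b := Finset.sum_le_sum fun i _ => (hc i v).2
      _ = 2 * k * b := by
            rw [Finset.sum_const, Finset.card_univ, Fintype.card_fin, smul_eq_mul]
            ring
end

section
/- Let p be an odd positive integer, k a positive integer, and δ_1,...,δ_m positive integers with δ_i ≥ p-1 for all i and δ_1+⋯+δ_m = kp. Suppose a multigraph G has a factorization H_1,...,H_k and a set J ⊆ {1,...,k} with |J| ≥ |{i : δ_i odd}|, such that δ(H_j) ≥ p for all j ∈ J and Σ_{j∉J} δ(H_j) ≥ (k-|J|)p. Then G has a factorization G_1,...,G_m with δ(G_i) ≥ δ_i for all i. -/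
open Finset

section Aux

variable {E W : Type*} [DecidableEq W]

/-- number of edges in `F` whose `t`-endpoint is `w` -/
def odeg (t : E → W) (F : Finset E) (w : W) : ℕ := ∑ e ∈ F, if t e = w then 1 else 0

/-- degree (slot count, loops twice) -/
def wdeg (ends : E → W × W) (F : Finset E) (w : W) : ℕ :=
  ∑ e ∈ F, ((if (ends e).1 = w then 1 else 0) + (if (ends e).2 = w then 1 else 0))

def tl (ends : E → W × W) (o : E → Bool) (e : E) : W := if o e then (ends e).1 else (ends e).2
def hd (ends : E → W × W) (o : E → Bool) (e : E) : W := if o e then (ends e).2 else (ends e).1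


lemma slot_pair (a b v w : W) (h : a = v ∨ b = v) :
    (if a = w then 1 else 0) + (if b = w then 1 else 0)
    = (if (if a = v then b else a) = w then 1 else 0) + (if v = w then 1 else 0) := by
  rcases h with h | h <;> by_cases h1 : a = v <;> split_ifs <;> simp_all

lemma deg_pair (x y v w : W) :
    (((if x = w then 1 else 0) + (if v = w then 1 else 0)) +
      ((if y = w then 1 else 0) + (if v = w then 1 else 0)) : ℕ)
    = ((if x = w then 1 else 0) + (if y = w then 1 else 0)) + (if v = w then 2 else 0) := by
  split_ifs <;> omega

lemma tl_pair (d : Bool) (x y v w : W) :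
    ((if (if d then x else v) = w then 1 else 0) + (if (if d then v else y) = w then 1 else 0) : ℕ)
    = (if (if d then x else y) = w then 1 else 0) + (if v = w then 1 else 0) := by
  cases d <;> simp <;> split_ifs <;> omega

lemma hd_pair (d : Bool) (x y v w : W) :
    ((if (if d then v else x) = w then 1 else 0) + (if (if d then y else v) = w then 1 else 0) : ℕ)
    = (if (if d then y else x) = w then 1 else 0) + (if v = w then 1 else 0) := by
  cases d <;> simp <;> split_ifs <;> omega

lemma orient_aux [DecidableEq E] :
    ∀ (n : ℕ) (ends : E → W × W) (F : Finset E), F.card ≤ n →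
    ∃ o : E → Bool, ∀ w,
      wdeg ends F w / 2 ≤ odeg (tl ends o) F w ∧ wdeg ends F w / 2 ≤ odeg (hd ends o) F w := by
  intro n
  induction n with
  | zero =>
    intro ends F hF
    have : F = ∅ := card_eq_zero.mp (Nat.le_antisymm hF (Nat.zero_le _))
    subst this
    exact ⟨fun _ => true, by simp [wdeg, odeg]⟩
  | succ n ih =>
    intro ends F hF
    by_cases H : ∃ v e1 e2, e1 ∈ F ∧ e2 ∈ F ∧ e1 ≠ e2 ∧
        ((ends e1).1 = v ∨ (ends e1).2 = v) ∧ ((ends e2).1 = v ∨ (ends e2).2 = v)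
    · obtain ⟨v, e1, e2, he1F, he2F, h12, hv1, hv2⟩ := H
      set x := if (ends e1).1 = v then (ends e1).2 else (ends e1).1 with hx
      set y := if (ends e2).1 = v then (ends e2).2 else (ends e2).1 with hy
      set ends' : E → W × W := Function.update ends e1 (x, y) with hends'
      obtain ⟨o', ho'⟩ := ih ends' (F.erase e2)
        (by rw [card_erase_of_mem he2F]; omega)
      set d := o' e1 with hd'
      set o : E → Bool := fun e =>
        if e = e2 then (if d then decide ((ends e2).1 = v) else decide ((ends e2).2 = v))
        else if e = e1 then (if d then decide ((ends e1).2 = v) else decide ((ends e1).1 = v))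
        else o' e with ho
      have hoe1 : o e1 = (if d then decide ((ends e1).2 = v) else decide ((ends e1).1 = v)) := by
        simp [ho, h12]
      have hoe2 : o e2 = (if d then decide ((ends e2).1 = v) else decide ((ends e2).2 = v)) := by
        simp [ho]
      have hoe : ∀ e, e ≠ e1 → e ≠ e2 → o e = o' e := by
        intro e h1 h2; simp [ho, h1, h2]
      have hends'e1 : ends' e1 = (x, y) := by simp [hends']
      have hendse : ∀ e, e ≠ e1 → ends' e = ends e := by
        intro e h1; simp [hends', h1]
      -- endpoint computations
      have te1 : tl ends o e1 = (if d then x else v) ∧ hd ends o e1 = (if d then v else x) := by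
        rcases Bool.dichotomy d with hD | hD <;>
          rcases hv1 with h | h <;>
          by_cases h2 : (ends e1).2 = v <;>
          by_cases h1 : (ends e1).1 = v <;>
          simp_all [tl, hd, hoe1, hx]
      have te2 : tl ends o e2 = (if d then v else y) ∧ hd ends o e2 = (if d then y else v) := by
        rcases Bool.dichotomy d with hD | hD <;>
          rcases hv2 with h | h <;>
          by_cases h2 : (ends e2).2 = v <;>
          by_cases h1 : (ends e2).1 = v <;>
          simp_all [tl, hd, hoe2, hy]
      have te1' : tl ends' o' e1 = (if d then x else y) ∧ hd ends' o' e1 = (if d then y else x) := by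
        rcases Bool.dichotomy d with hD | hD <;> simp [tl, hd, hends'e1, ← hd', hD]
      refine ⟨o, fun w => ?_⟩
      -- sum decompositions
      have he1F' : e1 ∈ F.erase e2 := mem_erase.mpr ⟨h12, he1F⟩
      have split2 : ∀ f : E → ℕ, ∑ e ∈ F, f e = (∑ e ∈ (F.erase e2).erase e1, f e + f e1) + f e2 := by
        intro f
        rw [sum_erase_add _ _ he1F', sum_erase_add _ _ he2F]
      have split1 : ∀ f : E → ℕ, ∑ e ∈ F.erase e2, f e = ∑ e ∈ (F.erase e2).erase e1, f e + f e1 := by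
        intro f; rw [sum_erase_add _ _ he1F']
      have hcommon : ∀ e ∈ (F.erase e2).erase e1,
          (tl ends o e = tl ends' o' e ∧ hd ends o e = hd ends' o' e ∧ ends e = ends' e) := by
        intro e he
        have h1 := mem_erase.mp he
        have h2 := mem_erase.mp h1.2
        simp only [tl, hd]
        rw [hendse e h1.1, hoe e h1.1 h2.1]
        exact ⟨rfl, rfl, rfl⟩
      -- degree identity
      have hdeg : wdeg ends F w = wdeg ends' (F.erase e2) w + (if v = w then 2 else 0) := by
        unfold wdeg
        rw [split2, split1]
        have hc : ∑ e ∈ (F.erase e2).erase e1,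
            ((if (ends e).1 = w then 1 else 0) + (if (ends e).2 = w then 1 else 0)) =
            ∑ e ∈ (F.erase e2).erase e1,
            ((if (ends' e).1 = w then 1 else 0) + (if (ends' e).2 = w then 1 else 0)) := by
          refine sum_congr rfl fun e he => by rw [(hcommon e he).2.2]
        rw [hc]
        have hslot1 := slot_pair (ends e1).1 (ends e1).2 v w hv1
        have hslot2 := slot_pair (ends e2).1 (ends e2).2 v w hv2
        rw [← hx] at hslot1
        rw [← hy] at hslot2
        have hxy1 : (ends' e1).1 = x := by rw [hends'e1]
        have hxy2 : (ends' e1).2 = y := by rw [hends'e1]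
        rw [hslot1, hslot2, hxy1, hxy2]
        linarith [deg_pair x y v w]
      have htl : odeg (tl ends o) F w = odeg (tl ends' o') (F.erase e2) w + (if v = w then 1 else 0) := by
        unfold odeg
        rw [split2, split1]
        have hc : ∑ e ∈ (F.erase e2).erase e1, (if tl ends o e = w then 1 else 0) =
            ∑ e ∈ (F.erase e2).erase e1, (if tl ends' o' e = w then 1 else 0) :=
          sum_congr rfl fun e he => by rw [(hcommon e he).1]
        rw [hc, te1.1, te2.1, te1'.1]
        linarith [tl_pair d x y v w]
      have hhd : odeg (hd ends o) F w = odeg (hd ends' o') (F.erase e2) w + (if v = w then 1 else 0) := by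
        unfold odeg
        rw [split2, split1]
        have hc : ∑ e ∈ (F.erase e2).erase e1, (if hd ends o e = w then 1 else 0) =
            ∑ e ∈ (F.erase e2).erase e1, (if hd ends' o' e = w then 1 else 0) :=
          sum_congr rfl fun e he => by rw [(hcommon e he).2.1]
        rw [hc, te1.2, te2.2, te1'.2]
        linarith [hd_pair d x y v w]
      obtain ⟨ih1, ih2⟩ := ho' w
      constructor
      · rw [hdeg, htl]; split_ifs with hvw
        · rw [Nat.add_div_right _ (by norm_num)]; omega
        · simpa using ih1
      · rw [hdeg, hhd]; split_ifs with hvw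
        · rw [Nat.add_div_right _ (by norm_num)]; omega
        · simpa using ih2
    · -- no vertex with two incident edges
      push_neg at H
      refine ⟨fun _ => true, fun w => ?_⟩
      by_cases hw : ∃ e ∈ F, (ends e).1 = w ∨ (ends e).2 = w
      · obtain ⟨e0, he0F, he0⟩ := hw
        have honly : ∀ e ∈ F, e ≠ e0 → (ends e).1 ≠ w ∧ (ends e).2 ≠ w := by
          intro e heF hne
          exact H w e0 e he0F heF (fun h => hne h.symm) he0
        have hdegsum : wdeg ends F w = (if (ends e0).1 = w then 1 else 0) + (if (ends e0).2 = w then 1 else 0) := by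
          unfold wdeg
          rw [← sum_erase_add _ _ he0F]
          have : ∑ e ∈ F.erase e0, ((if (ends e).1 = w then 1 else 0) + (if (ends e).2 = w then 1 else 0)) = 0 := by
            refine sum_eq_zero fun e he => ?_
            have h := honly e (mem_of_mem_erase he) (ne_of_mem_erase he)
            simp [h.1, h.2]
          omega
        have htlsum : (if tl ends (fun _ => true) e0 = w then 1 else 0) ≤ odeg (tl ends (fun _ => true)) F w := by
          unfold odeg
          rw [← sum_erase_add _ _ he0F]; omega
        have hhdsum : (if hd ends (fun _ => true) e0 = w then 1 else 0) ≤ odeg (hd ends (fun _ => true)) F w := by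
          unfold odeg
          rw [← sum_erase_add _ _ he0F]; omega
        simp only [tl, hd, if_true] at htlsum hhdsum
        rw [hdegsum]
        constructor <;> split_ifs at * <;> omega
      · push_neg at hw
        have : wdeg ends F w = 0 := by
          refine sum_eq_zero fun e he => ?_
          have := hw e he
          simp [this.1, this.2]
        rw [this]; simp
  
lemma orient [DecidableEq E] (ends : E → W × W) (F : Finset E) :
    ∃ o : E → Bool, ∀ w,
      wdeg ends F w / 2 ≤ odeg (tl ends o) F w ∧ wdeg ends F w / 2 ≤ odeg (hd ends o) F w :=
  orient_aux F.card ends F le_rfl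

lemma quad_le (a b a' b' : ℕ) (hsum : a' + b' = a + b) (h1 : (a+b)/2 ≤ a') (h2 : (a+b)/2 ≤ b') :
    a'^2 + b'^2 ≤ a^2 + b^2 := by
  rcases Nat.even_or_odd (a+b) with ⟨c,hc⟩|⟨c,hc⟩
  · have hab : a' = c ∧ b' = c := by omega
    obtain ⟨ha, hb⟩ := hab
    have hz1 : (a':ℤ) = c := by exact_mod_cast ha
    have hz2 : (b':ℤ) = c := by exact_mod_cast hb
    have hz : (a:ℤ) + b = c + c := by exact_mod_cast hc
    zify
    rw [hz1, hz2]
    nlinarith [sq_nonneg ((a:ℤ) - b)]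
  · have hab : (a' = c ∧ b' = c+1) ∨ (a' = c+1 ∧ b' = c) := by omega
    have hne : a ≠ b := by omega
    have h1 : (1:ℤ) ≤ ((a:ℤ) - b)^2 := by
      have : (a:ℤ) - b ≠ 0 := by
        intro hcon
        apply hne
        omega
      have h2 : (1:ℤ) ≤ |(a:ℤ) - b| := Int.one_le_abs this
      calc (1:ℤ) = 1 * 1 := by ring
        _ ≤ |(a:ℤ) - b| * |(a:ℤ) - b| := by exact mul_le_mul h2 h2 (by norm_num) (by linarith)
        _ = ((a:ℤ) - b)^2 := by rw [← abs_mul, abs_mul_self]; ring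
    have hc2 : a + b = 2*c + 1 := by omega
    have hc' : (a:ℤ) + b = 2*c + 1 := by exact_mod_cast hc2
    rcases hab with ⟨ha,hb⟩|⟨ha,hb⟩ <;>
      [(have hz1 : (a':ℤ) = c := by exact_mod_cast ha
        have hz2 : (b':ℤ) = c + 1 := by exact_mod_cast hb
        zify
        rw [hz1, hz2]
        nlinarith);
       (have hz1 : (a':ℤ) = c + 1 := by exact_mod_cast ha
        have hz2 : (b':ℤ) = c := by exact_mod_cast hb
        zify
        rw [hz1, hz2]
        nlinarith)]
  
lemma quad_lt (a b a' b' : ℕ) (hsum : a' + b' = a + b) (h1 : (a+b)/2 ≤ a') (h2 : (a+b)/2 ≤ b')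
    (hab : b + 2 ≤ a) : a'^2 + b'^2 < a^2 + b^2 := by
  have e1 : a + b ≤ 2*a' + 1 := by omega
  have e2 : a + b ≤ 2*b' + 1 := by omega
  zify at *
  nlinarith [sq_nonneg (2*(a':ℤ) - (a+b)), sq_nonneg ((a':ℤ) - b'), mul_nonneg
    (by linarith : (0:ℤ) ≤ 1 - ((a':ℤ) - b')) (by linarith : (0:ℤ) ≤ 1 + ((a':ℤ) - b'))]


lemma split [DecidableEq E] (t h : E → W) (F : Finset E) :
    ∃ s : E → Bool, ∀ w,
      (odeg t F w / 2 ≤ odeg t (F.filter fun e => s e = true) w) ∧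
      (odeg t F w / 2 ≤ odeg t (F.filter fun e => s e = false) w) ∧
      (odeg h F w / 2 ≤ odeg h (F.filter fun e => s e = true) w) ∧
      (odeg h F w / 2 ≤ odeg h (F.filter fun e => s e = false) w) := by
  classical
  set ends2 : E → (W × Bool) × (W × Bool) := fun e => ((t e, false), (h e, true)) with hends2
  obtain ⟨o, ho⟩ := orient ends2 F
  refine ⟨o, fun w => ?_⟩
  have d1 : wdeg ends2 F (w, false) = odeg t F w := by
    unfold wdeg odeg
    refine sum_congr rfl fun e _ => ?_
    simp [hends2, Prod.ext_iff]
  have d2 : wdeg ends2 F (w, true) = odeg h F w := by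
    unfold wdeg odeg
    refine sum_congr rfl fun e _ => ?_
    simp [hends2, Prod.ext_iff]
  have c1 : odeg (tl ends2 o) F (w, false) = odeg t (F.filter fun e => o e = true) w := by
    unfold odeg
    rw [sum_filter]
    refine sum_congr rfl fun e _ => ?_
    rcases Bool.dichotomy (o e) with hoe | hoe <;> simp [tl, hends2, hoe, Prod.ext_iff]
  have c2 : odeg (hd ends2 o) F (w, false) = odeg t (F.filter fun e => o e = false) w := by
    unfold odeg
    rw [sum_filter]
    refine sum_congr rfl fun e _ => ?_
    rcases Bool.dichotomy (o e) with hoe | hoe <;> simp [hd, hends2, hoe, Prod.ext_iff]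
  have c3 : odeg (hd ends2 o) F (w, true) = odeg h (F.filter fun e => o e = true) w := by
    unfold odeg
    rw [sum_filter]
    refine sum_congr rfl fun e _ => ?_
    rcases Bool.dichotomy (o e) with hoe | hoe <;> simp [hd, hends2, hoe, Prod.ext_iff]
  have c4 : odeg (tl ends2 o) F (w, true) = odeg h (F.filter fun e => o e = false) w := by
    unfold odeg
    rw [sum_filter]
    refine sum_congr rfl fun e _ => ?_
    rcases Bool.dichotomy (o e) with hoe | hoe <;> simp [tl, hends2, hoe, Prod.ext_iff]
  obtain ⟨hf1, hf2⟩ := ho (w, false)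
  obtain ⟨ht1, ht2⟩ := ho (w, true)
  rw [d1, c1] at hf1
  rw [d1, c2] at hf2
  rw [d2, c4] at ht1
  rw [d2, c3] at ht2
  exact ⟨hf1, hf2, ht2, ht1⟩

section Balance
variable [Fintype E] [Fintype W]

def cls {n : ℕ} {E : Type*} (c : E → Fin n) [Fintype E] (i : Fin n) : Finset E :=
  univ.filter fun e => c e = i

def Phi (t h : E → W) {n : ℕ} (c : E → Fin n) : ℕ :=
  ∑ w : W, ∑ i : Fin n, ((odeg t (cls c i) w)^2 + (odeg h (cls c i) w)^2)

lemma improve [DecidableEq E] (t h : E → W) {n : ℕ} (c : E → Fin n) (w0 : W) (i j : Fin n)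
    (hij : odeg t (cls c j) w0 + 2 ≤ odeg t (cls c i) w0) :
    ∃ c' : E → Fin n, Phi t h c' < Phi t h c := by
  classical
  have hne : i ≠ j := by rintro rfl; omega
  set F : Finset E := univ.filter (fun e => c e = i ∨ c e = j) with hF
  obtain ⟨s, hs⟩ := split t h F
  set c' : E → Fin n := fun e => if c e = i ∨ c e = j then (if s e then i else j) else c e with hc'
  have hclsi : cls c' i = F.filter fun e => s e = true := by
    ext e
    by_cases hce : c e = i ∨ c e = j <;> rcases Bool.dichotomy (s e) with hse|hse <;>
      simp [cls, hc', hF, hce, hse, hne, hne.symm] <;> tauto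
  have hclsj : cls c' j = F.filter fun e => s e = false := by
    ext e
    by_cases hce : c e = i ∨ c e = j <;> rcases Bool.dichotomy (s e) with hse|hse <;>
      simp [cls, hc', hF, hce, hse, hne, hne.symm] <;> tauto
  have hclsother : ∀ l, l ≠ i → l ≠ j → cls c' l = cls c l := by
    intro l hli hlj
    ext e
    by_cases h1 : c e = i ∨ c e = j
    · have hcel : ¬ c e = l := by
        rcases h1 with h|h <;> rw [h]
        · exact fun q => hli q.symm
        · exact fun q => hlj q.symm
      have hc'el : ¬ c' e = l := by
        show ¬ (if c e = i ∨ c e = j then if s e = true then i else j else c e) = l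
        rw [if_pos h1]
        split_ifs
        · exact fun q => hli q.symm
        · exact fun q => hlj q.symm
      simp [cls, hcel, hc'el]
    · have : c' e = c e := by
        show (if c e = i ∨ c e = j then if s e = true then i else j else c e) = c e
        rw [if_neg h1]
      simp [cls, this]
  have hpart : ∀ (r : E → W) (w : W), odeg r (cls c i) w + odeg r (cls c j) w = odeg r F w := by
    intro r w
    have hi : cls c i = F.filter (fun e => c e = i) := by
      ext e; simp only [cls, hF, mem_filter, mem_univ, true_and]; tauto
    have hj : cls c j = F.filter (fun e => ¬ c e = i) := by
      ext e
      simp only [cls, hF, mem_filter, mem_univ, true_and]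
      by_cases h1 : c e = i
      · have h2 : ¬ c e = j := by rw [h1]; exact hne
        simp [h1, h2]
        exact hne
      · simp [h1]
    rw [hi, hj]
    unfold odeg
    exact sum_filter_add_sum_filter_not F _ _
  have hpart' : ∀ (r : E → W) (w : W), odeg r (cls c' i) w + odeg r (cls c' j) w = odeg r F w := by
    intro r w
    rw [hclsi, hclsj]
    have : F.filter (fun e => s e = false) = F.filter (fun e => ¬ s e = true) := by
      ext e; simp
    rw [this]
    unfold odeg
    exact sum_filter_add_sum_filter_not F _ _
  refine ⟨c', ?_⟩
  unfold Phi
  have hsplitn : ∀ f : Fin n → ℕ, ∑ l, f l = (∑ l ∈ (univ.erase i).erase j, f l + f j) + f i := by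
    intro f
    rw [sum_erase_add _ _ (mem_erase.mpr ⟨hne.symm, mem_univ j⟩), sum_erase_add _ _ (mem_univ i)]
  have hinner : ∀ w, (∑ l : Fin n, ((odeg t (cls c' l) w)^2 + (odeg h (cls c' l) w)^2)) ≤
      ∑ l : Fin n, ((odeg t (cls c l) w)^2 + (odeg h (cls c l) w)^2) := by
    intro w
    rw [hsplitn, hsplitn]
    have hcommon : ∑ l ∈ (univ.erase i).erase j, ((odeg t (cls c' l) w)^2 + (odeg h (cls c' l) w)^2)
        = ∑ l ∈ (univ.erase i).erase j, ((odeg t (cls c l) w)^2 + (odeg h (cls c l) w)^2) := by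
      refine sum_congr rfl fun l hl => ?_
      have h1 := mem_erase.mp hl
      have h2 := mem_erase.mp h1.2
      rw [hclsother l h2.1 h1.1]
    rw [hcommon]
    have qt := quad_le (odeg t (cls c i) w) (odeg t (cls c j) w)
      (odeg t (cls c' i) w) (odeg t (cls c' j) w)
      (by rw [hpart, hpart'])
      (by rw [hpart t w, hclsi]; exact (hs w).1)
      (by rw [hpart t w, hclsj]; exact (hs w).2.1)
    have qh := quad_le (odeg h (cls c i) w) (odeg h (cls c j) w)
      (odeg h (cls c' i) w) (odeg h (cls c' j) w)
      (by rw [hpart, hpart'])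
      (by rw [hpart h w, hclsi]; exact (hs w).2.2.1)
      (by rw [hpart h w, hclsj]; exact (hs w).2.2.2)
    linarith
  have hstrict : (∑ l : Fin n, ((odeg t (cls c' l) w0)^2 + (odeg h (cls c' l) w0)^2)) <
      ∑ l : Fin n, ((odeg t (cls c l) w0)^2 + (odeg h (cls c l) w0)^2) := by
    rw [hsplitn, hsplitn]
    have hcommon : ∑ l ∈ (univ.erase i).erase j, ((odeg t (cls c' l) w0)^2 + (odeg h (cls c' l) w0)^2)
        = ∑ l ∈ (univ.erase i).erase j, ((odeg t (cls c l) w0)^2 + (odeg h (cls c l) w0)^2) := by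
      refine sum_congr rfl fun l hl => ?_
      have h1 := mem_erase.mp hl
      have h2 := mem_erase.mp h1.2
      rw [hclsother l h2.1 h1.1]
    rw [hcommon]
    have qt := quad_lt (odeg t (cls c i) w0) (odeg t (cls c j) w0)
      (odeg t (cls c' i) w0) (odeg t (cls c' j) w0)
      (by rw [hpart, hpart'])
      (by rw [hpart t w0, hclsi]; exact (hs w0).1)
      (by rw [hpart t w0, hclsj]; exact (hs w0).2.1)
      hij
    have qh := quad_le (odeg h (cls c i) w0) (odeg h (cls c j) w0)
      (odeg h (cls c' i) w0) (odeg h (cls c' j) w0)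
      (by rw [hpart, hpart'])
      (by rw [hpart h w0, hclsi]; exact (hs w0).2.2.1)
      (by rw [hpart h w0, hclsj]; exact (hs w0).2.2.2)
    linarith
  exact sum_lt_sum (fun w _ => hinner w) ⟨w0, mem_univ w0, hstrict⟩

lemma bal_div [DecidableEq E] {n : ℕ} (r : E → W) (hn : 0 < n) (c : E → Fin n) (w : W) (i : Fin n)
    (hb : ∀ j, odeg r (cls c j) w ≤ odeg r (cls c i) w + 1) :
    odeg r univ w / n ≤ odeg r (cls c i) w := by
  have htotal : ∑ j : Fin n, odeg r (cls c j) w = odeg r univ w := by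
    unfold odeg cls
    exact Finset.sum_fiberwise_of_maps_to (fun x _ => mem_univ (c x)) _
  by_contra hcon
  push_neg at hcon
  set B := odeg r univ w / n with hB
  have hge : ∀ j, odeg r (cls c j) w ≤ B := fun j => le_trans (hb j) (by omega)
  have h1 : odeg r univ w = ∑ j ∈ univ.erase i, odeg r (cls c j) w + odeg r (cls c i) w := by
    rw [← htotal, sum_erase_add _ _ (mem_univ i)]
  have h2 : ∑ j ∈ univ.erase i, odeg r (cls c j) w ≤ (n-1) * B := by
    have := Finset.sum_le_card_nsmul (univ.erase i) (fun j => odeg r (cls c j) w) B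
      (fun j _ => hge j)
    rwa [card_erase_of_mem (mem_univ i), card_univ, Fintype.card_fin, smul_eq_mul] at this
  have h3 : n * B ≤ odeg r univ w := by
    rw [hB, mul_comm]
    exact Nat.div_mul_le_self _ _
  have h4 : (n-1) * B + B = n * B := by
    have hn' : n - 1 + 1 = n := Nat.succ_pred_eq_of_pos hn
    calc (n-1)*B + B = (n-1+1)*B := by ring
      _ = n*B := by rw [hn']
  linarith

lemma balanced [DecidableEq E] (t h : E → W) (n : ℕ) (hn : 0 < n) :
    ∃ c : E → Fin n, ∀ w (i : Fin n),
      odeg t univ w / n ≤ odeg t (cls c i) w ∧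
      odeg h univ w / n ≤ odeg h (cls c i) w := by
  classical
  have main : ∀ (N : ℕ) (c : E → Fin n), Phi t h c ≤ N →
      ∃ c' : E → Fin n, ∀ w (i j : Fin n),
        odeg t (cls c' i) w ≤ odeg t (cls c' j) w + 1 ∧
        odeg h (cls c' i) w ≤ odeg h (cls c' j) w + 1 := by
    intro N
    induction N with
    | zero =>
      intro c hc
      by_cases hbal : ∀ w (i j : Fin n),
          odeg t (cls c i) w ≤ odeg t (cls c j) w + 1 ∧
          odeg h (cls c i) w ≤ odeg h (cls c j) w + 1
      · exact ⟨c, hbal⟩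
      · push_neg at hbal
        obtain ⟨w, i, j, hw⟩ := hbal
        by_cases hw1 : odeg t (cls c i) w ≤ odeg t (cls c j) w + 1
        · have hw2 := hw hw1
          obtain ⟨c', hc'⟩ := improve h t c w i j (by omega)
          have heq : Phi h t c = Phi t h c := by
            unfold Phi
            refine sum_congr rfl fun w _ => sum_congr rfl fun l _ => by ring
          have heq2 : Phi h t c' = Phi t h c' := by
            unfold Phi
            refine sum_congr rfl fun w _ => sum_congr rfl fun l _ => by ring
          omega
        · obtain ⟨c', hc'⟩ := improve t h c w i j (by omega)
          omega
    | succ N ih =>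
      intro c hc
      by_cases hbal : ∀ w (i j : Fin n),
          odeg t (cls c i) w ≤ odeg t (cls c j) w + 1 ∧
          odeg h (cls c i) w ≤ odeg h (cls c j) w + 1
      · exact ⟨c, hbal⟩
      · push_neg at hbal
        obtain ⟨w, i, j, hw⟩ := hbal
        by_cases hw1 : odeg t (cls c i) w ≤ odeg t (cls c j) w + 1
        · have hw2 := hw hw1
          obtain ⟨c', hc'⟩ := improve h t c w i j (by omega)
          have heq : Phi h t c' = Phi t h c' := by
            unfold Phi
            refine sum_congr rfl fun w _ => sum_congr rfl fun l _ => by ring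
          have heq2 : Phi h t c = Phi t h c := by
            unfold Phi
            refine sum_congr rfl fun w _ => sum_congr rfl fun l _ => by ring
          exact ih c' (by omega)
        · obtain ⟨c', hc'⟩ := improve t h c w i j (by omega)
          exact ih c' (by omega)
  obtain ⟨c, hbal⟩ := main (Phi t h (fun _ => (⟨0, hn⟩ : Fin n))) (fun _ => (⟨0, hn⟩ : Fin n)) le_rfl
  refine ⟨c, fun w i => ⟨?_, ?_⟩⟩
  · exact bal_div t hn c w i (fun j => (hbal w j i).1)
  · exact bal_div h hn c w i (fun j => (hbal w j i).2)

lemma degree2 [DecidableEq E] (ends : E → W × W) (n : ℕ) (hn : 0 < n)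
    (hdeg : ∀ w, 2*n ≤ wdeg ends univ w) :
    ∃ c : E → Fin n, ∀ (i : Fin n) (w : W), 2 ≤ wdeg ends (univ.filter fun e => c e = i) w := by
  classical
  obtain ⟨o, ho⟩ := orient ends univ
  obtain ⟨c, hc⟩ := balanced (tl ends o) (hd ends o) n hn
  refine ⟨c, fun i w => ?_⟩
  have hsplit : ∀ F : Finset E, wdeg ends F w = odeg (tl ends o) F w + odeg (hd ends o) F w := by
    intro F
    unfold wdeg odeg
    rw [← sum_add_distrib]
    refine sum_congr rfl fun e _ => ?_
    rcases Bool.dichotomy (o e) with h|h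
    · simp only [tl, hd, h]
      simp
      exact add_comm _ _
    · simp only [tl, hd, h]
      simp
  have h1 : n ≤ odeg (tl ends o) univ w := by
    have := (ho w).1
    have := hdeg w
    omega
  have h2 : n ≤ odeg (hd ends o) univ w := by
    have := (ho w).2
    have := hdeg w
    omega
  have hb := hc w i
  unfold cls at hb
  have hb1 : 1 ≤ odeg (tl ends o) (univ.filter fun e => c e = i) w := by
    have := hb.1
    have : 1 ≤ odeg (tl ends o) univ w / n := (Nat.one_le_div_iff hn).mpr h1
    omega
  have hb2 : 1 ≤ odeg (hd ends o) (univ.filter fun e => c e = i) w := by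
    have := hb.2
    have : 1 ≤ odeg (hd ends o) univ w / n := (Nat.one_le_div_iff hn).mpr h2
    omega
  rw [hsplit]
  omega

lemma degree_grouped [DecidableEq E] (ends : E → W × W) {m : ℕ} (a : Fin m → ℕ) (hm : 0 < m)
    (hdeg : ∀ w, 2 * (∑ i, a i) ≤ wdeg ends univ w) :
    ∃ c : E → Fin m, ∀ (i : Fin m) (w : W), 2 * a i ≤ wdeg ends (univ.filter fun e => c e = i) w := by
  classical
  rcases Nat.eq_zero_or_pos (∑ i, a i) with h0 | hpos
  · have hai : ∀ i, a i = 0 := by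
      intro i
      have := Finset.sum_eq_zero_iff.mp h0
      exact this i (mem_univ i)
    exact ⟨fun _ => ⟨0, hm⟩, fun i w => by rw [hai i]; simp⟩
  · obtain ⟨c0, hc0⟩ := degree2 ends (∑ i, a i) hpos hdeg
    have hcard : Fintype.card (Σ i : Fin m, Fin (a i)) = ∑ i, a i := by
      simp [Fintype.card_sigma]
    set eqv := Fintype.equivFinOfCardEq hcard with heqv
    set g : Fin (∑ i, a i) → Fin m := fun j => (eqv.symm j).1 with hg
    refine ⟨fun e => g (c0 e), fun i w => ?_⟩
    have e3 : {s : Σ i', Fin (a i') // s.1 = i} ≃ Fin (a i) :=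
      { toFun := fun s => Fin.cast (congrArg a s.2) s.1.2
        invFun := fun x => ⟨⟨i, x⟩, rfl⟩
        left_inv := by
          rintro ⟨⟨i', x⟩, h⟩
          subst h
          rfl
        right_inv := fun x => rfl }
    have e2 : {j : Fin (∑ i, a i) // g j = i} ≃ {s : Σ i', Fin (a i') // s.1 = i} :=
      Equiv.subtypeEquiv eqv.symm (fun j => Iff.rfl)
    have hfib : (univ.filter fun j : Fin (∑ i, a i) => g j = i).card = a i := by
      rw [← Fintype.card_subtype]
      rw [Fintype.card_congr (e2.trans e3), Fintype.card_fin]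
    have hdecomp : wdeg ends (univ.filter fun e => g (c0 e) = i) w
        = ∑ j ∈ univ.filter (fun j : Fin (∑ i, a i) => g j = i),
            wdeg ends (univ.filter fun e => c0 e = j) w := by
      have hun : (univ.filter fun e => g (c0 e) = i)
          = (univ.filter (fun j => g j = i)).biUnion (fun j => univ.filter fun e => c0 e = j) := by
        ext e
        simp only [mem_filter, mem_univ, true_and, mem_biUnion]
        constructor
        · intro hgi
          exact ⟨c0 e, hgi, rfl⟩
        · rintro ⟨j, hj, hej⟩
          rw [hej]
          exact hj
      have hdisj : (↑(univ.filter (fun j : Fin (∑ i, a i) => g j = i)) : Set (Fin (∑ i, a i))).PairwiseDisjoint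
          (fun j => univ.filter fun e => c0 e = j) := by
        intro j1 _ j2 _ hne
        simp only [Function.onFun]
        rw [Finset.disjoint_left]
        intro e he1 he2
        simp only [mem_filter, mem_univ, true_and] at he1 he2
        exact hne (he1.symm.trans he2)
      unfold wdeg
      rw [hun, Finset.sum_biUnion hdisj]
    calc 2 * a i = ∑ _j ∈ univ.filter (fun j : Fin (∑ i, a i) => g j = i), 2 := by
          rw [sum_const, hfib, smul_eq_mul, mul_comm]
      _ ≤ _ := sum_le_sum fun j _ => hc0 j w
      _ = _ := hdecomp.symm

end Balance


end Aux

variable {V E : Type*} [Fintype V] [Fintype E] [DecidableEq V]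

/-- from k factors with controlled minimum degrees to factors with
minimum degrees δ₁,…,δ_m. -/
theorem stmt11 [Nonempty V] (ends : E → V × V) (p k m : ℕ) (hp : Odd p) (hp0 : 0 < p)
    (δ : Fin m → ℕ) (hδ0 : ∀ i, 0 < δ i) (hδp : ∀ i, p - 1 ≤ δ i)
    (hsum : ∑ i, δ i = k * p) (hk : 0 < k)
    (cH : E → Fin k) (J : Finset (Fin k))
    (hJ : (Finset.univ.filter fun i : Fin m => Odd (δ i)).card ≤ J.card)
    (hminJ : ∀ j ∈ J, ∀ v : V,
      p ≤ mdeg ends (Finset.univ.filter fun e => cH e = j) v)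
    (hsumJ : (k - J.card) * p ≤ ∑ j ∈ Jᶜ,
      Finset.univ.inf' Finset.univ_nonempty
        (mdeg ends (Finset.univ.filter fun e => cH e = j))) :
    ∃ cG : E → Fin m, ∀ (i : Fin m) (v : V),
      δ i ≤ mdeg ends (Finset.univ.filter fun e => cG e = i) v := by
  classical
  have hm : 0 < m := by
    rcases Nat.eq_zero_or_pos m with h0 | h
    · exfalso
      subst h0
      simp only [Finset.univ_eq_empty, Finset.sum_empty] at hsum
      have := Nat.mul_pos hk hp0
      omega
    · exact h
  set Odds := univ.filter (fun i : Fin m => Odd (δ i)) with hOdds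
  obtain ⟨J', hJ'sub, hJ'card⟩ := Finset.exists_subset_card_eq hJ
  have eqv0 : {x // x ∈ Odds} ≃ {x // x ∈ J'} := Finset.equivOfCardEq hJ'card.symm
  set b : Fin m → ℕ := fun i => if Odd (δ i) then (δ i - p) / 2 else δ i / 2 with hb
  obtain ⟨pa, hpa⟩ := hp
  have hoddi : ∀ i, Odd (δ i) → (p ≤ δ i ∧ 2 * b i = δ i - p) := by
    intro i hoi
    obtain ⟨bi, hbi⟩ := hoi
    have h1 := hδp i
    have hbeq : b i = (δ i - p) / 2 := by
      rw [hb]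
      simp only []
      rw [if_pos ⟨bi, hbi⟩]
    rw [hbeq]
    omega
  have heveni : ∀ i, ¬ Odd (δ i) → 2 * b i = δ i := by
    intro i hoi
    obtain ⟨bi, hbi⟩ := Nat.not_odd_iff_even.mp hoi
    have hbeq : b i = δ i / 2 := by
      rw [hb]
      simp only []
      rw [if_neg hoi]
    rw [hbeq]
    omega
  have hsum2 : 2 * (∑ i, b i) + Odds.card * p = k * p := by
    have h1 : ∑ i, (2 * b i + if Odd (δ i) then p else 0) = ∑ i, δ i := by
      refine sum_congr rfl fun i _ => ?_
      by_cases hoi : Odd (δ i)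
      · have := hoddi i hoi
        rw [if_pos hoi]
        omega
      · rw [if_neg hoi, heveni i hoi]
        omega
    rw [sum_add_distrib, ← Finset.sum_filter, ← hOdds, sum_const, smul_eq_mul, ← mul_sum] at h1
    rw [← hsum]
    omega
  have htk : Odds.card ≤ J.card := hJ
  have hJk : J.card ≤ k := by
    have := Finset.card_le_univ J
    simpa using this
  -- the unmatched part R
  have hfibR : ∀ v, mdeg ends (univ.filter fun e => cH e ∉ J') v
      = ∑ j ∈ J'ᶜ, mdeg ends (univ.filter fun e => cH e = j) v := by
    intro v
    have hun : (univ.filter fun e => cH e ∉ J')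
        = (J'ᶜ).biUnion (fun j => univ.filter fun e => cH e = j) := by
      ext e
      simp only [mem_filter, mem_univ, true_and, mem_biUnion, mem_compl]
      constructor
      · intro hnot
        exact ⟨cH e, hnot, rfl⟩
      · rintro ⟨j, hj, hej⟩
        rw [hej]
        exact hj
    have hdisj : (↑(J'ᶜ) : Set (Fin k)).PairwiseDisjoint
        (fun j => univ.filter fun e => cH e = j) := by
      intro j1 _ j2 _ hne
      simp only [Function.onFun]
      rw [Finset.disjoint_left]
      intro e he1 he2
      simp only [mem_filter, mem_univ, true_and] at he1 he2
      exact hne (he1.symm.trans he2)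
    unfold mdeg
    rw [hun, Finset.sum_biUnion hdisj]
  have hminR : ∀ v, (k - Odds.card) * p ≤ mdeg ends (univ.filter fun e => cH e ∉ J') v := by
    intro v
    rw [hfibR v]
    have hunion : J'ᶜ = (J \ J') ∪ Jᶜ := by
      ext j
      simp only [mem_compl, mem_sdiff, mem_union]
      constructor
      · intro hj
        by_cases hjJ : j ∈ J
        · exact Or.inl ⟨hjJ, hj⟩
        · exact Or.inr hjJ
      · rintro (⟨h1, h2⟩ | h1)
        · exact h2
        · exact fun hc => h1 (hJ'sub hc)
    have hdisj2 : Disjoint (J \ J') Jᶜ := by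
      rw [Finset.disjoint_left]
      intro j hj1 hj2
      simp only [mem_sdiff] at hj1
      simp only [mem_compl] at hj2
      exact hj2 hj1.1
    rw [hunion, sum_union hdisj2]
    have s1 : (J.card - Odds.card) * p
        ≤ ∑ j ∈ J \ J', mdeg ends (univ.filter fun e => cH e = j) v := by
      have hcard : (J \ J').card = J.card - Odds.card := by
        rw [card_sdiff_of_subset hJ'sub, hJ'card]
      have hsle := Finset.card_nsmul_le_sum (J \ J')
        (fun j => mdeg ends (univ.filter fun e => cH e = j) v) p
        (fun j hj => hminJ j (mem_sdiff.mp hj).1 v)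
      rw [hcard, smul_eq_mul] at hsle
      exact hsle
    have s2 : (k - J.card) * p ≤ ∑ j ∈ Jᶜ, mdeg ends (univ.filter fun e => cH e = j) v := by
      refine le_trans hsumJ (sum_le_sum fun j _ => ?_)
      exact Finset.inf'_le _ (mem_univ v)
    have harith : (k - Odds.card) * p = (J.card - Odds.card) * p + (k - J.card) * p := by
      rw [← add_mul]
      congr 1
      omega
    linarith
  -- subtype of unmatched edges
  set endsR : {e : E // cH e ∉ J'} → V × V := fun e => ends e.1 with hendsR
  have hRconv : ∀ v, wdeg endsR univ v = mdeg ends (univ.filter fun e => cH e ∉ J') v := by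
    intro v
    exact (Finset.sum_subtype _ (by simp)
      (fun e => ((if (ends e).1 = v then 1 else 0) + (if (ends e).2 = v then 1 else 0)))).symm
  have hdegR : ∀ v, 2 * (∑ i, b i) ≤ wdeg endsR univ v := by
    intro v
    rw [hRconv v]
    calc 2 * (∑ i, b i) = k * p - Odds.card * p := Nat.eq_sub_of_add_eq hsum2
      _ = (k - Odds.card) * p := (Nat.sub_mul _ _ _).symm
      _ ≤ _ := hminR v
  obtain ⟨cR, hcR⟩ := degree_grouped endsR b hm hdegR
  set cG : E → Fin m := fun e =>
    if h : cH e ∈ J' then (eqv0.symm ⟨cH e, h⟩ : {x // x ∈ Odds}).1 else cR ⟨e, h⟩ with hcG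
  have hcGR : ∀ e : {e : E // cH e ∉ J'}, cG e.1 = cR e := by
    intro e
    show (if h : cH e.1 ∈ J' then (eqv0.symm ⟨cH e.1, h⟩ : {x // x ∈ Odds}).1 else cR ⟨e.1, h⟩) = cR e
    rw [dif_neg e.2]
  have key : ∀ (i : Fin m) (v : V),
      2 * b i ≤ mdeg ends (univ.filter fun e => cH e ∉ J' ∧ cG e = i) v := by
    intro i v
    refine le_trans (hcR i v) (le_of_eq ?_)
    unfold wdeg mdeg
    have hset : (univ.filter fun e : E => cH e ∉ J' ∧ cG e = i)
        = ((univ.filter fun e : E => cH e ∉ J').filter fun e => cG e = i) := by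
      rw [filter_filter]
    rw [hset, Finset.sum_filter, Finset.sum_filter,
      Finset.sum_subtype (p := fun e : E => cH e ∉ J') (univ.filter fun e : E => cH e ∉ J') (by simp)
        (fun e => if cG e = i then ((if (ends e).1 = v then 1 else 0) + (if (ends e).2 = v then 1 else 0)) else 0)]
    refine sum_congr rfl fun e _ => ?_
    rw [hcGR e]
  refine ⟨cG, fun i v => ?_⟩
  have hBsub : (univ.filter fun e => cH e ∉ J' ∧ cG e = i) ⊆ (univ.filter fun e => cG e = i) := by
    intro e he
    simp only [mem_filter, mem_univ, true_and] at he ⊢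
    exact he.2
  have hmono : ∀ (F G : Finset E), F ⊆ G → mdeg ends F v ≤ mdeg ends G v := by
    intro F G hFG
    exact Finset.sum_le_sum_of_subset hFG
  by_cases hodd : Odd (δ i)
  · have hio : i ∈ Odds := by
      rw [hOdds]
      exact mem_filter.mpr ⟨mem_univ _, hodd⟩
    set io : {x // x ∈ Odds} := ⟨i, hio⟩ with hiodef
    set j0 : Fin k := (eqv0 io).1 with hj0
    have hj0J' : j0 ∈ J' := (eqv0 io).2
    have hj0J : j0 ∈ J := hJ'sub hj0J'
    have hAsub : (univ.filter fun e => cH e = j0) ⊆ (univ.filter fun e => cG e = i) := by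
      intro e he
      simp only [mem_filter, mem_univ, true_and] at he ⊢
      have hin : cH e ∈ J' := by rw [he]; exact hj0J'
      have h1 : cG e = (eqv0.symm ⟨cH e, hin⟩ : {x // x ∈ Odds}).1 := by
        rw [hcG]
        simp only []
        rw [dif_pos hin]
      have h2 : (⟨cH e, hin⟩ : {x // x ∈ J'}) = eqv0 io := by
        apply Subtype.ext
        show cH e = ((eqv0 io : {x // x ∈ J'}) : Fin k)
        rw [he]
      rw [h1, h2, Equiv.symm_apply_apply]
    have hABdisj : Disjoint (univ.filter fun e => cH e = j0)
        (univ.filter fun e => cH e ∉ J' ∧ cG e = i) := by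
      rw [Finset.disjoint_left]
      intro e he1 he2
      simp only [mem_filter, mem_univ, true_and] at he1 he2
      exact he2.1 (by rw [he1]; exact hj0J')
    have hd := hoddi i hodd
    calc δ i = p + (δ i - p) := by omega
      _ ≤ mdeg ends (univ.filter fun e => cH e = j0) v
          + mdeg ends (univ.filter fun e => cH e ∉ J' ∧ cG e = i) v := by
          have t1 := hminJ j0 hj0J v
          have t2 := key i v
          omega
      _ = mdeg ends ((univ.filter fun e => cH e = j0)
          ∪ (univ.filter fun e => cH e ∉ J' ∧ cG e = i)) v := by
          unfold mdeg
          rw [sum_union hABdisj]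
      _ ≤ mdeg ends (univ.filter fun e => cG e = i) v :=
          hmono _ _ (union_subset hAsub hBsub)
  · have h2b := heveni i hodd
    calc δ i = 2 * b i := h2b.symm
      _ ≤ mdeg ends (univ.filter fun e => cH e ∉ J' ∧ cG e = i) v := key i v
      _ ≤ mdeg ends (univ.filter fun e => cG e = i) v := hmono _ _ hBsub
end

section
/- Let p be an odd positive integer, k a positive integer, and Δ_1,...,Δ_m positive integers with Δ_i ≥ p-1 for all i and Δ_1+⋯+Δ_m = kp. Suppose a multigraph G has a factorization H_1,...,H_k and a set J ⊆ {1,...,k} with |J| ≥ |{i : Δ_i odd}|, such that Δ(H_j) ≤ p for all j ∈ J and Σ_{j∉J} Δ(H_j) ≤ (k-|J|)p. Then G has a factorization G_1,...,G_m with Δ(G_i) ≤ Δ_i for all i. -/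
set_option linter.unusedSectionVars false
set_option maxHeartbeats 1600000

open Finset

variable {V E : Type*} [Fintype V] [Fintype E] [DecidableEq V]

namespace Stmt12Aux

variable {W E' : Type*} [DecidableEq W] [DecidableEq E']

def tl (ends : E' → W × W) (σ : E' → Bool) (e : E') : W :=
  if σ e then (ends e).1 else (ends e).2

def hd (ends : E' → W × W) (σ : E' → Bool) (e : E') : W :=
  if σ e then (ends e).2 else (ends e).1

def odeg (ends : E' → W × W) (σ : E' → Bool) (F : Finset E') (v : W) : ℕ :=
  ∑ e ∈ F, if tl ends σ e = v then 1 else 0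

def ideg (ends : E' → W × W) (σ : E' → Bool) (F : Finset E') (v : W) : ℕ :=
  ∑ e ∈ F, if hd ends σ e = v then 1 else 0

theorem mdeg_eq_odeg_add_ideg (ends : E' → W × W) (σ : E' → Bool) (F : Finset E') (v : W) :
    mdeg ends F v = odeg ends σ F v + ideg ends σ F v := by
  rw [odeg, ideg, ← Finset.sum_add_distrib]
  refine Finset.sum_congr rfl fun e _ => ?_
  by_cases h : σ e <;> simp [tl, hd, h, add_comm]

theorem mdeg_erase (ends : E' → W × W) {F : Finset E'} {e : E'} (he : e ∈ F) (v : W) :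
    mdeg ends F v = mdeg ends (F.erase e) v
      + ((if (ends e).1 = v then 1 else 0) + (if (ends e).2 = v then 1 else 0)) := by
  rw [mdeg, mdeg, ← Finset.sum_erase_add _ _ he]

theorem odeg_update (ends : E' → W × W) (σ : E' → Bool) (b : Bool) {F : Finset E'} {e : E'}
    (he : e ∈ F) (v : W) :
    odeg ends (Function.update σ e b) F v
      = odeg ends σ (F.erase e) v + (if (if b then (ends e).1 else (ends e).2) = v then 1 else 0) := by
  rw [odeg, ← Finset.sum_erase_add _ _ he]
  congr 1
  · refine Finset.sum_congr rfl fun e' he' => ?_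
    have hne : e' ≠ e := Finset.ne_of_mem_erase he'
    rw [show tl ends (Function.update σ e b) e' = tl ends σ e' by simp [tl, Function.update_of_ne hne]]
  · simp [tl, Function.update_self]

theorem ideg_update (ends : E' → W × W) (σ : E' → Bool) (b : Bool) {F : Finset E'} {e : E'}
    (he : e ∈ F) (v : W) :
    ideg ends (Function.update σ e b) F v
      = ideg ends σ (F.erase e) v + (if (if b then (ends e).2 else (ends e).1) = v then 1 else 0) := by
  rw [ideg, ← Finset.sum_erase_add _ _ he]
  congr 1
  · refine Finset.sum_congr rfl fun e' he' => ?_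
    have hne : e' ≠ e := Finset.ne_of_mem_erase he'
    rw [show hd ends (Function.update σ e b) e' = hd ends σ e' by simp [hd, Function.update_of_ne hne]]
  · simp [hd, Function.update_self]

theorem exists_incident (ends : E' → W × W) {F : Finset E'} {v : W}
    (h : 0 < mdeg ends F v) : ∃ e ∈ F, (ends e).1 = v ∨ (ends e).2 = v := by
  by_contra hc
  push_neg at hc
  have : mdeg ends F v = 0 := by
    refine Finset.sum_eq_zero fun e he => ?_
    have := hc e he
    simp [this.1, this.2]
  omega



/-- Main Euler lemma, double statement for the induction. -/
theorem euler_aux (ends : E' → W × W) : ∀ (n : ℕ) (F : Finset E'), F.card = n →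
    ((∀ v, Even (mdeg ends F v)) →
      ∃ σ, ∀ v, odeg ends σ F v = ideg ends σ F v) ∧
    (∀ u w : W, u ≠ w → (∀ v, Odd (mdeg ends F v) ↔ (v = u ∨ v = w)) →
      ∃ σ, odeg ends σ F u = ideg ends σ F u + 1 ∧ ideg ends σ F w = odeg ends σ F w + 1 ∧
        ∀ v, v ≠ u → v ≠ w → odeg ends σ F v = ideg ends σ F v) := by
  intro n
  induction n using Nat.strong_induction_on with
  | _ n ih =>
  intro F hcard
  constructor
  · -- even case
    intro heven
    rcases F.eq_empty_or_nonempty with rfl | ⟨e0, he0⟩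
    · exact ⟨fun _ => true, fun v => by simp [odeg, ideg]⟩
    have hcard' : (F.erase e0).card < n := by
      rw [← hcard]; exact Finset.card_erase_lt_of_mem he0
    have hkey := fun v => mdeg_erase ends he0 v
    have hT1 : (if (true : Bool) then (ends e0).1 else (ends e0).2) = (ends e0).1 := rfl
    have hT2 : (if (true : Bool) then (ends e0).2 else (ends e0).1) = (ends e0).2 := rfl
    by_cases hab : (ends e0).1 = (ends e0).2
    · -- loop
      have heven' : ∀ v, Even (mdeg ends (F.erase e0) v) := by
        intro v
        have h1 := heven v
        rw [hkey v, hab] at h1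
        rw [Nat.even_iff] at h1 ⊢
        by_cases h2 : (ends e0).2 = v
        · rw [if_pos h2] at h1; omega
        · rw [if_neg h2] at h1; omega
      obtain ⟨σ', hσ'⟩ := (ih _ hcard' (F.erase e0) rfl).1 heven'
      refine ⟨Function.update σ' e0 true, fun v => ?_⟩
      rw [odeg_update ends σ' true he0 v, ideg_update ends σ' true he0 v, hT1, hT2, hab,
        hσ' v]
    · -- non-loop edge: find path from snd to fst in the rest
      have hodd' : ∀ v, Odd (mdeg ends (F.erase e0) v) ↔ (v = (ends e0).2 ∨ v = (ends e0).1) := by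
        intro v
        have h1 := heven v
        rw [hkey v, Nat.even_iff] at h1
        rw [Nat.odd_iff]
        by_cases h2 : (ends e0).1 = v <;> by_cases h3 : (ends e0).2 = v
        · exact absurd (h2.trans h3.symm) hab
        · rw [if_pos h2, if_neg h3] at h1
          exact iff_of_true (by omega) (Or.inr h2.symm)
        · rw [if_neg h2, if_pos h3] at h1
          exact iff_of_true (by omega) (Or.inl h3.symm)
        · rw [if_neg h2, if_neg h3] at h1
          refine iff_of_false (by omega) ?_
          rintro (h | h)
          · exact h3 h.symm
          · exact h2 h.symm
      obtain ⟨σ', hσ'1, hσ'2, hσ'3⟩ :=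
        (ih _ hcard' (F.erase e0) rfl).2 (ends e0).2 (ends e0).1 (fun h => hab h.symm) hodd'
      refine ⟨Function.update σ' e0 true, fun v => ?_⟩
      rw [odeg_update ends σ' true he0 v, ideg_update ends σ' true he0 v, hT1, hT2]
      by_cases h2 : (ends e0).1 = v <;> by_cases h3 : (ends e0).2 = v
      · exact absurd (h2.trans h3.symm) hab
      · rw [if_pos h2, if_neg h3]
        have h4 := hσ'2; rw [h2] at h4
        omega
      · rw [if_neg h2, if_pos h3]
        have h4 := hσ'1; rw [h3] at h4
        omega
      · rw [if_neg h2, if_neg h3]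
        have h4 := hσ'3 v (fun h => h3 h.symm) (fun h => h2 h.symm)
        omega
  · -- odd case: u, w
    intro u w huw hodd
    have hupos : 0 < mdeg ends F u := by
      have h1 := (hodd u).2 (Or.inl rfl)
      exact Nat.pos_of_ne_zero (by rintro h; rw [h] at h1; simp [Nat.odd_iff] at h1)
    obtain ⟨e1, he1, hinc⟩ := exists_incident ends hupos
    obtain ⟨b1, x, hb1u, hb1x, hcontrib⟩ :
        ∃ (b1 : Bool) (x : W), (if b1 then (ends e1).1 else (ends e1).2) = u ∧
          (if b1 then (ends e1).2 else (ends e1).1) = x ∧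
          ∀ v : W, ((if (ends e1).1 = v then 1 else 0) + (if (ends e1).2 = v then 1 else 0) : ℕ)
            = (if u = v then 1 else 0) + (if x = v then 1 else 0) := by
      rcases hinc with h | h
      · exact ⟨true, (ends e1).2, by simpa using h, by simp, fun v => by rw [h]⟩
      · exact ⟨false, (ends e1).1, by simpa using h, by simp, fun v => by rw [h, add_comm]⟩
    have hcard' : (F.erase e1).card < n := by
      rw [← hcard]; exact Finset.card_erase_lt_of_mem he1
    have hkey : ∀ v, mdeg ends F v = mdeg ends (F.erase e1) v
        + ((if u = v then 1 else 0) + (if x = v then 1 else 0)) := by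
      intro v; rw [mdeg_erase ends he1 v, hcontrib v]
    by_cases hxu : x = u
    · -- loop at u
      rw [hxu] at hkey hb1x
      have hodd' : ∀ v, Odd (mdeg ends (F.erase e1) v) ↔ (v = u ∨ v = w) := by
        intro v
        have h1 := hodd v
        rw [hkey v, Nat.odd_iff] at h1
        rw [Nat.odd_iff]
        by_cases h2 : u = v
        · rw [if_pos h2] at h1; rw [← h1]; omega
        · rw [if_neg h2] at h1; rw [← h1]; omega
      obtain ⟨σ', hσ'1, hσ'2, hσ'3⟩ := (ih _ hcard' (F.erase e1) rfl).2 u w huw hodd'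
      refine ⟨Function.update σ' e1 b1, ?_, ?_, ?_⟩
      · rw [odeg_update ends σ' b1 he1 u, ideg_update ends σ' b1 he1 u, hb1u, hb1x,
          if_pos (rfl : u = u)]
        omega
      · rw [odeg_update ends σ' b1 he1 w, ideg_update ends σ' b1 he1 w, hb1u, hb1x,
          if_neg huw]
        omega
      · intro v hvu hvw
        rw [odeg_update ends σ' b1 he1 v, ideg_update ends σ' b1 he1 v, hb1u, hb1x,
          if_neg (fun h => hvu h.symm)]
        have h4 := hσ'3 v hvu hvw
        omega
    · by_cases hxw : x = w
      · -- other endpoint is w : rest is all even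
        have heven' : ∀ v, Even (mdeg ends (F.erase e1) v) := by
          intro v
          have h1 := hodd v
          rw [hkey v, Nat.odd_iff] at h1
          rw [Nat.even_iff]
          by_cases h2 : v = u <;> by_cases h3 : v = x
          · exact absurd (h3.symm.trans h2) hxu
          · rw [if_pos h2.symm, if_neg (fun h => h3 h.symm)] at h1
            have h4 := h1.2 (Or.inl h2)
            omega
          · rw [if_neg (fun h => h2 h.symm), if_pos h3.symm] at h1
            have h4 := h1.2 (Or.inr (h3.trans hxw))
            omega
          · rw [if_neg (fun h => h2 h.symm), if_neg (fun h => h3 h.symm)] at h1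
            have h5 : ¬(v = u ∨ v = w) := by
              rintro (h | h)
              · exact h2 h
              · exact h3 (h.trans hxw.symm)
            have h6 : ¬((mdeg ends (F.erase e1) v + (0 + 0)) % 2 = 1) := fun hm => h5 (h1.1 hm)
            omega
        obtain ⟨σ', hσ'⟩ := (ih _ hcard' (F.erase e1) rfl).1 heven'
        refine ⟨Function.update σ' e1 b1, ?_, ?_, ?_⟩
        · rw [odeg_update ends σ' b1 he1 u, ideg_update ends σ' b1 he1 u, hb1u, hb1x,
            if_pos (rfl : u = u), if_neg hxu]
          have h4 := hσ' u
          omega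
        · rw [odeg_update ends σ' b1 he1 w, ideg_update ends σ' b1 he1 w, hb1u, hb1x,
            if_neg huw, if_pos hxw]
          have h4 := hσ' w
          omega
        · intro v hvu hvw
          rw [odeg_update ends σ' b1 he1 v, ideg_update ends σ' b1 he1 v, hb1u, hb1x,
            if_neg (fun h => hvu h.symm), if_neg (fun h : x = v => hvw (h ▸ hxw))]
          have h4 := hσ' v
          omega
      · -- other endpoint x is a fresh vertex : rest has odd set {x, w}
        have hodd' : ∀ v, Odd (mdeg ends (F.erase e1) v) ↔ (v = x ∨ v = w) := by
          intro v
          have h1 := hodd v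
          rw [hkey v, Nat.odd_iff] at h1
          rw [Nat.odd_iff]
          by_cases h2 : v = u <;> by_cases h3 : v = x
          · exact absurd (h3.symm.trans h2) hxu
          · rw [if_pos h2.symm, if_neg (fun h => h3 h.symm)] at h1
            have h4 := h1.2 (Or.inl h2)
            refine iff_of_false (by omega) ?_
            rintro (h | h)
            · exact h3 h
            · exact huw (h2.symm.trans h)
          · rw [if_neg (fun h => h2 h.symm), if_pos h3.symm] at h1
            have h5 : ¬(v = u ∨ v = w) := by
              rintro (h | h)
              · exact h2 h
              · exact hxw (h3.symm.trans h)
            have h6 : ¬((mdeg ends (F.erase e1) v + (0 + 1)) % 2 = 1) := fun hm => h5 (h1.1 hm)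
            exact iff_of_true (by omega) (Or.inl h3)
          · rw [if_neg (fun h => h2 h.symm), if_neg (fun h => h3 h.symm)] at h1
            constructor
            · intro hm
              rcases h1.1 (by omega) with h | h
              · exact absurd h h2
              · exact Or.inr h
            · rintro (h | h)
              · exact absurd h h3
              · have h4 := h1.2 (Or.inr h)
                omega
        obtain ⟨σ', hσ'1, hσ'2, hσ'3⟩ := (ih _ hcard' (F.erase e1) rfl).2 x w hxw hodd'
        refine ⟨Function.update σ' e1 b1, ?_, ?_, ?_⟩
        · rw [odeg_update ends σ' b1 he1 u, ideg_update ends σ' b1 he1 u, hb1u, hb1x,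
            if_pos (rfl : u = u), if_neg hxu]
          have h4 := hσ'3 u (fun h => hxu h.symm) huw
          omega
        · rw [odeg_update ends σ' b1 he1 w, ideg_update ends σ' b1 he1 w, hb1u, hb1x,
            if_neg huw, if_neg hxw]
          omega
        · intro v hvu hvw
          rw [odeg_update ends σ' b1 he1 v, ideg_update ends σ' b1 he1 v, hb1u, hb1x,
            if_neg (fun h => hvu h.symm)]
          by_cases hvx : x = v
          · rw [if_pos hvx]
            have h4 := hσ'1; rw [hvx] at h4
            omega
          · rw [if_neg hvx]
            have h4 := hσ'3 v (fun h => hvx h.symm) hvw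
            omega


/-- Prescribed fiber sizes. -/
theorem countfib {W : Type*} [Fintype W] [DecidableEq W] (f : W → ℕ) (s : ℕ)
    (h : ∑ v, f v = s) :
    ∃ g : Fin s → W, ∀ v, (Finset.univ.filter fun i => g i = v).card = f v := by
  have hcard : Fintype.card (Σ v : W, Fin (f v)) = s := by
    simp [Fintype.card_sigma, h]
  let e : (Σ v : W, Fin (f v)) ≃ Fin s := Fintype.equivOfCardEq (by simpa using hcard)
  refine ⟨fun i => (e.symm i).1, fun v => ?_⟩
  rw [← Fintype.card_subtype]
  have e1 : {i : Fin s // (e.symm i).1 = v} ≃ {x : Σ v : W, Fin (f v) // x.1 = v} :=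
    e.symm.subtypeEquiv fun i => Iff.rfl
  have e2 : {x : Σ v : W, Fin (f v) // x.1 = v} ≃ Fin (f v) :=
    { toFun := fun x => Fin.cast (congrArg f x.2) x.1.2
      invFun := fun j => ⟨⟨v, j⟩, rfl⟩
      left_inv := by
        rintro ⟨⟨u, j⟩, hu⟩
        cases hu
        rfl
      right_inv := fun j => rfl }
  rw [Fintype.card_congr (e1.trans e2), Fintype.card_fin]

/-- Proper edge coloring of an `N`-regular bipartite multigraph with `N` colors. -/
theorem reg_color {W E' : Type*} [Fintype W] [DecidableEq W] [Fintype E'] [DecidableEq E']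
    (t h : E' → W) :
    ∀ (N : ℕ) (F : Finset E'),
      (∀ v, (F.filter fun e => t e = v).card = N) →
      (∀ v, (F.filter fun e => h e = v).card = N) →
      ∃ c : E' → ℕ, (∀ e ∈ F, c e < N) ∧
        ∀ (s : ℕ) (v : W), (F.filter fun e => c e = s ∧ t e = v).card ≤ 1 ∧
                           (F.filter fun e => c e = s ∧ h e = v).card ≤ 1 := by
  intro N
  induction N with
  | zero =>
    intro F ht _
    have hF : F = ∅ := by
      rcases F.eq_empty_or_nonempty with h' | ⟨e, he⟩
      · exact h'
      · exfalso
        have h1 : e ∈ F.filter fun e' => t e' = t e := Finset.mem_filter.2 ⟨he, rfl⟩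
        have h2 := ht (t e)
        rw [Finset.card_eq_zero] at h2
        rw [h2] at h1
        exact absurd h1 (Finset.notMem_empty e)
    subst hF
    exact ⟨fun _ => 0, fun e he => absurd he (Finset.notMem_empty e),
      fun s v => by simp⟩
  | succ N IH =>
    intro F ht hh
    -- Hall's condition
    set B : W → Finset W := fun v => (F.filter fun e => t e = v).image h with hB
    have hall : ∀ S : Finset W, S.card ≤ (S.biUnion B).card := by
      intro S
      set T := S.biUnion B with hT
      have hsub : (F.filter fun e => t e ∈ S) ⊆ (F.filter fun e => h e ∈ T) := by
        intro e he
        rw [Finset.mem_filter] at he ⊢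
        refine ⟨he.1, Finset.mem_biUnion.2 ⟨t e, he.2, ?_⟩⟩
        exact Finset.mem_image.2 ⟨e, Finset.mem_filter.2 ⟨he.1, rfl⟩, rfl⟩
      have h1 : (F.filter fun e => t e ∈ S).card = S.card * (N+1) := by
        have : (F.filter fun e => t e ∈ S) = S.biUnion fun v => F.filter fun e => t e = v := by
          ext e
          simp only [Finset.mem_filter, Finset.mem_biUnion]
          constructor
          · rintro ⟨heF, hS⟩; exact ⟨t e, hS, heF, rfl⟩
          · rintro ⟨v, hv, heF, rfl⟩; exact ⟨heF, hv⟩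
        rw [this, Finset.card_biUnion]
        · rw [Finset.sum_congr rfl fun v _ => ht v, Finset.sum_const, smul_eq_mul]
        · intro a _ b _ hab
          simp only [Finset.disjoint_left, Finset.mem_filter]
          rintro e ⟨_, hae⟩ ⟨_, hbe⟩
          exact hab (hae.symm.trans hbe)
      have h2 : (F.filter fun e => h e ∈ T).card = T.card * (N+1) := by
        have : (F.filter fun e => h e ∈ T) = T.biUnion fun v => F.filter fun e => h e = v := by
          ext e
          simp only [Finset.mem_filter, Finset.mem_biUnion]
          constructor
          · rintro ⟨heF, hS⟩; exact ⟨h e, hS, heF, rfl⟩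
          · rintro ⟨v, hv, heF, rfl⟩; exact ⟨heF, hv⟩
        rw [this, Finset.card_biUnion]
        · rw [Finset.sum_congr rfl fun v _ => hh v, Finset.sum_const, smul_eq_mul]
        · intro a _ b _ hab
          simp only [Finset.disjoint_left, Finset.mem_filter]
          rintro e ⟨_, hae⟩ ⟨_, hbe⟩
          exact hab (hae.symm.trans hbe)
      have h3 := Finset.card_le_card hsub
      rw [h1, h2] at h3
      exact Nat.le_of_mul_le_mul_right h3 (Nat.succ_pos N)
    obtain ⟨frep, hinj, hmem⟩ := (Finset.all_card_le_biUnion_card_iff_exists_injective B).1 hall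
    have hch : ∀ v, ∃ e, e ∈ F ∧ t e = v ∧ h e = frep v := by
      intro v
      obtain ⟨e', he', hh'⟩ := Finset.mem_image.1 (hmem v)
      rw [Finset.mem_filter] at he'
      exact ⟨e', he'.1, he'.2, hh'⟩
    choose M hM1 hM2 hM3 using hch
    have hMinj : Function.Injective M := fun a b hab => by
      rw [← hM2 a, ← hM2 b, hab]
    set F'' : Finset E' := F \ Finset.univ.image M with hF''
    have hMS : ∀ e : E', (e ∈ Finset.univ.image M) ↔ ∃ a, M a = e := by
      intro e
      simp [Finset.mem_image]
    have htails : ∀ v, (F''.filter fun e => t e = v).card = N := by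
      intro v
      have hset : F''.filter (fun e => t e = v) = (F.filter fun e => t e = v).erase (M v) := by
        ext e
        simp only [hF'', Finset.mem_filter, Finset.mem_sdiff, Finset.mem_erase]
        constructor
        · rintro ⟨⟨heF, hnot⟩, hte⟩
          refine ⟨fun heq => hnot ((hMS e).2 ⟨v, heq.symm⟩), heF, hte⟩
        · rintro ⟨hne, heF, hte⟩
          refine ⟨⟨heF, fun hin => ?_⟩, hte⟩
          obtain ⟨a, rfl⟩ := (hMS e).1 hin
          exact hne (congrArg M ((hM2 a).symm.trans hte).symm ▸ rfl)
      rw [hset, Finset.card_erase_of_mem (Finset.mem_filter.2 ⟨hM1 v, hM2 v⟩), ht v]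
      omega
    have hheads : ∀ v, (F''.filter fun e => h e = v).card = N := by
      intro v
      obtain ⟨u, hu⟩ := (Finite.injective_iff_surjective.1 hinj) v
      have hset : F''.filter (fun e => h e = v) = (F.filter fun e => h e = v).erase (M u) := by
        ext e
        simp only [hF'', Finset.mem_filter, Finset.mem_sdiff, Finset.mem_erase]
        constructor
        · rintro ⟨⟨heF, hnot⟩, hhe⟩
          refine ⟨fun heq => hnot ((hMS e).2 ⟨u, heq.symm⟩), heF, hhe⟩
        · rintro ⟨hne, heF, hhe⟩
          refine ⟨⟨heF, fun hin => ?_⟩, hhe⟩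
          obtain ⟨a, rfl⟩ := (hMS e).1 hin
          have : frep a = frep u := (hM3 a).symm.trans (hhe.trans hu.symm)
          exact hne (congrArg M (hinj this))
      rw [hset, Finset.card_erase_of_mem (Finset.mem_filter.2 ⟨hM1 u, (hM3 u).trans hu⟩), hh v]
      omega
    obtain ⟨c'', hlt'', hcl''⟩ := IH F'' htails hheads
    refine ⟨fun e => if e ∈ Finset.univ.image M then N else c'' e, ?_, ?_⟩
    · intro e he
      by_cases hin : e ∈ Finset.univ.image M
      · simp [hin]
      · have : e ∈ F'' := Finset.mem_sdiff.2 ⟨he, hin⟩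
        simp only [hin, if_neg, if_false]
        exact Nat.lt_succ_of_lt (hlt'' e this)
    · intro s v
      by_cases hs : s = N
      · subst hs
        constructor
        · refine Finset.card_le_one.2 fun e he e' he' => ?_
          rw [Finset.mem_filter] at he he'
          obtain ⟨heF, hcs, hte⟩ := he
          obtain ⟨heF', hcs', hte'⟩ := he'
          dsimp only at hcs hcs'
          by_cases hin : e ∈ Finset.univ.image M
          · by_cases hin' : e' ∈ Finset.univ.image M
            · obtain ⟨a, rfl⟩ := (hMS e).1 hin
              obtain ⟨a', rfl⟩ := (hMS e').1 hin'
              rw [hM2 a] at hte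
              rw [hM2 a'] at hte'
              rw [hte, hte']
            · rw [if_neg hin'] at hcs'
              have : e' ∈ F'' := Finset.mem_sdiff.2 ⟨heF', hin'⟩
              exact absurd hcs' (Nat.ne_of_lt (hlt'' e' this))
          · rw [if_neg hin] at hcs
            have : e ∈ F'' := Finset.mem_sdiff.2 ⟨heF, hin⟩
            exact absurd hcs (Nat.ne_of_lt (hlt'' e this))
        · refine Finset.card_le_one.2 fun e he e' he' => ?_
          rw [Finset.mem_filter] at he he'
          obtain ⟨heF, hcs, hte⟩ := he
          obtain ⟨heF', hcs', hte'⟩ := he'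
          dsimp only at hcs hcs'
          by_cases hin : e ∈ Finset.univ.image M
          · by_cases hin' : e' ∈ Finset.univ.image M
            · obtain ⟨a, rfl⟩ := (hMS e).1 hin
              obtain ⟨a', rfl⟩ := (hMS e').1 hin'
              rw [hM3 a] at hte
              rw [hM3 a'] at hte'
              rw [hinj (hte.trans hte'.symm)]
            · rw [if_neg hin'] at hcs'
              have : e' ∈ F'' := Finset.mem_sdiff.2 ⟨heF', hin'⟩
              exact absurd hcs' (Nat.ne_of_lt (hlt'' e' this))
          · rw [if_neg hin] at hcs
            have : e ∈ F'' := Finset.mem_sdiff.2 ⟨heF, hin⟩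
            exact absurd hcs (Nat.ne_of_lt (hlt'' e this))
      · have hsub1 : (F.filter fun e => (if e ∈ Finset.univ.image M then N else c'' e) = s ∧ t e = v)
            ⊆ F''.filter fun e => c'' e = s ∧ t e = v := by
          intro e he
          rw [Finset.mem_filter] at he ⊢
          obtain ⟨heF, hcs, hte⟩ := he
          by_cases hin : e ∈ Finset.univ.image M
          · rw [if_pos hin] at hcs; exact absurd hcs.symm hs
          · rw [if_neg hin] at hcs
            exact ⟨Finset.mem_sdiff.2 ⟨heF, hin⟩, hcs, hte⟩
        have hsub2 : (F.filter fun e => (if e ∈ Finset.univ.image M then N else c'' e) = s ∧ h e = v)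
            ⊆ F''.filter fun e => c'' e = s ∧ h e = v := by
          intro e he
          rw [Finset.mem_filter] at he ⊢
          obtain ⟨heF, hcs, hte⟩ := he
          by_cases hin : e ∈ Finset.univ.image M
          · rw [if_pos hin] at hcs; exact absurd hcs.symm hs
          · rw [if_neg hin] at hcs
            exact ⟨Finset.mem_sdiff.2 ⟨heF, hin⟩, hcs, hte⟩
        exact ⟨le_trans (Finset.card_le_card hsub1) (hcl'' s v).1,
               le_trans (Finset.card_le_card hsub2) (hcl'' s v).2⟩


/-- KEY LEMMA: a multigraph with all degrees at most `2N` splits into `N` classes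
with all degrees at most `2`. -/
theorem key_split {W E0 : Type*} [Fintype W] [DecidableEq W] [Fintype E0] [DecidableEq E0]
    (ends : E0 → W × W) (F : Finset E0) (N : ℕ)
    (hdeg : ∀ v, mdeg ends F v ≤ 2 * N) :
    ∃ c : E0 → ℕ, (∀ e ∈ F, c e < N) ∧
      ∀ (s : ℕ) (v : W), mdeg ends (F.filter fun e => c e = s) v ≤ 2 := by
  classical
  -- the set of odd-degree vertices
  set O : Finset W := Finset.univ.filter (fun v => Odd (mdeg ends F v)) with hO
  -- handshake: total degree is even
  have handshake : ∑ v, mdeg ends F v = 2 * F.card := by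
    unfold mdeg
    rw [Finset.sum_comm]
    have h2 : ∀ e ∈ F, (∑ v, ((if (ends e).1 = v then (1:ℕ) else 0)
        + (if (ends e).2 = v then 1 else 0))) = 2 := by
      intro e _
      rw [Finset.sum_add_distrib, Finset.sum_ite_eq Finset.univ (ends e).1 (fun _ => (1:ℕ)),
        Finset.sum_ite_eq Finset.univ (ends e).2 (fun _ => (1:ℕ))]
      simp
    rw [Finset.sum_congr rfl h2, Finset.sum_const, smul_eq_mul, mul_comm]
  have hOeven : ∃ n1, O.card = n1 + n1 := by
    have hcast : ((O.card : ℕ) : ZMod 2) = 0 := by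
      have h1 : ((∑ v, mdeg ends F v : ℕ) : ZMod 2) = 0 := by
        rw [handshake, Nat.cast_mul]
        have h0 : ((2:ℕ) : ZMod 2) = 0 := by decide
        rw [h0, zero_mul]
      rw [Nat.cast_sum] at h1
      have h2 : ∀ v : W, ((mdeg ends F v : ℕ) : ZMod 2)
          = if v ∈ O then (1 : ZMod 2) else 0 := by
        intro v
        rw [← ZMod.natCast_mod]
        by_cases hv : v ∈ O
        · have hodd : Odd (mdeg ends F v) := by
            have := hv
            rw [hO, Finset.mem_filter] at this
            exact this.2
          rw [Nat.odd_iff.1 hodd, if_pos hv]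
          rfl
        · have heven : Even (mdeg ends F v) := by
            rcases Nat.even_or_odd (mdeg ends F v) with h | h
            · exact h
            · exact absurd (by rw [hO]; exact Finset.mem_filter.2 ⟨Finset.mem_univ v, h⟩) hv
          rw [Nat.even_iff.1 heven, if_neg hv]
          rfl
      rw [Finset.sum_congr rfl (fun v _ => h2 v), Finset.sum_ite_mem,
        Finset.univ_inter, Finset.sum_const, nsmul_eq_mul, mul_one] at h1
      exact h1
    have := (ZMod.natCast_eq_zero_iff O.card 2).1 hcast
    obtain ⟨n1, hn1⟩ := this
    exact ⟨n1, by omega⟩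
  obtain ⟨n1, hOc⟩ := hOeven
  -- fake edges pairing up odd-degree vertices
  set EF : Fin (n1 + n1) → W := fun j => ((O.equivFin.symm (Fin.cast hOc.symm j)) : W) with hEF
  set fends : Fin n1 → W × W :=
    fun i => (EF (Fin.castAdd n1 i), EF (Fin.natAdd n1 i)) with hfends
  have hfake : ∀ v, mdeg fends Finset.univ v = if v ∈ O then 1 else 0 := by
    intro v
    have h1 : mdeg fends Finset.univ v = ∑ j : Fin (n1 + n1), (if EF j = v then 1 else 0) := by
      rw [mdeg, Fin.sum_univ_add (fun j : Fin (n1+n1) => if EF j = v then (1:ℕ) else 0)]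
      rw [← Finset.sum_add_distrib]
    rw [h1]
    have h2 : ∑ j : Fin (n1 + n1), (if EF j = v then (1:ℕ) else 0)
        = ∑ x : {x // x ∈ O}, (if (x : W) = v then (1:ℕ) else 0) := by
      apply Fintype.sum_equiv ((finCongr hOc.symm).trans O.equivFin.symm)
      intro j
      rfl
    rw [h2, Finset.univ_eq_attach, Finset.sum_attach O (fun u => if u = v then (1:ℕ) else 0)]
    exact Finset.sum_ite_eq' O v fun _ => (1:ℕ)

  -- the graph together with fake parity edges
  set ends1 : (E0 ⊕ Fin n1) → W × W := Sum.elim ends fends with hends1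
  set F1 : Finset (E0 ⊕ Fin n1) := F.disjSum Finset.univ with hF1
  have hmdeg1 : ∀ v, mdeg ends1 F1 v = mdeg ends F v + (if v ∈ O then 1 else 0) := by
    intro v
    rw [← hfake v, mdeg, mdeg, mdeg, hF1, Finset.sum_disjSum]
    rfl
  have heven1 : ∀ v, Even (mdeg ends1 F1 v) := by
    intro v
    rw [hmdeg1 v]
    by_cases hv : v ∈ O
    · have hodd : Odd (mdeg ends F v) := by
        have := hv; rw [hO, Finset.mem_filter] at this; exact this.2
      rw [if_pos hv, Nat.even_iff]
      rw [Nat.odd_iff] at hodd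
      omega
    · have heven : Even (mdeg ends F v) := by
        rcases Nat.even_or_odd (mdeg ends F v) with h | h
        · exact h
        · exact absurd (by rw [hO]; exact Finset.mem_filter.2 ⟨Finset.mem_univ v, h⟩) hv
      rw [if_neg hv, Nat.even_iff]
      rw [Nat.even_iff] at heven
      omega
  have hdeg1 : ∀ v, mdeg ends1 F1 v ≤ 2 * N := by
    intro v
    rw [hmdeg1 v]
    by_cases hv : v ∈ O
    · have hodd : Odd (mdeg ends F v) := by
        have := hv; rw [hO, Finset.mem_filter] at this; exact this.2
      rw [if_pos hv]
      rw [Nat.odd_iff] at hodd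
      have := hdeg v
      omega
    · rw [if_neg hv]
      have := hdeg v
      omega
  -- Euler orientation
  obtain ⟨σ, hσ⟩ := (euler_aux ends1 F1.card F1 rfl).1 heven1
  have hodeg_le : ∀ v, odeg ends1 σ F1 v ≤ N := by
    intro v
    have h1 := mdeg_eq_odeg_add_ideg ends1 σ F1 v
    have h2 := hσ v
    have h3 := hdeg1 v
    omega
  -- regularize with loops
  set fdef : W → ℕ := fun v => N - odeg ends1 σ F1 v with hfdef
  obtain ⟨g, hg⟩ := countfib fdef (∑ v, fdef v) rfl
  set t2 : ((E0 ⊕ Fin n1) ⊕ Fin (∑ v, fdef v)) → W := Sum.elim (tl ends1 σ) g with ht2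
  set h2f : ((E0 ⊕ Fin n1) ⊕ Fin (∑ v, fdef v)) → W := Sum.elim (hd ends1 σ) g with hh2
  set F2 : Finset ((E0 ⊕ Fin n1) ⊕ Fin (∑ v, fdef v)) := F1.disjSum Finset.univ with hF2
  have htails : ∀ v, (F2.filter fun e => t2 e = v).card = N := by
    intro v
    rw [Finset.card_filter, hF2, Finset.sum_disjSum]
    have e1 : (∑ e ∈ F1, if t2 (Sum.inl e) = v then 1 else 0) = odeg ends1 σ F1 v := rfl
    have e2 : (∑ i ∈ Finset.univ, if t2 (Sum.inr i) = v then (1:ℕ) else 0)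
        = (Finset.univ.filter fun i => g i = v).card := by
      rw [Finset.card_filter]
      rfl
    rw [e1, e2, hg v]
    have hfv : fdef v = N - odeg ends1 σ F1 v := rfl
    have := hodeg_le v
    omega
  have hheads : ∀ v, (F2.filter fun e => h2f e = v).card = N := by
    intro v
    rw [Finset.card_filter, hF2, Finset.sum_disjSum]
    have e1 : (∑ e ∈ F1, if h2f (Sum.inl e) = v then 1 else 0) = ideg ends1 σ F1 v := rfl
    have e2 : (∑ i ∈ Finset.univ, if h2f (Sum.inr i) = v then (1:ℕ) else 0)
        = (Finset.univ.filter fun i => g i = v).card := by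
      rw [Finset.card_filter]
      rfl
    rw [e1, e2, hg v]
    have hfv : fdef v = N - odeg ends1 σ F1 v := rfl
    have h4 := hσ v
    have := hodeg_le v
    omega
  obtain ⟨c2, hlt2, hcl2⟩ := reg_color t2 h2f N F2 htails hheads
  refine ⟨fun e => c2 (Sum.inl (Sum.inl e)), ?_, ?_⟩
  · intro e he
    refine hlt2 _ ?_
    rw [hF2, Finset.mem_disjSum]
    left
    exact ⟨Sum.inl e, by rw [hF1, Finset.mem_disjSum]; left; exact ⟨e, he, rfl⟩, rfl⟩
  · intro s v
    set Fs := F.filter (fun e => c2 (Sum.inl (Sum.inl e)) = s) with hFs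
    have hsplit : mdeg ends Fs v
        = (Fs.filter fun e => tl ends1 σ (Sum.inl e) = v).card
        + (Fs.filter fun e => hd ends1 σ (Sum.inl e) = v).card := by
      rw [mdeg, Finset.card_filter, Finset.card_filter, ← Finset.sum_add_distrib]
      refine Finset.sum_congr rfl fun e _ => ?_
      have : ends e = ends1 (Sum.inl e) := rfl
      rw [this]
      by_cases hb : σ (Sum.inl e) <;> simp [tl, hd, hb, add_comm]
    rw [hsplit]
    have hmem2 : ∀ e ∈ Fs, (Sum.inl (Sum.inl e) : (E0 ⊕ Fin n1) ⊕ Fin (∑ v, fdef v)) ∈ F2 := by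
      intro e he
      rw [hFs, Finset.mem_filter] at he
      rw [hF2, Finset.mem_disjSum]
      left
      exact ⟨Sum.inl e, by rw [hF1, Finset.mem_disjSum]; left; exact ⟨e, he.1, rfl⟩, rfl⟩
    have hb1 : (Fs.filter fun e => tl ends1 σ (Sum.inl e) = v).card
        ≤ (F2.filter fun e => c2 e = s ∧ t2 e = v).card := by
      refine Finset.card_le_card_of_injOn (fun e => Sum.inl (Sum.inl e)) ?_ ?_
      · intro e he
        rw [Finset.mem_coe, Finset.mem_filter] at he
        have he1 := he.1
        rw [hFs, Finset.mem_filter] at he1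
        exact Finset.mem_filter.2 ⟨hmem2 e he.1, he1.2, he.2⟩
      · intro a _ b _ hab
        simpa using hab
    have hb2 : (Fs.filter fun e => hd ends1 σ (Sum.inl e) = v).card
        ≤ (F2.filter fun e => c2 e = s ∧ h2f e = v).card := by
      refine Finset.card_le_card_of_injOn (fun e => Sum.inl (Sum.inl e)) ?_ ?_
      · intro e he
        rw [Finset.mem_coe, Finset.mem_filter] at he
        have he1 := he.1
        rw [hFs, Finset.mem_filter] at he1
        exact Finset.mem_filter.2 ⟨hmem2 e he.1, he1.2, he.2⟩
      · intro a _ b _ hab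
        simpa using hab
    have := (hcl2 s v).1
    have := (hcl2 s v).2
    omega

end Stmt12Aux

open Stmt12Aux in
/-- from k factors with controlled maximum degrees to factors with
maximum degrees Δ₁,…,Δ_m. -/
theorem stmt12 [Nonempty V] (ends : E → V × V) (p k m : ℕ) (hp : Odd p) (hp0 : 0 < p)
    (Δ : Fin m → ℕ) (hΔ0 : ∀ i, 0 < Δ i) (hΔp : ∀ i, p - 1 ≤ Δ i)
    (hsum : ∑ i, Δ i = k * p) (hk : 0 < k)
    (cH : E → Fin k) (J : Finset (Fin k))
    (hJ : (Finset.univ.filter fun i : Fin m => Odd (Δ i)).card ≤ J.card)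
    (hmaxJ : ∀ j ∈ J, ∀ v : V,
      mdeg ends (Finset.univ.filter fun e => cH e = j) v ≤ p)
    (hsumJ : (∑ j ∈ Jᶜ,
      Finset.univ.sup' Finset.univ_nonempty
        (mdeg ends (Finset.univ.filter fun e => cH e = j))) ≤ (k - J.card) * p) :
    ∃ cG : E → Fin m, ∀ (i : Fin m) (v : V),
      mdeg ends (Finset.univ.filter fun e => cG e = i) v ≤ Δ i := by
  classical
  have hp2 : p % 2 = 1 := Nat.odd_iff.1 hp
  -- m is positive
  have hm : 0 < m := by
    rcases Nat.eq_zero_or_pos m with hm0 | hm0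
    · exfalso
      subst hm0
      have h0 : (0:ℕ) = k * p := by simpa using hsum
      have hkp := Nat.mul_pos hk hp0
      omega
    · exact hm0
  set ODD : Finset (Fin m) := Finset.univ.filter (fun i => Odd (Δ i)) with hODD
  set t := ODD.card with ht
  -- embed the odd indices into J
  have hcard : Fintype.card {i // i ∈ ODD} ≤ Fintype.card {j // j ∈ J} := by
    rw [Fintype.card_coe, Fintype.card_coe]
    exact hJ
  obtain ⟨φ⟩ := Function.Embedding.nonempty_of_card_le hcard
  set Jm : Finset (Fin k) := ODD.attach.image (fun x => (φ x : Fin k)) with hJm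
  have hφinj : Function.Injective (fun x : {i // i ∈ ODD} => (φ x : Fin k)) :=
    fun a b hab => φ.injective (Subtype.val_injective hab)
  have hJmJ : Jm ⊆ J := by
    intro j hj
    rw [hJm, Finset.mem_image] at hj
    obtain ⟨x, _, rfl⟩ := hj
    exact (φ x).2
  have hJmt : Jm.card = t := by
    rw [hJm, Finset.card_image_of_injective _ hφinj, Finset.card_attach]
  have htJ : t ≤ J.card := hJ
  have hJk : J.card ≤ k := by
    have := Finset.card_le_univ J
    simpa using this
  -- parity of t
  have hpart : (∑ i, Δ i) % 2 = t % 2 := by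
    rw [Finset.sum_nat_mod]
    have h1 : ∀ i : Fin m, Δ i % 2 = if i ∈ ODD then 1 else 0 := by
      intro i
      by_cases hi : i ∈ ODD
      · rw [if_pos hi]
        have := hi; rw [hODD, Finset.mem_filter] at this
        exact Nat.odd_iff.1 this.2
      · rw [if_neg hi]
        have : ¬ Odd (Δ i) := by
          intro hcon
          exact hi (by rw [hODD]; exact Finset.mem_filter.2 ⟨Finset.mem_univ i, hcon⟩)
        rw [Nat.not_odd_iff] at this
        exact this
    rw [Finset.sum_congr rfl (fun i _ => h1 i), Finset.sum_ite_mem, Finset.univ_inter,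
      Finset.sum_const, smul_eq_mul, mul_one, ht]
  have hkt2 : (k - t) % 2 = 0 := by
    have h2 : (k * p) % 2 = (k % 2) * (p % 2) % 2 := Nat.mul_mod k p 2
    rw [hp2, mul_one] at h2
    rw [hsum] at hpart
    have htk : t ≤ k := le_trans htJ hJk
    omega
  have htk : t ≤ k := le_trans htJ hJk
  set N : ℕ := ((k - t) / 2) * p with hN
  have h2N : 2 * N = (k - t) * p := by
    rw [hN, ← mul_assoc]
    congr 1
    omega
  -- the unmatched part of the graph
  set F' : Finset E := Finset.univ.filter (fun e => cH e ∉ Jm) with hF'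
  have hboundF' : ∀ v, mdeg ends F' v ≤ 2 * N := by
    intro v
    have hsplit : mdeg ends F' v
        = ∑ j ∈ Jmᶜ, mdeg ends (Finset.univ.filter fun e => cH e = j) v := by
      have hun : F' = Jmᶜ.biUnion (fun j => Finset.univ.filter fun e => cH e = j) := by
        ext e
        simp only [hF', Finset.mem_filter, Finset.mem_biUnion, Finset.mem_compl,
          Finset.mem_univ, true_and]
        constructor
        · intro h
          exact ⟨cH e, h, rfl⟩
        · rintro ⟨j, hj, rfl⟩
          exact hj
      rw [hun, mdeg, Finset.sum_biUnion]
      · rfl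
      · intro a _ b _ hab
        simp only [Finset.disjoint_left, Finset.mem_filter]
        rintro e ⟨_, hae⟩ ⟨_, hbe⟩
        exact hab (hae.symm.trans hbe)
    rw [hsplit]
    have hcompl : Jmᶜ = (J \ Jm) ∪ Jᶜ := by
      ext j
      simp only [Finset.mem_compl, Finset.mem_union, Finset.mem_sdiff]
      by_cases hjJ : j ∈ J
      · constructor
        · intro h; exact Or.inl ⟨hjJ, h⟩
        · rintro (⟨_, h⟩ | h)
          · exact h
          · exact absurd hjJ h
      · constructor
        · intro _; exact Or.inr hjJ
        · intro _ hmem; exact hjJ (hJmJ hmem)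
    rw [hcompl, Finset.sum_union]
    · have hb1 : ∑ j ∈ J \ Jm, mdeg ends (Finset.univ.filter fun e => cH e = j) v
          ≤ (J.card - t) * p := by
        calc ∑ j ∈ J \ Jm, mdeg ends (Finset.univ.filter fun e => cH e = j) v
            ≤ ∑ j ∈ J \ Jm, p := by
              refine Finset.sum_le_sum fun j hj => ?_
              exact hmaxJ j (Finset.mem_sdiff.1 hj).1 v
          _ = (J.card - t) * p := by
              rw [Finset.sum_const, smul_eq_mul, Finset.card_sdiff_of_subset hJmJ, hJmt]
      have hb2 : ∑ j ∈ Jᶜ, mdeg ends (Finset.univ.filter fun e => cH e = j) v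
          ≤ (k - J.card) * p := by
        refine le_trans (Finset.sum_le_sum fun j _ => ?_) hsumJ
        exact Finset.le_sup' (mdeg ends (Finset.univ.filter fun e => cH e = j)) (Finset.mem_univ v)
      have harith : (J.card - t) * p + (k - J.card) * p = 2 * N := by
        rw [h2N, ← add_mul]
        congr 1
        omega
      omega
    · simp only [Finset.disjoint_left, Finset.mem_sdiff, Finset.mem_compl]
      rintro j ⟨hjJ, _⟩ hjc
      exact hjc hjJ
  obtain ⟨c, hclt, hcls⟩ := key_split ends F' N hboundF'
  -- capacities for the even splitting
  set q : Fin m → ℕ := fun i => (if i ∈ ODD then Δ i - p else Δ i) / 2 with hq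
  have hiodd : ∀ i ∈ ODD, p ≤ Δ i ∧ (Δ i - p) % 2 = 0 := by
    intro i hi
    have hoi := hi
    rw [hODD, Finset.mem_filter] at hoi
    have h1 := Nat.odd_iff.1 hoi.2
    have h2 := hΔp i
    constructor <;> omega
  have hieven : ∀ i ∉ ODD, Δ i % 2 = 0 := by
    intro i hi
    have : ¬ Odd (Δ i) := by
      intro hcon
      exact hi (by rw [hODD]; exact Finset.mem_filter.2 ⟨Finset.mem_univ i, hcon⟩)
    rw [Nat.not_odd_iff] at this
    exact this
  have hsumq : ∑ i, q i = N := by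
    have hdouble : ∀ i : Fin m, 2 * q i = (if i ∈ ODD then Δ i - p else Δ i) := by
      intro i
      have hqi : q i = (if i ∈ ODD then Δ i - p else Δ i) / 2 := rfl
      rw [hqi]
      by_cases hi : i ∈ ODD
      · have := (hiodd i hi).2
        rw [if_pos hi]
        omega
      · have := hieven i hi
        rw [if_neg hi]
        omega
    have hsum2 : ∑ i, (if i ∈ ODD then Δ i - p else Δ i) + t * p = ∑ i, Δ i := by
      have hside : ∀ i : Fin m, (if i ∈ ODD then Δ i - p else Δ i)
          + (if i ∈ ODD then p else 0) = Δ i := by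
        intro i
        by_cases hi : i ∈ ODD
        · have := (hiodd i hi).1
          rw [if_pos hi, if_pos hi]
          omega
        · rw [if_neg hi, if_neg hi]
          omega
      calc ∑ i, (if i ∈ ODD then Δ i - p else Δ i) + t * p
          = ∑ i, ((if i ∈ ODD then Δ i - p else Δ i) + (if i ∈ ODD then p else 0)) := by
            rw [Finset.sum_add_distrib, Finset.sum_ite_mem, Finset.univ_inter,
              Finset.sum_const, smul_eq_mul, ht]
        _ = ∑ i, Δ i := Finset.sum_congr rfl fun i _ => hside i
    have hd2 : 2 * ∑ i, q i = ∑ i, (if i ∈ ODD then Δ i - p else Δ i) := by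
      rw [Finset.mul_sum]
      exact Finset.sum_congr rfl fun i _ => hdouble i
    have hsub : (k - t) * p + t * p = k * p := by
      rw [← add_mul]
      congr 1
      omega
    rw [hsum] at hsum2
    omega
  obtain ⟨g, hgq⟩ := countfib q N hsumq
  -- the final coloring
  set i0 : Fin m := ⟨0, hm⟩ with hi0
  set cG : E → Fin m := fun e =>
    if hx : ∃ x : {i // i ∈ ODD}, (φ x : Fin k) = cH e then (hx.choose : Fin m)
    else if hc : c e < N then g ⟨c e, hc⟩ else i0 with hcG
  have hmatch : ∀ e : E, (cH e ∈ Jm) ↔ ∃ x : {i // i ∈ ODD}, (φ x : Fin k) = cH e := by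
    intro e
    rw [hJm, Finset.mem_image]
    constructor
    · rintro ⟨x, _, hx⟩
      exact ⟨x, hx⟩
    · rintro ⟨x, hx⟩
      exact ⟨x, Finset.mem_attach _ _, hx⟩
  refine ⟨cG, fun i v => ?_⟩
  set A := Finset.univ.filter (fun e => cG e = i) with hA
  have hAsplit : mdeg ends A v
      = mdeg ends (A.filter (fun e => cH e ∈ Jm)) v
      + mdeg ends (A.filter (fun e => cH e ∉ Jm)) v := by
    rw [mdeg, mdeg, mdeg]
    exact (Finset.sum_filter_add_sum_filter_not A (fun e => cH e ∈ Jm) _).symm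
  -- matched part
  have hA1 : mdeg ends (A.filter (fun e => cH e ∈ Jm)) v ≤ if i ∈ ODD then p else 0 := by
    by_cases hi : i ∈ ODD
    · rw [if_pos hi]
      have hsub : A.filter (fun e => cH e ∈ Jm)
          ⊆ Finset.univ.filter (fun e => cH e = (φ ⟨i, hi⟩ : Fin k)) := by
        intro e he
        rw [Finset.mem_filter] at he
        obtain ⟨heA, heJm⟩ := he
        rw [hA, Finset.mem_filter] at heA
        have hx := (hmatch e).1 heJm
        have hcGe : cG e = (hx.choose : Fin m) := by
          rw [hcG]
          exact dif_pos hx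
        have hchoose : (φ hx.choose : Fin k) = cH e := hx.choose_spec
        have hieq : (hx.choose : Fin m) = i := by rw [← heA.2, hcGe]
        have : hx.choose = ⟨i, hi⟩ := Subtype.ext hieq
        rw [Finset.mem_filter]
        exact ⟨Finset.mem_univ e, by rw [← hchoose, this]⟩
      calc mdeg ends (A.filter (fun e => cH e ∈ Jm)) v
          ≤ mdeg ends (Finset.univ.filter (fun e => cH e = (φ ⟨i, hi⟩ : Fin k))) v :=
            Finset.sum_le_sum_of_subset hsub
        _ ≤ p := hmaxJ _ (φ ⟨i, hi⟩).2 v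
    · rw [if_neg hi]
      have hempty : A.filter (fun e => cH e ∈ Jm) = ∅ := by
        rw [Finset.eq_empty_iff_forall_notMem]
        intro e he
        rw [Finset.mem_filter] at he
        obtain ⟨heA, heJm⟩ := he
        rw [hA, Finset.mem_filter] at heA
        have hx := (hmatch e).1 heJm
        have hcGe : cG e = (hx.choose : Fin m) := by
          rw [hcG]
          exact dif_pos hx
        have : (hx.choose : Fin m) = i := by rw [← heA.2, hcGe]
        exact hi (this ▸ hx.choose.2)
      rw [hempty]
      simp [mdeg]
  -- unmatched part
  have hA2 : mdeg ends (A.filter (fun e => cH e ∉ Jm)) v ≤ 2 * q i := by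
    set fib : Finset (Fin N) := Finset.univ.filter (fun s => g s = i) with hfib
    have hsub : A.filter (fun e => cH e ∉ Jm)
        ⊆ fib.biUnion (fun s => F'.filter (fun e => c e = (s : Fin N).val)) := by
      intro e he
      rw [Finset.mem_filter] at he
      obtain ⟨heA, heJm⟩ := he
      rw [hA, Finset.mem_filter] at heA
      have heF' : e ∈ F' := by
        rw [hF', Finset.mem_filter]
        exact ⟨Finset.mem_univ e, heJm⟩
      have hcla : c e < N := hclt e heF'
      have hnx : ¬ ∃ x : {i // i ∈ ODD}, (φ x : Fin k) = cH e := fun hx => heJm ((hmatch e).2 hx)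
      have hcGe : cG e = g ⟨c e, hcla⟩ := by
        rw [hcG]
        exact (dif_neg hnx).trans (dif_pos hcla)
      rw [Finset.mem_biUnion]
      refine ⟨⟨c e, hcla⟩, ?_, ?_⟩
      · rw [hfib, Finset.mem_filter]
        exact ⟨Finset.mem_univ _, by rw [← hcGe, heA.2]⟩
      · rw [Finset.mem_filter]
        exact ⟨heF', rfl⟩
    calc mdeg ends (A.filter (fun e => cH e ∉ Jm)) v
        ≤ mdeg ends (fib.biUnion (fun s => F'.filter (fun e => c e = (s : Fin N).val))) v :=
          Finset.sum_le_sum_of_subset hsub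
      _ = ∑ s ∈ fib, mdeg ends (F'.filter (fun e => c e = (s : Fin N).val)) v := by
          rw [mdeg, Finset.sum_biUnion]
          · rfl
          · intro a _ b _ hab
            simp only [Finset.disjoint_left, Finset.mem_filter]
            rintro e ⟨_, hae⟩ ⟨_, hbe⟩
            exact hab (Fin.val_injective (hae.symm.trans hbe))
      _ ≤ ∑ s ∈ fib, 2 := Finset.sum_le_sum fun s _ => hcls (s : Fin N).val v
      _ = 2 * q i := by
          rw [Finset.sum_const, smul_eq_mul, mul_comm]
          congr 1
          rw [hfib]
          exact hgq i
  -- combine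
  rw [hAsplit]
  by_cases hi : i ∈ ODD
  · rw [if_pos hi] at hA1
    have h1 := (hiodd i hi).1
    have h2 := (hiodd i hi).2
    have hqi : q i = (Δ i - p) / 2 := by
      have : q i = (if i ∈ ODD then Δ i - p else Δ i) / 2 := rfl
      rw [this, if_pos hi]
    omega
  · rw [if_neg hi] at hA1
    have h2 := hieven i hi
    have hqi : q i = Δ i / 2 := by
      have : q i = (if i ∈ ODD then Δ i - p else Δ i) / 2 := rfl
      rw [this, if_neg hi]
    omega
end

section
/- Let G be a multigraph, k a positive integer, and X a set of vertices of G whose degrees are not divisible by k. Suppose there is a bipartition V_0, V_1 of X with Σ_{v∈V_0}⌊d_G(v)/k⌋ + Σ_{v∈V_1}⌈d_G(v)/k⌉ odd and Σ_{v∈V_0}[d_G(v)]_k + Σ_{v∈V_1}[k - d_G(v)]_k ≤ k - 1 - d_G(X). Then G cannot be edge-decomposed into k factors G_1,...,G_k such that |d_{G_i}(v) - d_G(v)/k| ≤ 1 for all v ∈ X and all i. -/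
open Finset

variable {V E : Type*} [Fintype V] [Fintype E] [DecidableEq V]

/-- Number of edges with exactly one end in X. -/
def bdry (ends : E → V × V) (X : Finset V) : ℕ :=
  (Finset.univ.filter fun e =>
    ((ends e).1 ∈ X ∧ (ends e).2 ∉ X) ∨ ((ends e).1 ∉ X ∧ (ends e).2 ∈ X)).card

/-- obstruction to factorizations with degree error at most 1 on X. -/
theorem stmt13 (ends : E → V × V) (k : ℕ) (hk : 0 < k) (X V₀ V₁ : Finset V)
    (hX : ∀ v ∈ X, ¬ (k ∣ mdeg ends Finset.univ v))
    (hpart : V₀ ∪ V₁ = X) (hdisj : Disjoint V₀ V₁)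
    (hodd : Odd (∑ v ∈ V₀, mdeg ends Finset.univ v / k
               + ∑ v ∈ V₁, (mdeg ends Finset.univ v + k - 1) / k))
    (hbound : ∑ v ∈ V₀, ((mdeg ends Finset.univ v : ℤ) % k)
            + ∑ v ∈ V₁, (((k : ℤ) - (mdeg ends Finset.univ v : ℤ)) % k)
            ≤ (k : ℤ) - 1 - bdry ends X) :
    ¬ ∃ c : E → Fin k, ∀ v ∈ X, ∀ i : Fin k,
        |(mdeg ends (Finset.univ.filter fun e => c e = i) v : ℚ)
          - (mdeg ends Finset.univ v : ℚ) / k| ≤ 1 := by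
  classical
  rintro ⟨c, hc⟩
  set d : V → ℕ := mdeg ends Finset.univ with hd
  set F : Fin k → Finset E := fun i => Finset.univ.filter fun e => c e = i with hF
  set P : E → Prop := fun e =>
    ((ends e).1 ∈ X ∧ (ends e).2 ∉ X) ∨ ((ends e).1 ∉ X ∧ (ends e).2 ∈ X) with hPdef
  set q : V → ℕ := fun v => d v / k with hq
  set r : V → ℕ := fun v => d v % k with hrdef
  have hXsub₀ : V₀ ⊆ X := hpart ▸ subset_union_left
  have hXsub₁ : V₁ ⊆ X := hpart ▸ subset_union_right
  have hdq : ∀ v, k * q v + r v = d v := fun v => Nat.div_add_mod (d v) k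
  have hr0 : ∀ v ∈ X, 0 < r v := by
    intro v hv
    rcases Nat.eq_zero_or_pos (r v) with h | h
    · exact absurd (Nat.dvd_of_mod_eq_zero h) (hX v hv)
    · exact h
  have hrk : ∀ v, r v < k := fun v => Nat.mod_lt _ hk
  -- sum over fibers of degrees
  have hsumF : ∀ v, ∑ i, mdeg ends (F i) v = d v := by
    intro v
    simp only [mdeg, hF]
    rw [Finset.sum_fiberwise]
    rfl
  -- factor degrees are q or q+1
  have hbound2 : ∀ v ∈ X, ∀ i, q v ≤ mdeg ends (F i) v ∧ mdeg ends (F i) v ≤ q v + 1 := by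
    intro v hv i
    have hb := hc v hv i
    rw [abs_le] at hb
    obtain ⟨hb1, hb2⟩ := hb
    have hkQ : (0:ℚ) < (k:ℚ) := by exact_mod_cast hk
    have hlow : (q v : ℚ) < (d v : ℚ) / k := by
      rw [lt_div_iff₀ hkQ]
      have h1 : k * q v < d v := by
        have h2 := hdq v
        have h3 := hr0 v hv
        omega
      calc (q v : ℚ) * k = ((k * q v : ℕ) : ℚ) := by push_cast; ring
        _ < (d v : ℚ) := by exact_mod_cast h1
    have hhigh : (d v : ℚ) / k < q v + 1 := by
      rw [div_lt_iff₀ hkQ]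
      have h1 : d v < k * q v + k := by
        have h2 := hdq v
        have h3 := hrk v
        omega
      calc (d v : ℚ) < ((k * q v + k : ℕ) : ℚ) := by exact_mod_cast h1
        _ = ((q v : ℚ) + 1) * k := by push_cast; ring
    constructor
    · have h5 : (q v : ℚ) < (mdeg ends (F i) v : ℚ) + 1 := by
        simp only [hF] at hb1 ⊢
        linarith
      have : q v < mdeg ends (F i) v + 1 := by exact_mod_cast h5
      omega
    · have h5 : (mdeg ends (F i) v : ℚ) < (q v : ℚ) + 2 := by
        simp only [hF] at hb2 ⊢
        linarith
      have : mdeg ends (F i) v < q v + 2 := by exact_mod_cast h5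
      omega
  set A : Fin k → V → ℕ := fun i v => mdeg ends (F i) v - q v with hA
  have hAeq : ∀ v ∈ X, ∀ i, mdeg ends (F i) v = q v + A i v := by
    intro v hv i
    have := (hbound2 v hv i).1
    simp only [hA]
    omega
  have hA1 : ∀ v ∈ X, ∀ i, A i v ≤ 1 := by
    intro v hv i
    have h1 := (hbound2 v hv i).1
    have h2 := (hbound2 v hv i).2
    simp only [hA]
    omega
  have hAsum : ∀ v ∈ X, ∑ i, A i v = r v := by
    intro v hv
    have h1 := hsumF v
    have h2 : ∑ i, mdeg ends (F i) v = ∑ i : Fin k, (q v + A i v) :=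
      Finset.sum_congr rfl fun i _ => hAeq v hv i
    rw [h2, Finset.sum_add_distrib, Finset.sum_const, Finset.card_univ, Fintype.card_fin,
      smul_eq_mul] at h1
    have := hdq v
    omega
  have hA1sum : ∀ v ∈ X, ∑ i, (1 - A i v) = k - r v := by
    intro v hv
    have h1 : ∑ i : Fin k, (1 - A i v) + ∑ i, A i v = ∑ i : Fin k, 1 := by
      rw [← Finset.sum_add_distrib]
      exact Finset.sum_congr rfl fun i _ => by have := hA1 v hv i; omega
    rw [hAsum v hv, Finset.sum_const, Finset.card_univ, Fintype.card_fin, smul_eq_mul,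
      mul_one] at h1
    have := hrk v
    omega
  -- parity: boundary of each factor
  set B : Fin k → ℕ := fun i => ((F i).filter P).card with hB
  have hpar : ∀ i, ((B i : ZMod 2)) = ∑ v ∈ X, (mdeg ends (F i) v : ZMod 2) := by
    intro i
    have step1 : ∑ v ∈ X, mdeg ends (F i) v =
        ∑ e ∈ F i, ((if (ends e).1 ∈ X then 1 else 0) + (if (ends e).2 ∈ X then 1 else 0)) := by
      simp only [mdeg]
      rw [Finset.sum_comm]
      refine Finset.sum_congr rfl fun e _ => ?_
      rw [Finset.sum_add_distrib]
      congr 1 <;> simp [Finset.sum_ite_eq]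
    have h2 : (∑ v ∈ X, (mdeg ends (F i) v : ZMod 2)) =
        ∑ e ∈ (F i), (if P e then (1 : ZMod 2) else 0) := by
      rw [← Nat.cast_sum, step1, Nat.cast_sum]
      refine Finset.sum_congr rfl fun e _ => ?_
      by_cases h1 : (ends e).1 ∈ X <;> by_cases h2 : (ends e).2 ∈ X <;>
        simp [hPdef, h1, h2] <;> decide
    rw [h2, Finset.sum_boole, hB]
  have hBsum : ∑ i, B i = bdry ends X := by
    simp only [hB, bdry, hF]
    rw [Finset.card_eq_sum_card_fiberwise (f := c) (t := Finset.univ)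
      (fun e _ => Finset.mem_univ (c e))]
    refine Finset.sum_congr rfl fun i _ => ?_
    congr 1
    rw [Finset.filter_filter, Finset.filter_filter]
    congr 1
    funext e
    exact propext and_comm
  -- T is odd
  set T : ℕ := ∑ v ∈ V₀, q v + ∑ v ∈ V₁, (q v + 1) with hT
  have hToddeq : Odd T := by
    have h0 : ∑ v ∈ V₁, (q v + 1) = ∑ v ∈ V₁, (d v + k - 1) / k := by
      refine Finset.sum_congr rfl fun v hv => ?_
      have h1 := hdq v
      have h2 := hr0 v (hXsub₁ hv)
      have h3 := hrk v
      have h4 : (d v + k - 1) / k = q v + 1 := by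
        apply Nat.div_eq_of_lt_le
        · have e : (q v + 1) * k = k * q v + k := by ring
          omega
        · have e : (q v + 1 + 1) * k = k * q v + k + k := by ring
          omega
      omega
    rw [hT, h0]
    exact hodd
  have hT2 : (T : ZMod 2) = 1 := by
    obtain ⟨m, hm⟩ := hToddeq
    rw [hm]
    push_cast
    rw [show ((2:ZMod 2)) = 0 from rfl]
    ring
  -- key per-factor inequality
  have hkey : ∀ i : Fin k,
      1 ≤ (∑ v ∈ V₀, A i v + ∑ v ∈ V₁, (1 - A i v)) + B i := by
    intro i
    set εn : ℕ := ∑ v ∈ V₀, A i v + ∑ v ∈ V₁, (1 - A i v) with hεn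
    have hnat : T + εn = (∑ v ∈ X, mdeg ends (F i) v) + 2 * ∑ v ∈ V₁, (1 - A i v) := by
      rw [← hpart, Finset.sum_union hdisj, hT, hεn]
      have e0 : ∑ v ∈ V₀, mdeg ends (F i) v = ∑ v ∈ V₀, q v + ∑ v ∈ V₀, A i v := by
        rw [← Finset.sum_add_distrib]
        exact Finset.sum_congr rfl fun v hv => hAeq v (hXsub₀ hv) i
      have e1 : ∑ v ∈ V₁, mdeg ends (F i) v = ∑ v ∈ V₁, q v + ∑ v ∈ V₁, A i v := by
        rw [← Finset.sum_add_distrib]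
        exact Finset.sum_congr rfl fun v hv => hAeq v (hXsub₁ hv) i
      have e2 : ∑ v ∈ V₁, (q v + 1) = ∑ v ∈ V₁, q v + ∑ v ∈ V₁, 1 :=
        Finset.sum_add_distrib
      have e3 : ∑ v ∈ V₁, A i v + ∑ v ∈ V₁, (1 - A i v) = ∑ v ∈ V₁, (1:ℕ) := by
        rw [← Finset.sum_add_distrib]
        exact Finset.sum_congr rfl fun v hv => by have := hA1 v (hXsub₁ hv) i; omega
      omega
    have hcast : ((εn + B i : ℕ) : ZMod 2) = 1 := by
      have h1 : ((T : ZMod 2)) + (εn : ZMod 2) = (B i : ZMod 2) := by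
        have h2 := congrArg (fun n : ℕ => (n : ZMod 2)) hnat
        simp only [Nat.cast_add, Nat.cast_mul, Nat.cast_ofNat] at h2
        rw [show ((2:ZMod 2)) = 0 from rfl, zero_mul, add_zero] at h2
        rw [h2, Nat.cast_sum, ← hpar i]
      rw [Nat.cast_add, ← h1, hT2]
      have two : ∀ x : ZMod 2, x + x = 0 := by decide
      calc (εn : ZMod 2) + (1 + εn) = ((εn : ZMod 2) + εn) + 1 := by ring
        _ = 1 := by rw [two]; ring
    by_contra hcon
    push_neg at hcon
    have hz : εn + B i = 0 := by omega
    rw [hz] at hcast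
    simp at hcast
  -- global counting
  have hglobal : k ≤ ∑ v ∈ V₀, r v + ∑ v ∈ V₁, (k - r v) + bdry ends X := by
    have h2 : ∑ i : Fin k, ((∑ v ∈ V₀, A i v + ∑ v ∈ V₁, (1 - A i v)) + B i)
        = ∑ v ∈ V₀, r v + ∑ v ∈ V₁, (k - r v) + bdry ends X := by
      rw [Finset.sum_add_distrib, Finset.sum_add_distrib, hBsum]
      congr 2
      · rw [Finset.sum_comm]
        exact Finset.sum_congr rfl fun v hv => hAsum v (hXsub₀ hv)
      · rw [Finset.sum_comm]
        exact Finset.sum_congr rfl fun v hv => hA1sum v (hXsub₁ hv)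
    calc k = ∑ _i : Fin k, 1 := by simp
      _ ≤ ∑ i : Fin k, ((∑ v ∈ V₀, A i v + ∑ v ∈ V₁, (1 - A i v)) + B i) :=
          Finset.sum_le_sum fun i _ => hkey i
      _ = _ := h2
  -- translate hbound
  have hb0 : ∑ v ∈ V₀, ((d v : ℤ) % k) = ∑ v ∈ V₀, (r v : ℤ) := by
    refine Finset.sum_congr rfl fun v hv => ?_
    simp only [hrdef]
    exact (Int.natCast_mod (d v) k).symm
  have hb1 : ∑ v ∈ V₁, (((k : ℤ) - (d v : ℤ)) % k) = ∑ v ∈ V₁, ((k - r v : ℕ) : ℤ) := by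
    refine Finset.sum_congr rfl fun v hv => ?_
    have hrle : r v ≤ k := le_of_lt (hrk v)
    have hdz : (d v : ℤ) = k * q v + r v := by exact_mod_cast (hdq v).symm
    have hkd : (k:ℤ) - d v = ((k - r v : ℕ) : ℤ) + k * (-(q v : ℤ)) := by
      rw [hdz]
      push_cast [Nat.cast_sub hrle]
      ring
    rw [hkd, Int.add_mul_emod_self_left, Int.emod_eq_of_lt]
    · exact Int.natCast_nonneg _
    · have h1 : k - r v < k := by have := hr0 v (hXsub₁ hv); omega
      exact_mod_cast h1
  rw [hb0, hb1] at hbound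
  have hgZ : (k : ℤ) ≤ ∑ v ∈ V₀, (r v : ℤ) + ∑ v ∈ V₁, ((k - r v : ℕ) : ℤ) + bdry ends X := by
    exact_mod_cast hglobal
  linarith
end

section
/- Let G be a multigraph that admits a factorization G_1,...,G_k in which every vertex v satisfies d_{G_i}(v) ≤ ⌈d_G(v)/k⌉ for all i. Then either Σ_{v∈V(G)} ⌈d_G(v)/k⌉ is even, or Σ_{v∈V(G)} [k - d_G(v)]_k ≥ k - 1. -/
open Finset

variable {V E : Type*} [Fintype V] [Fintype E] [DecidableEq V]

lemma key_emod (k d : ℕ) (hk : 0 < k) :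
    ((k : ℤ) - d) % k = (k : ℤ) * (((d + k - 1) / k : ℕ) : ℤ) - d := by
  obtain ⟨q, r, hr, rfl⟩ : ∃ q r, r < k ∧ d = k * q + r :=
    ⟨d / k, d % k, Nat.mod_lt _ hk, (Nat.div_add_mod d k).symm⟩
  have hceil : (k * q + r + k - 1) / k = q + (r + k - 1) / k := by
    rw [show k * q + r + k - 1 = k * q + (r + k - 1) by omega, Nat.mul_add_div hk]
  have hemod : ((k : ℤ) - ((k : ℤ) * q + r)) % k = (-(r : ℤ)) % k := by
    have h' : ((k : ℤ) - ((k : ℤ) * q + r)) = -(r : ℤ) + (k : ℤ) * (1 - q) := by ring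
    rw [h', Int.add_mul_emod_self_left]
  rcases Nat.eq_zero_or_pos r with rfl | hr0
  · have h1 : (0 + k - 1) / k = 0 := Nat.div_eq_of_lt (by omega)
    rw [hceil, h1]
    push_cast at hemod ⊢
    rw [hemod]
    simp
  · have h1 : (r + k - 1) / k = 1 := by
      have h3 : (r + k - 1) / k < 2 := (Nat.div_lt_iff_lt_mul hk).2 (by omega)
      have h4 : 1 ≤ (r + k - 1) / k := (Nat.le_div_iff_mul_le hk).2 (by omega)
      omega
    have h2 : (-(r : ℤ)) % k = (k : ℤ) - r := by
      have h5 : (-(r : ℤ)) % k = ((k : ℤ) - r) % k := by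
        rw [show (k : ℤ) - r = -(r : ℤ) + (k : ℤ) * 1 by ring, Int.add_mul_emod_self_left]
      rw [h5, Int.emod_eq_of_lt (by omega) (by omega)]
    rw [hceil, h1]
    push_cast at hemod ⊢
    rw [hemod, h2]
    ring

lemma mdeg_sum_even (ends : E → V × V) (F : Finset E) :
    Even (∑ v : V, mdeg ends F v) := by
  classical
  have h : ∑ v : V, mdeg ends F v = 2 * F.card := by
    unfold mdeg
    rw [Finset.sum_comm]
    have h1 : ∀ e ∈ F, (∑ v : V,
        ((if (ends e).1 = v then 1 else 0) + (if (ends e).2 = v then 1 else 0))) = 2 := by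
      intro e _
      rw [Finset.sum_add_distrib, Finset.sum_ite_eq, Finset.sum_ite_eq]
      simp
    rw [Finset.sum_congr rfl h1, Finset.sum_const, smul_eq_mul, Nat.mul_comm]
  rw [h]
  exact even_two_mul _

/-- necessity for factorizations with all factor degrees at most ⌈d/k⌉. -/
theorem stmt15 (ends : E → V × V) (k : ℕ) (hk : 0 < k) (c : E → Fin k)
    (h : ∀ (v : V) (i : Fin k),
      mdeg ends (Finset.univ.filter fun e => c e = i) v
        ≤ (mdeg ends Finset.univ v + k - 1) / k) :
    Even (∑ v : V, (mdeg ends Finset.univ v + k - 1) / k) ∨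
      (k : ℤ) - 1 ≤ ∑ v : V, (((k : ℤ) - (mdeg ends Finset.univ v : ℤ)) % k) := by
  classical
  rcases Nat.even_or_odd (∑ v : V, (mdeg ends Finset.univ v + k - 1) / k) with he | ho
  · exact Or.inl he
  right
  set S := ∑ v : V, (mdeg ends Finset.univ v + k - 1) / k with hS
  -- each factor's degree sum is strictly less than S (even vs odd), so ≤ S - 1
  have hfac : ∀ i : Fin k,
      (∑ v : V, mdeg ends (Finset.univ.filter fun e => c e = i) v) + 1 ≤ S := by
    intro i
    have hle : (∑ v : V, mdeg ends (Finset.univ.filter fun e => c e = i) v) ≤ S :=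
      Finset.sum_le_sum fun v _ => h v i
    have hev := mdeg_sum_even ends (Finset.univ.filter fun e => c e = i)
    have hne : (∑ v : V, mdeg ends (Finset.univ.filter fun e => c e = i) v) ≠ S := by
      intro hEq
      rw [hEq] at hev
      exact Nat.not_even_iff_odd.2 ho hev
    omega
  -- sum over the k factors
  have hsum : (∑ i : Fin k, ∑ v : V, mdeg ends (Finset.univ.filter fun e => c e = i) v) + k
      ≤ k * S := by
    calc (∑ i : Fin k, ∑ v : V, mdeg ends (Finset.univ.filter fun e => c e = i) v) + k
        = ∑ i : Fin k,
            ((∑ v : V, mdeg ends (Finset.univ.filter fun e => c e = i) v) + 1) := by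
          rw [Finset.sum_add_distrib]
          simp
      _ ≤ ∑ _i : Fin k, S := Finset.sum_le_sum fun i _ => hfac i
      _ = k * S := by simp [Finset.sum_const, Finset.card_univ]
  -- the double sum is the total degree sum
  have hswap : (∑ i : Fin k, ∑ v : V, mdeg ends (Finset.univ.filter fun e => c e = i) v)
      = ∑ v : V, mdeg ends Finset.univ v := by
    rw [Finset.sum_comm]
    refine Finset.sum_congr rfl fun v _ => ?_
    unfold mdeg
    exact Finset.sum_fiberwise Finset.univ c _
  rw [hswap] at hsum
  -- rewrite the goal via the key lemma
  have hrw : (∑ v : V, (((k : ℤ) - (mdeg ends Finset.univ v : ℤ)) % k))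
      = (k : ℤ) * S - (∑ v : V, mdeg ends Finset.univ v : ℕ) := by
    rw [Finset.sum_congr rfl fun v _ => key_emod k (mdeg ends Finset.univ v) hk,
      Finset.sum_sub_distrib, ← Finset.mul_sum, hS]
    push_cast
    ring
  rw [hrw]
  have : ((∑ v : V, mdeg ends Finset.univ v : ℕ) : ℤ) + k ≤ (k : ℤ) * S := by
    exact_mod_cast hsum
  omega
end

section
/- For any real ε with 0 ≤ ε ≤ 1, every multigraph G has a spanning subgraph F such that |d_F(v) - ε·d_G(v)| ≤ 1 for every vertex v. -/
set_option linter.unusedSectionVars false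


open Finset

variable {V E : Type*} [Fintype V] [Fintype E] [DecidableEq V]

namespace KS

variable (ends : E → V × V)

def inc (e : E) (v : V) : ℤ :=
  (if (ends e).1 = v then 1 else 0) + (if (ends e).2 = v then 1 else 0)

def zdeg (S : Finset E) (v : V) : ℤ := ∑ e ∈ S, inc ends e v

lemma zdeg_cast (S : Finset E) (v : V) : (mdeg ends S v : ℤ) = zdeg ends S v := by
  unfold mdeg zdeg inc
  push_cast [apply_ite (fun n : ℕ => (n : ℤ))]
  rfl

lemma zdeg_erase [DecidableEq E] {e : E} {S : Finset E} (he : e ∈ S) (v : V) :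
    zdeg ends (Finset.erase S e) v = zdeg ends S v - inc ends e v := by

  unfold zdeg
  rw [← Finset.sum_erase_add S _ he]
  ring

lemma zdeg_insert [DecidableEq E] {e : E} {A : Finset E} (he : e ∉ A) (v : V) :
    zdeg ends (insert e A) v = zdeg ends A v + inc ends e v := by
  unfold zdeg
  rw [Finset.sum_insert he]
  ring

lemma zdeg_isolated {S : Finset E} {a : V}
    (h : ∀ e ∈ S, ¬((ends e).1 = a ∨ (ends e).2 = a)) : zdeg ends S a = 0 := by
  unfold zdeg
  apply Finset.sum_eq_zero
  intro e he
  have := h e he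
  unfold inc
  push_neg at this
  simp [this.1, this.2]

end KS

namespace KS

def Allowed (b : Bool) (x : ℤ) : Prop :=
  |x| ≤ 1 ∨ (x = 2 ∧ b = true) ∨ (x = -2 ∧ b = false)

lemma allowed_zero {b : Bool} : Allowed b 0 := Or.inl (by norm_num)

lemma allowed_unit {b : Bool} {x : ℤ} (h : x = 1 ∨ x = -1) : Allowed b x := by
  rcases h with h | h <;> subst h <;> exact Or.inl (by norm_num)

def Good (ends : E → V × V) (σ : V → Bool) (S : Finset E) (o : V → ℤ) : Prop :=
  ∃ A, A ⊆ S ∧ ∀ v, Allowed (σ v) (2 * zdeg ends A v - zdeg ends S v + o v)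

variable (ends : E → V × V)

lemma Good_congr {σ : V → Bool} {S : Finset E} {o o' : V → ℤ} (h : ∀ v, o v = o' v)
    (hg : Good ends σ S o) : Good ends σ S o' := by
  obtain ⟨A, hA, hall⟩ := hg
  exact ⟨A, hA, fun v => by rw [← h v]; exact hall v⟩

lemma D_step [DecidableEq E] {e : E} {S A' : Finset E} (he : e ∈ S) (hA' : A' ⊆ S.erase e)
    (s : ℤ) (hs : s = 1 ∨ s = -1) :
    ∃ A, A ⊆ S ∧ ∀ v, 2 * zdeg ends A v - zdeg ends S v
        = 2 * zdeg ends A' v - zdeg ends (S.erase e) v + s * inc ends e v := by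
  have heA' : e ∉ A' := fun h => (Finset.notMem_erase e S) (hA' h)
  have hsub : A' ⊆ S := hA'.trans (Finset.erase_subset e S)
  rcases hs with hs | hs
  · refine ⟨insert e A', Finset.insert_subset he hsub, fun v => ?_⟩
    rw [zdeg_insert ends heA', zdeg_erase ends he, hs]; ring
  · refine ⟨A', hsub, fun v => ?_⟩
    rw [zdeg_erase ends he, hs]; ring

lemma exists_other (e : E) (a : V) (h : (ends e).1 = a ∨ (ends e).2 = a) :
    ∃ b : V, ∀ v, inc ends e v = (if a = v then 1 else 0) + (if b = v then 1 else 0) := by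
  rcases h with h | h
  · refine ⟨(ends e).2, fun v => ?_⟩
    unfold inc; rw [h]
  · refine ⟨(ends e).1, fun v => ?_⟩
    unfold inc; rw [h]; ring

end KS

namespace KS

lemma allowed_congr {b : Bool} {x y : ℤ} (h : x = y) (hy : Allowed b y) : Allowed b x :=
  h ▸ hy

lemma good_empty (ends : E → V × V) {σ : V → Bool} {o : V → ℤ}
    (h : ∀ v, Allowed (σ v) (o v)) : Good ends σ (∅ : Finset E) o := by
  refine ⟨∅, Finset.Subset.refl _, fun v => ?_⟩
  have hz : zdeg ends (∅ : Finset E) v = 0 := Finset.sum_empty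
  exact allowed_congr (by rw [hz]; ring_nf) (h v)

lemma base_case (ends : E → V × V) (σ : V → Bool) :
      (Good ends σ (∅ : Finset E) (fun _ => 0)) ∧
      (∀ (a : V) (c : ℤ), (c = 1 ∨ c = -1) →
        Good ends σ (∅ : Finset E) (fun v => if a = v then -c else 0)) ∧
      (∀ (a a' : V) (c c' : ℤ), (c = 1 ∨ c = -1) → (c' = 1 ∨ c' = -1) →
        Good ends σ (∅ : Finset E)
          (fun v => (if a = v then -c else 0) + (if a' = v then -c' else 0)) ∨
        Good ends σ (∅ : Finset E)
          (fun v => (if a = v then c else 0) + (if a' = v then c' else 0))) := by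
  refine ⟨good_empty ends fun v => allowed_zero, ?_, ?_⟩
  · intro a c hc
    apply good_empty
    intro v
    by_cases hv : a = v
    · rw [if_pos hv]; exact allowed_unit (by omega)
    · rw [if_neg hv]; exact allowed_zero
  · intro a a' c c' hc hc'
    by_cases hkey : a = a' ∧ c' = c
    · obtain ⟨h1, h2⟩ := hkey
      subst h1
      by_cases hσ : σ a = true
      · rcases hc with h3 | h3
        · right
          apply good_empty
          intro v
          by_cases hv : a = v
          · subst hv
            rw [if_pos rfl, if_pos rfl]
            exact allowed_congr (by omega) (Or.inr (Or.inl ⟨rfl, hσ⟩))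
          · rw [if_neg hv, if_neg hv]; exact allowed_zero
        · left
          apply good_empty
          intro v
          by_cases hv : a = v
          · subst hv
            rw [if_pos rfl, if_pos rfl]
            exact allowed_congr (by omega) (Or.inr (Or.inl ⟨rfl, hσ⟩))
          · rw [if_neg hv, if_neg hv]; exact allowed_zero
      · have hσf : σ a = false := by
          cases h : σ a
          · rfl
          · exact absurd h hσ
        rcases hc with h3 | h3
        · left
          apply good_empty
          intro v
          by_cases hv : a = v
          · subst hv
            rw [if_pos rfl, if_pos rfl]
            exact allowed_congr (by omega) (Or.inr (Or.inr ⟨rfl, hσf⟩))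
          · rw [if_neg hv, if_neg hv]; exact allowed_zero
        · right
          apply good_empty
          intro v
          by_cases hv : a = v
          · subst hv
            rw [if_pos rfl, if_pos rfl]
            exact allowed_congr (by omega) (Or.inr (Or.inr ⟨rfl, hσf⟩))
          · rw [if_neg hv, if_neg hv]; exact allowed_zero
    · left
      apply good_empty
      intro v
      by_cases hv : a = v <;> by_cases hv' : a' = v
      · have haa : a = a' := hv.trans hv'.symm
        have hcc : c' = -c := by
          rcases Decidable.em (c' = c) with h | h
          · exact absurd ⟨haa, h⟩ hkey
          · omega
        rw [if_pos hv, if_pos hv']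
        exact allowed_congr (by omega) (allowed_zero (b := σ v))
      · rw [if_pos hv, if_neg hv']
        exact allowed_unit (by omega)
      · rw [if_neg hv, if_pos hv']
        exact allowed_unit (by omega)
      · rw [if_neg hv, if_neg hv']
        exact allowed_congr (by ring_nf) (allowed_zero (b := σ v))

end KS

namespace KS

lemma main_ind (ends : E → V × V) (σ : V → Bool) :
    ∀ n : ℕ, ∀ S : Finset E, S.card ≤ n →
      (Good ends σ S (fun _ => 0)) ∧
      (∀ (a : V) (c : ℤ), (c = 1 ∨ c = -1) →
        Good ends σ S (fun v => if a = v then -c else 0)) ∧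
      (∀ (a a' : V) (c c' : ℤ), (c = 1 ∨ c = -1) → (c' = 1 ∨ c' = -1) →
        Good ends σ S (fun v => (if a = v then -c else 0) + (if a' = v then -c' else 0)) ∨
        Good ends σ S (fun v => (if a = v then c else 0) + (if a' = v then c' else 0))) := by
  classical
  intro n
  induction n with
  | zero =>
    intro S hS
    have hSe : S = ∅ := Finset.card_eq_zero.mp (Nat.le_zero.mp hS)
    subst hSe
    exact base_case ends σ
  | succ n IH =>
    intro S hS
    by_cases hSe : S = ∅
    · subst hSe; exact base_case ends σ
    -- main step
    have hP : Good ends σ S (fun _ => 0) := by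
      obtain ⟨e, he⟩ := Finset.nonempty_iff_ne_empty.mpr hSe
      have hcard : (S.erase e).card ≤ n := by
        rw [Finset.card_erase_of_mem he]
        omega
      rcases (IH (S.erase e) hcard).2.2 (ends e).1 (ends e).2 (-1) (-1)
          (Or.inr rfl) (Or.inr rfl) with hL | hR
      · obtain ⟨A', hA'sub, hAll'⟩ := hL
        obtain ⟨A, hAsub, hstep⟩ := D_step ends he hA'sub 1 (Or.inl rfl)
        refine ⟨A, hAsub, fun v => ?_⟩
        beta_reduce
        refine allowed_congr ?_ (hAll' v)
        beta_reduce
        rw [hstep v]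
        unfold inc
        split_ifs <;> ring
      · obtain ⟨A', hA'sub, hAll'⟩ := hR
        obtain ⟨A, hAsub, hstep⟩ := D_step ends he hA'sub (-1) (Or.inr rfl)
        refine ⟨A, hAsub, fun v => ?_⟩
        beta_reduce
        refine allowed_congr ?_ (hAll' v)
        beta_reduce
        rw [hstep v]
        unfold inc
        split_ifs <;> ring
    have hL1 : ∀ (a : V) (c : ℤ), (c = 1 ∨ c = -1) →
        Good ends σ S (fun v => if a = v then -c else 0) := by
      intro a c hc
      by_cases hex : ∃ e ∈ S, (ends e).1 = a ∨ (ends e).2 = a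
      · obtain ⟨e, he, hinc⟩ := hex
        obtain ⟨b, hb⟩ := exists_other ends e a hinc
        have hcard : (S.erase e).card ≤ n := by
          rw [Finset.card_erase_of_mem he]; omega
        obtain ⟨A', hA'sub, hAll'⟩ := (IH (S.erase e) hcard).2.1 b (-c) (by omega)
        beta_reduce at hAll'
        obtain ⟨A, hAsub, hstep⟩ := D_step ends he hA'sub c hc
        refine ⟨A, hAsub, fun v => ?_⟩
        beta_reduce
        refine allowed_congr ?_ (hAll' v)
        beta_reduce
        rw [hstep v, hb v]
        split_ifs <;> ring
      · have hiso : ∀ e ∈ S, ¬((ends e).1 = a ∨ (ends e).2 = a) :=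
          fun e heS hp => hex ⟨e, heS, hp⟩
        obtain ⟨A, hAsub, hAll⟩ := hP
        beta_reduce at hAll
        refine ⟨A, hAsub, fun v => ?_⟩
        beta_reduce
        by_cases hv : a = v
        · subst hv
          have h1 : zdeg ends S a = 0 := zdeg_isolated ends hiso
          have h2 : zdeg ends A a = 0 :=
            zdeg_isolated ends (fun e heA => hiso e (hAsub heA))
          rw [if_pos rfl, h1, h2]
          exact allowed_congr (by ring) (allowed_unit (x := -c) (by omega))
        · rw [if_neg hv]
          exact hAll v
    refine ⟨hP, hL1, ?_⟩
    intro a a' c c' hc hc'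
    by_cases hex : ∃ e ∈ S, (ends e).1 = a ∨ (ends e).2 = a
    · obtain ⟨e, he, hinc⟩ := hex
      obtain ⟨b, hb⟩ := exists_other ends e a hinc
      have hcard : (S.erase e).card ≤ n := by
        rw [Finset.card_erase_of_mem he]; omega
      rcases (IH (S.erase e) hcard).2.2 b a' (-c) c' (by omega) hc' with hL | hR
      · obtain ⟨A', hA'sub, hAll'⟩ := hL
        obtain ⟨A, hAsub, hstep⟩ := D_step ends he hA'sub c hc
        left
        refine ⟨A, hAsub, fun v => ?_⟩
        beta_reduce
        refine allowed_congr ?_ (hAll' v)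
        beta_reduce
        rw [hstep v, hb v]
        split_ifs <;> ring
      · obtain ⟨A', hA'sub, hAll'⟩ := hR
        obtain ⟨A, hAsub, hstep⟩ := D_step ends he hA'sub (-c) (by omega)
        right
        refine ⟨A, hAsub, fun v => ?_⟩
        beta_reduce
        refine allowed_congr ?_ (hAll' v)
        beta_reduce
        rw [hstep v, hb v]
        split_ifs <;> ring
    · have hiso : ∀ e ∈ S, ¬((ends e).1 = a ∨ (ends e).2 = a) :=
        fun e heS hp => hex ⟨e, heS, hp⟩
      obtain ⟨A, hAsub, hAll⟩ := hL1 a' c' hc'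
      beta_reduce at hAll
      have h1 : zdeg ends S a = 0 := zdeg_isolated ends hiso
      have h2 : zdeg ends A a = 0 :=
        zdeg_isolated ends (fun e heA => hiso e (hAsub heA))
      by_cases hkey : a = a' ∧ c' = c
      · obtain ⟨hk1, hk2⟩ := hkey
        subst hk1
        by_cases hσ : σ a = true
        · rcases hc with h3 | h3
          · right
            refine ⟨A, hAsub, fun v => ?_⟩
            beta_reduce
            by_cases hv : a = v
            · subst hv
              rw [if_pos rfl, if_pos rfl, h1, h2]
              exact allowed_congr (by omega) (Or.inr (Or.inl ⟨rfl, hσ⟩))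
            · rw [if_neg hv, if_neg hv]
              exact allowed_congr (by rw [if_neg hv]; ring) (hAll v)
          · left
            refine ⟨A, hAsub, fun v => ?_⟩
            beta_reduce
            by_cases hv : a = v
            · subst hv
              rw [if_pos rfl, if_pos rfl, h1, h2]
              exact allowed_congr (by omega) (Or.inr (Or.inl ⟨rfl, hσ⟩))
            · rw [if_neg hv, if_neg hv]
              exact allowed_congr (by rw [if_neg hv]; ring) (hAll v)
        · have hσf : σ a = false := by
            cases h : σ a
            · rfl
            · exact absurd h hσ
          rcases hc with h3 | h3
          · left
            refine ⟨A, hAsub, fun v => ?_⟩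
            beta_reduce
            by_cases hv : a = v
            · subst hv
              rw [if_pos rfl, if_pos rfl, h1, h2]
              exact allowed_congr (by omega) (Or.inr (Or.inr ⟨rfl, hσf⟩))
            · rw [if_neg hv, if_neg hv]
              exact allowed_congr (by rw [if_neg hv]; ring) (hAll v)
          · right
            refine ⟨A, hAsub, fun v => ?_⟩
            beta_reduce
            by_cases hv : a = v
            · subst hv
              rw [if_pos rfl, if_pos rfl, h1, h2]
              exact allowed_congr (by omega) (Or.inr (Or.inr ⟨rfl, hσf⟩))
            · rw [if_neg hv, if_neg hv]
              exact allowed_congr (by rw [if_neg hv]; ring) (hAll v)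
      · left
        refine ⟨A, hAsub, fun v => ?_⟩
        beta_reduce
        by_cases hv : a = v <;> by_cases hv' : a' = v
        · have haa : a = a' := hv.trans hv'.symm
          have hcc : c' = -c := by
            rcases Decidable.em (c' = c) with h | h
            · exact absurd ⟨haa, h⟩ hkey
            · omega
          subst hv
          rw [if_pos rfl, if_pos hv', h1, h2]
          exact allowed_congr (by omega) (allowed_zero (b := σ a))
        · subst hv
          rw [if_pos rfl, if_neg hv', h1, h2]
          exact allowed_congr (by ring) (allowed_unit (x := -c) (by omega))
        · rw [if_neg hv, if_pos hv']
          exact allowed_congr (by rw [if_pos hv']; ring) (hAll v)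
        · rw [if_neg hv, if_neg hv']
          exact allowed_congr (by rw [if_neg hv']; ring) (hAll v)

end KS

namespace KS

lemma split (ends : E → V × V) (σ : V → Bool) (S : Finset E) :
    ∃ A, A ⊆ S ∧ ∀ v, Allowed (σ v) (2 * zdeg ends A v - zdeg ends S v) := by
  obtain ⟨A, hA, hall⟩ := (main_ind ends σ S.card S le_rfl).1
  exact ⟨A, hA, fun v => by simpa using hall v⟩

lemma dyadic (ends : E → V × V) : ∀ k : ℕ, ∀ m : ℕ, m ≤ 2^k →
    ∃ F : Finset E, ∀ v,
      |2^k * zdeg ends F v - (m : ℤ) * zdeg ends Finset.univ v| ≤ 2^k := by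
  intro k
  induction k with
  | zero =>
    intro m hm
    interval_cases m
    · refine ⟨∅, fun v => ?_⟩
      have hz : zdeg ends (∅ : Finset E) v = 0 := Finset.sum_empty
      rw [hz]
      norm_num
    · refine ⟨Finset.univ, fun v => ?_⟩
      norm_num
  | succ k IHk =>
    intro m hm
    have key : ∀ m' : ℕ, m' ≤ 2^k → ∃ F : Finset E, ∀ v,
        |2^(k+1) * zdeg ends F v - (m' : ℤ) * zdeg ends Finset.univ v| ≤ 2^(k+1) := by
      intro m' hm'
      obtain ⟨F', hF'⟩ := IHk m' hm'
      set σ : V → Bool := fun v =>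
        decide (2^k * zdeg ends F' v - (m' : ℤ) * zdeg ends Finset.univ v ≤ 0) with hσ
      obtain ⟨A, hAsub, hAll⟩ := split ends σ F'
      refine ⟨A, fun v => ?_⟩
      have hr := hF' v
      have hD := hAll v
      have hval : 2^(k+1) * zdeg ends A v - (m' : ℤ) * zdeg ends Finset.univ v
          = 2^k * (2 * zdeg ends A v - zdeg ends F' v)
            + (2^k * zdeg ends F' v - (m' : ℤ) * zdeg ends Finset.univ v) := by
        rw [pow_succ]; ring
      rw [hval]
      have hp : (0:ℤ) < 2^k := by positivity
      rw [abs_le] at hr ⊢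
      have hps : (2:ℤ)^(k+1) = 2^k * 2 := pow_succ 2 k
      rcases hD with h | h | h
      · rw [abs_le] at h
        have hub := mul_le_mul_of_nonneg_left h.2 hp.le
        have hlb := mul_le_mul_of_nonneg_left h.1 hp.le
        constructor
        · linarith
        · linarith
      · have hrle : 2^k * zdeg ends F' v - (m' : ℤ) * zdeg ends Finset.univ v ≤ 0 := by
          have := h.2
          rw [hσ] at this
          exact of_decide_eq_true this
        rw [h.1]
        constructor
        · linarith
        · linarith
      · have hrgt : ¬(2^k * zdeg ends F' v - (m' : ℤ) * zdeg ends Finset.univ v ≤ 0) := by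
          have := h.2
          rw [hσ] at this
          exact of_decide_eq_false this
        push_neg at hrgt
        rw [h.1]
        constructor
        · linarith
        · linarith
    by_cases hm2 : m ≤ 2^k
    · exact key m hm2
    · classical
      obtain ⟨F₁, hF₁⟩ := key (2^(k+1) - m) (by omega)
      refine ⟨Finset.univ \ F₁, fun v => ?_⟩
      have hsd : zdeg ends (Finset.univ \ F₁) v
          = zdeg ends Finset.univ v - zdeg ends F₁ v := by
        unfold zdeg
        rw [← Finset.sum_sdiff (Finset.subset_univ F₁)]
        ring
      rw [hsd]
      have h := hF₁ v
      have hcast : ((2^(k+1) - m : ℕ) : ℤ) = 2^(k+1) - (m : ℤ) := by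
        have h2 : m ≤ 2^(k+1) := hm
        push_cast [Nat.cast_sub h2]
        ring
      rw [hcast] at h
      have heq : 2^(k+1) * (zdeg ends Finset.univ v - zdeg ends F₁ v)
            - (m : ℤ) * zdeg ends Finset.univ v
          = -(2^(k+1) * zdeg ends F₁ v
            - (2^(k+1) - (m:ℤ)) * zdeg ends Finset.univ v) := by ring
      rw [heq, abs_neg]
      exact h

end KS

/-- Kano–Saito: ε-factors with degree error at most 1. -/
theorem stmt18 (ends : E → V × V) (ε : ℝ) (h0 : 0 ≤ ε) (h1 : ε ≤ 1) :
    ∃ F : Finset E, ∀ v : V,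
      |(mdeg ends F v : ℝ) - ε * (mdeg ends Finset.univ v : ℝ)| ≤ 1 := by
  classical
  have hfam : ∀ k : ℕ, ∃ F : Finset E, ∀ v,
      |(mdeg ends F v : ℝ) - ε * (mdeg ends Finset.univ v : ℝ)|
        ≤ 1 + (mdeg ends Finset.univ v : ℝ) / 2^k := by
    intro k
    have h2kpos : (0:ℝ) < 2^k := by positivity
    set m : ℕ := (⌊ε * 2^k⌋).toNat with hmdef
    have hfl : (0:ℤ) ≤ ⌊ε * 2^k⌋ := Int.floor_nonneg.mpr (by positivity)
    have hmz : (m : ℤ) = ⌊ε * 2^k⌋ := Int.toNat_of_nonneg hfl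
    have hmle : m ≤ 2^k := by
      have hle : ε * 2^k ≤ ((2^k : ℕ) : ℝ) := by
        push_cast
        nlinarith [h2kpos]
      have h2 : ⌊ε * 2^k⌋ ≤ ((2^k : ℕ) : ℤ) := by
        have := Int.floor_le_floor hle
        rwa [Int.floor_natCast] at this
      have : (m : ℤ) ≤ ((2^k : ℕ) : ℤ) := by rw [hmz]; exact h2
      exact_mod_cast this
    obtain ⟨F, hF⟩ := KS.dyadic ends k m hmle
    refine ⟨F, fun v => ?_⟩
    have hFv := hF v
    rw [← KS.zdeg_cast ends F v, ← KS.zdeg_cast ends Finset.univ v] at hFv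
    have hcast : |(2:ℝ)^k * (mdeg ends F v : ℝ) - (m:ℝ) * (mdeg ends Finset.univ v : ℝ)|
        ≤ (2:ℝ)^k := by
      have h2 : ((|2 ^ k * (mdeg ends F v : ℤ) - (m:ℤ) * (mdeg ends Finset.univ v : ℤ)| : ℤ) : ℝ)
          ≤ (((2:ℤ) ^ k : ℤ) : ℝ) := Int.cast_le.mpr hFv
      rw [Int.cast_abs] at h2
      push_cast at h2
      exact h2
    set dF := (mdeg ends F v : ℝ)
    set dU := (mdeg ends Finset.univ v : ℝ)
    have hdU : 0 ≤ dU := Nat.cast_nonneg _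
    have hfloor1 : ((⌊ε * 2^k⌋ : ℤ) : ℝ) ≤ ε * 2^k := Int.floor_le _
    have hfloor2 : ε * 2^k < ((⌊ε * 2^k⌋ : ℤ) : ℝ) + 1 := Int.lt_floor_add_one _
    have hmr : |(m:ℝ) - ε * 2^k| ≤ 1 := by
      have hmzr : (m : ℝ) = ((⌊ε * 2^k⌋ : ℤ) : ℝ) := by exact_mod_cast hmz
      rw [abs_le]
      constructor <;> [linarith [hmzr ▸ hfloor2]; linarith [hmzr ▸ hfloor1]]
    have key : dF - ε * dU
        = (2^k * dF - (m:ℝ) * dU)/2^k + (((m:ℝ) - ε * 2^k) * dU)/2^k := by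
      field_simp
      ring
    rw [key]
    have hb1 : |(2^k * dF - (m:ℝ) * dU)/2^k| ≤ 1 := by
      rw [abs_div, abs_of_pos h2kpos]
      rw [div_le_one h2kpos]
      exact hcast
    have hb2 : |(((m:ℝ) - ε * 2^k) * dU)/2^k| ≤ dU / 2^k := by
      have hrw : |(((m:ℝ) - ε * 2^k) * dU)/2^k| = |(m:ℝ) - ε*2^k| * (dU / 2^k) := by
        rw [abs_div, abs_mul, abs_of_nonneg hdU, abs_of_pos h2kpos]
        ring
      rw [hrw]
      have hq : (0:ℝ) ≤ dU / 2^k := by positivity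
      nlinarith [hmr, hq, abs_nonneg ((m:ℝ) - ε*2^k)]
    calc |(2^k * dF - (m:ℝ) * dU)/2^k + (((m:ℝ) - ε * 2^k) * dU)/2^k|
        ≤ |(2^k * dF - (m:ℝ) * dU)/2^k| + |(((m:ℝ) - ε * 2^k) * dU)/2^k| := abs_add_le _ _
      _ ≤ 1 + dU / 2^k := add_le_add hb1 hb2
  choose g hg using hfam
  obtain ⟨F, hFinf⟩ := Finite.exists_infinite_fiber g
  rw [Set.infinite_coe_iff] at hFinf
  refine ⟨F, fun v => ?_⟩
  set dU := (mdeg ends Finset.univ v : ℝ) with hdUdef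
  have hdU : 0 ≤ dU := Nat.cast_nonneg _
  refine le_of_forall_pos_le_add ?_
  intro η hη
  obtain ⟨N, hN⟩ := pow_unbounded_of_one_lt (dU / η) (one_lt_two (α := ℝ))
  have hexk : ∃ k, g k = F ∧ N ≤ k := by
    by_contra hcon
    push_neg at hcon
    have hsub : g ⁻¹' {F} ⊆ Set.Iio N := by
      intro k hk
      have hkF : g k = F := by simpa using hk
      exact hcon k hkF
    exact hFinf (Set.Finite.subset (Set.finite_Iio N) hsub)
  obtain ⟨k, hk, hNk⟩ := hexk
  have hb := hg k v
  rw [hk] at hb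
  have hmono : dU / 2^k ≤ dU / 2^N :=
    div_le_div_of_nonneg_left hdU (by positivity) (pow_le_pow_right₀ one_le_two hNk)
  have hlast : dU / 2^N < η := by
    rw [div_lt_iff₀ (by positivity : (0:ℝ) < 2^N)]
    rw [div_lt_iff₀ hη] at hN
    linarith
  linarith [hb]
end

section
/- For any real ε with 0 ≤ ε ≤ 1, every bipartite multigraph G has a spanning subgraph F such that |d_F(v) - ε·d_G(v)| < 1 for every vertex v. -/
open Finset

variable {V E : Type*} [Fintype V] [Fintype E] [DecidableEq V]

set_option linter.unusedSectionVars false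
set_option maxHeartbeats 1000000

namespace Stmt19
variable (ends : E → V × V)

def incN (e : E) (v : V) : ℕ :=
  (if (ends e).1 = v then 1 else 0) + (if (ends e).2 = v then 1 else 0)

noncomputable def S (x : E → ℝ) (v : V) : ℝ := ∑ e, x e * (incN ends e v : ℝ)

lemma mdeg_eq_sum_incN (F : Finset E) (v : V) :
    mdeg ends F v = ∑ e ∈ F, incN ends e v := rfl

lemma incN_cast (e : E) (v : V) : ((incN ends e v : ℕ) : ℝ)
    = (if (ends e).1 = v then (1:ℝ) else 0) + (if (ends e).2 = v then (1:ℝ) else 0) := by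
  simp [incN, apply_ite (Nat.cast : ℕ → ℝ)]

lemma sum_incN (e : E) : ∑ v, incN ends e v = 2 := by
  simp [incN, Finset.sum_add_distrib, Finset.sum_ite_eq]

lemma continuous_S (v : V) : Continuous fun x : E → ℝ => S ends x v :=
  continuous_finset_sum _ fun e _ => (continuous_apply e).mul continuous_const

lemma S_add (x y : E → ℝ) (v : V) : S ends (x + y) v = S ends x v + S ends y v := by
  simp [S, add_mul, Finset.sum_add_distrib]

lemma S_smul (t : ℝ) (y : E → ℝ) (v : V) : S ends (t • y) v = t * S ends y v := by
  simp [S, Finset.mul_sum, mul_assoc]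

open scoped Classical in
lemma two_le_fracdeg (x : E → ℝ) (hx : ∀ e, 0 ≤ x e ∧ x e ≤ 1) (v : V)
    (htight : ∃ n : ℤ, S ends x v = n)
    (htouch : ∃ e, (x e ≠ 0 ∧ x e ≠ 1) ∧ incN ends e v ≠ 0) :
    2 ≤ ∑ e ∈ univ.filter (fun e => x e ≠ 0 ∧ x e ≠ 1), incN ends e v := by
  classical
  obtain ⟨n, hn⟩ := htight
  obtain ⟨e1, he1p, he1i⟩ := htouch
  set Frac := univ.filter (fun e : E => x e ≠ 0 ∧ x e ≠ 1) with hF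
  have he1 : e1 ∈ Frac := by simp [hF, he1p.1, he1p.2]
  by_contra hlt
  push_neg at hlt
  have hle1 : ∑ e ∈ Frac, incN ends e v ≤ 1 := by omega
  set A := ∑ e ∈ Frac, x e * (incN ends e v : ℝ) with hA
  have hposinc : (0:ℝ) < (incN ends e1 v : ℝ) := by
    exact_mod_cast Nat.pos_of_ne_zero he1i
  have hApos : 0 < A := by
    apply Finset.sum_pos'
    · intro e _; exact mul_nonneg (hx e).1 (Nat.cast_nonneg _)
    · exact ⟨e1, he1, mul_pos (lt_of_le_of_ne (hx e1).1 (Ne.symm he1p.1)) hposinc⟩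
  have hAlt : A < 1 := by
    have h1 : A < ∑ e ∈ Frac, 1 * (incN ends e v : ℝ) := by
      apply Finset.sum_lt_sum
      · intro e _; exact mul_le_mul_of_nonneg_right (hx e).2 (Nat.cast_nonneg _)
      · exact ⟨e1, he1, mul_lt_mul_of_pos_right (lt_of_le_of_ne (hx e1).2 he1p.2) hposinc⟩
    have h2 : ∑ e ∈ Frac, 1 * (incN ends e v : ℝ) = ((∑ e ∈ Frac, incN ends e v : ℕ) : ℝ) := by
      push_cast; simp
    have h3 : ((∑ e ∈ Frac, incN ends e v : ℕ) : ℝ) ≤ 1 := by exact_mod_cast hle1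
    linarith
  set B := ∑ e ∈ univ.filter (fun e : E => ¬(x e ≠ 0 ∧ x e ≠ 1)), x e * (incN ends e v : ℝ) with hB
  have hsplit : S ends x v = A + B :=
    (Finset.sum_filter_add_sum_filter_not univ _ _).symm
  have hBint : ∃ m : ℤ, B = m := by
    refine ⟨∑ e ∈ univ.filter (fun e : E => ¬(x e ≠ 0 ∧ x e ≠ 1)),
      if x e = 1 then (incN ends e v : ℤ) else 0, ?_⟩
    rw [hB]
    push_cast
    apply Finset.sum_congr rfl
    intro e he
    have h01 : x e = 0 ∨ x e = 1 := by
      have := (mem_filter.mp he).2; tauto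
    rcases h01 with h | h <;> simp [h]
  obtain ⟨m, hm⟩ := hBint
  rw [hsplit] at hn
  have h1 : (0:ℝ) < (n:ℝ) - m := by rw [hm] at hn; linarith
  have h2 : (n:ℝ) - m < 1 := by rw [hm] at hn; linarith
  have h1' : (0:ℤ) < n - m := by exact_mod_cast h1
  have h2' : n - m < 1 := by exact_mod_cast h2
  omega

open scoped Classical in
lemma exists_direction (side : V → Bool)
    (hbip : ∀ e : E, side (ends e).1 ≠ side (ends e).2)
    (x : E → ℝ) (hx : ∀ e, 0 ≤ x e ∧ x e ≤ 1)
    (e0 : E) (he0 : x e0 ≠ 0 ∧ x e0 ≠ 1) :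
    ∃ y : E → ℝ, y ≠ 0 ∧ (∀ e, (x e = 0 ∨ x e = 1) → y e = 0) ∧
      (∀ v, (∃ n : ℤ, S ends x v = n) → S ends y v = 0) := by
  classical
  set Frac : Finset E := univ.filter (fun e : E => x e ≠ 0 ∧ x e ≠ 1) with hFrac
  set T : Finset V := univ.filter
    (fun v : V => (∃ e ∈ Frac, incN ends e v ≠ 0) ∧ ∃ n : ℤ, S ends x v = n) with hT
  have he0F : e0 ∈ Frac := by simp [hFrac, he0.1, he0.2]
  have hdeg2 : ∀ v ∈ T, 2 ≤ ∑ e ∈ Frac, incN ends e v := by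
    intro v hv
    have hv' := (mem_filter.mp hv).2
    exact two_le_fracdeg ends x hx v hv'.2 (by
      obtain ⟨e, heF, hei⟩ := hv'.1
      exact ⟨e, (mem_filter.mp heF).2, hei⟩)
  have htotal : ∑ v, ∑ e ∈ Frac, incN ends e v = 2 * Frac.card := by
    rw [Finset.sum_comm]
    simp [sum_incN, mul_comm]
  set L : (↥Frac → ℝ) →ₗ[ℝ] (↥T → ℝ) :=
    { toFun := fun y v => ∑ e : ↥Frac, y e * (incN ends e.1 v.1 : ℝ)
      map_add' := by intro y z; funext v; simp [add_mul, Finset.sum_add_distrib]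
      map_smul' := by
        intro c y; funext v
        simp only [RingHom.id_apply, Pi.smul_apply, smul_eq_mul, Finset.mul_sum]
        exact Finset.sum_congr rfl fun e _ => by ring } with hL
  have hdomrank : Module.finrank ℝ (↥Frac → ℝ) = Frac.card := by
    rw [Module.finrank_pi, Fintype.card_coe]
  have hcodrank : Module.finrank ℝ (↥T → ℝ) = T.card := by
    rw [Module.finrank_pi, Fintype.card_coe]
  have hTcard : 2 * T.card ≤ 2 * Frac.card := by
    calc 2 * T.card = ∑ _v ∈ T, 2 := by simp [mul_comm]
    _ ≤ ∑ v ∈ T, ∑ e ∈ Frac, incN ends e v := Finset.sum_le_sum hdeg2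
    _ ≤ ∑ v, ∑ e ∈ Frac, incN ends e v :=
        Finset.sum_le_sum_of_subset (Finset.subset_univ T)
    _ = 2 * Frac.card := htotal
  have hnotinj : ¬ Function.Injective L := by
    intro hinj
    by_cases hall : ∀ v, (∃ e ∈ Frac, incN ends e v ≠ 0) → (∃ n : ℤ, S ends x v = n)
    · -- case A : all touched vertices tight
      have hend : ∀ e ∈ Frac, (ends e).1 ∈ T ∧ (ends e).2 ∈ T := by
        intro e he
        have h1 : incN ends e (ends e).1 ≠ 0 := by simp [incN]
        have h2 : incN ends e (ends e).2 ≠ 0 := by simp [incN]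
        exact ⟨mem_filter.mpr ⟨mem_univ _, ⟨e, he, h1⟩, hall _ ⟨e, he, h1⟩⟩,
               mem_filter.mpr ⟨mem_univ _, ⟨e, he, h2⟩, hall _ ⟨e, he, h2⟩⟩⟩
      set c : (↥T → ℝ) →ₗ[ℝ] ℝ :=
        { toFun := fun z => ∑ v : ↥T, (if side v.1 then (1:ℝ) else -1) * z v
          map_add' := by intro y z; simp [mul_add, Finset.sum_add_distrib]
          map_smul' := by
            intro a z
            simp only [RingHom.id_apply, Pi.smul_apply, smul_eq_mul, Finset.mul_sum]
            exact Finset.sum_congr rfl fun v _ => by ring } with hc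
      have hcomp : ∀ y : ↥Frac → ℝ, c (L y) = 0 := by
        intro y
        show ∑ v : ↥T, (if side v.1 then (1:ℝ) else -1) *
            (∑ e : ↥Frac, y e * (incN ends e.1 v.1 : ℝ)) = 0
        simp only [Finset.mul_sum]
        rw [Finset.sum_comm]
        apply Finset.sum_eq_zero
        intro e _
        have h1T := (hend e.1 e.2).1
        have h2T := (hend e.1 e.2).2
        have key : (∑ v ∈ T, (if side v then (1:ℝ) else -1) * (incN ends e.1 v : ℝ))
            = (if side (ends e.1).1 then (1:ℝ) else -1)
              + (if side (ends e.1).2 then (1:ℝ) else -1) := by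
          simp only [incN_cast, mul_add, Finset.sum_add_distrib, mul_ite, mul_one, mul_zero]
          rw [Finset.sum_ite_eq T (ends e.1).1 (fun v => if side v then (1:ℝ) else -1),
              Finset.sum_ite_eq T (ends e.1).2 (fun v => if side v then (1:ℝ) else -1)]
          simp [h1T, h2T]
        have hsgn : (if side (ends e.1).1 then (1:ℝ) else -1)
              + (if side (ends e.1).2 then (1:ℝ) else -1) = 0 := by
          have := hbip e.1
          cases hb1 : side (ends e.1).1 <;> cases hb2 : side (ends e.1).2 <;> simp_all
        calc ∑ v : ↥T, (if side v.1 then (1:ℝ) else -1) * (y e * (incN ends e.1 v.1 : ℝ))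
            = y e * ∑ v : ↥T, (if side v.1 then (1:ℝ) else -1) * (incN ends e.1 v.1 : ℝ) := by
              rw [Finset.mul_sum]; exact Finset.sum_congr rfl fun v _ => by ring
          _ = y e * ∑ v ∈ T, (if side v then (1:ℝ) else -1) * (incN ends e.1 v : ℝ) := by
              rw [Finset.sum_coe_sort T (fun v => (if side v then (1:ℝ) else -1) * (incN ends e.1 v : ℝ))]
          _ = 0 := by rw [key, hsgn, mul_zero]
      have hcompL : c.comp L = 0 := LinearMap.ext fun y => hcomp y
      have hrange : LinearMap.range L ≤ LinearMap.ker c :=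
        LinearMap.range_le_ker_iff.mpr hcompL
      have hv0T : (ends e0).1 ∈ T := (hend e0 he0F).1
      set z : ↥T → ℝ := Pi.single (⟨(ends e0).1, hv0T⟩ : ↥T) (1:ℝ) with hz
      have hcz : c z ≠ 0 := by
        have hval : c z = (if side (ends e0).1 then (1:ℝ) else -1) := by
          show (∑ v : ↥T, (if side v.1 then (1:ℝ) else -1) * z v) = _
          rw [Finset.sum_eq_single (⟨(ends e0).1, hv0T⟩ : ↥T)]
          · simp [hz]
          · intro b _ hb; simp [hz, Pi.single_eq_of_ne hb]
          · intro h; exact absurd (Finset.mem_univ _) h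
        rw [hval]; split_ifs <;> norm_num
      have hrangec : LinearMap.range c = ⊤ := by
        rw [eq_top_iff]
        rintro r -
        exact ⟨(r / c z) • z, by rw [map_smul, smul_eq_mul, div_mul_cancel₀ _ hcz]⟩
      have h1c : Module.finrank ℝ (LinearMap.range c) = 1 := by
        rw [hrangec]
        simp [finrank_top]
      have hrn := LinearMap.finrank_range_add_finrank_ker c
      rw [hcodrank, h1c] at hrn
      have h2 : Frac.card ≤ Module.finrank ℝ (LinearMap.ker c) := by
        rw [← hdomrank, ← LinearMap.finrank_range_of_inj hinj]
        exact Submodule.finrank_mono hrange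
      have hF1 : 1 ≤ Frac.card := Finset.card_pos.mpr ⟨e0, he0F⟩
      omega
    · -- case B
      push_neg at hall
      obtain ⟨u, huT, hunt⟩ := hall
      have huNT : u ∉ T := by
        simp only [hT, mem_filter]
        tauto
      have hu1 : 1 ≤ ∑ e ∈ Frac, incN ends e u := by
        obtain ⟨e, heF, hei⟩ := huT
        calc 1 ≤ incN ends e u := Nat.pos_of_ne_zero hei
        _ ≤ ∑ e ∈ Frac, incN ends e u :=
            Finset.single_le_sum (f := fun e => incN ends e u)
              (fun _ _ => Nat.zero_le _) heF
      have hstrict : 2 * T.card + 1 ≤ 2 * Frac.card := by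
        calc 2 * T.card + 1 = (∑ _v ∈ T, 2) + 1 := by simp [mul_comm]
        _ ≤ (∑ v ∈ T, ∑ e ∈ Frac, incN ends e v) + ∑ e ∈ Frac, incN ends e u :=
            Nat.add_le_add (Finset.sum_le_sum hdeg2) hu1
        _ = ∑ v ∈ insert u T, ∑ e ∈ Frac, incN ends e v := by
            rw [Finset.sum_insert huNT]; ring
        _ ≤ ∑ v, ∑ e ∈ Frac, incN ends e v :=
            Finset.sum_le_sum_of_subset (Finset.subset_univ _)
        _ = 2 * Frac.card := htotal
      have := LinearMap.finrank_le_finrank_of_injective hinj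
      rw [hdomrank, hcodrank] at this
      omega
  have hker : LinearMap.ker L ≠ ⊥ := fun h => hnotinj (LinearMap.ker_eq_bot.mp h)
  obtain ⟨y0, hy0mem, hy0ne⟩ := (Submodule.ne_bot_iff _).mp hker
  refine ⟨fun e => if h : e ∈ Frac then y0 ⟨e, h⟩ else 0, ?_, ?_, ?_⟩
  · obtain ⟨w, hw⟩ := Function.ne_iff.mp hy0ne
    intro hzero
    apply hw
    have hval : (fun e => if h : e ∈ Frac then y0 ⟨e, h⟩ else 0) w.1 = y0 w := by
      simp [w.2]
    rw [← hval, hzero]; rfl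
  · intro e he
    have heF : e ∉ Frac := by simp [hFrac]; tauto
    simp [heF]
  · intro v hv
    have hsupp : S ends (fun e => if h : e ∈ Frac then y0 ⟨e, h⟩ else 0) v
        = ∑ e ∈ Frac, (if h : e ∈ Frac then y0 ⟨e, h⟩ else 0) * (incN ends e v : ℝ) := by
      rw [S, ← Finset.sum_filter_add_sum_filter_not univ (fun e => e ∈ Frac)]
      have h2 : ∑ e ∈ univ.filter (fun e => e ∉ Frac),
          (if h : e ∈ Frac then y0 ⟨e, h⟩ else 0) * (incN ends e v : ℝ) = 0 := by
        apply Finset.sum_eq_zero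
        intro e he
        have := (mem_filter.mp he).2
        simp [this]
      rw [h2, add_zero]
      apply Finset.sum_congr
      · simp [Finset.filter_mem_eq_inter]
      · intros; rfl
    rw [hsupp]
    by_cases htouch : ∃ e ∈ Frac, incN ends e v ≠ 0
    · have hvT : v ∈ T := mem_filter.mpr ⟨mem_univ _, htouch, hv⟩
      have hLv : ∑ e : ↥Frac, y0 e * (incN ends e.1 v : ℝ) = 0 :=
        congrFun (LinearMap.mem_ker.mp hy0mem) ⟨v, hvT⟩
      rw [← Finset.sum_attach Frac
        (fun e => (if h : e ∈ Frac then y0 ⟨e, h⟩ else 0) * (incN ends e v : ℝ))]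
      rw [← hLv]
      apply Finset.sum_congr rfl
      intro e _
      simp [e.2]
    · push_neg at htouch
      apply Finset.sum_eq_zero
      intro e he
      simp [htouch e he]

lemma exists_integral (side : V → Bool)
    (hbip : ∀ e : E, side (ends e).1 ≠ side (ends e).2)
    (lo hi : V → ℤ) (x₀ : E → ℝ)
    (h₀ : (∀ e, 0 ≤ x₀ e ∧ x₀ e ≤ 1) ∧
      ∀ v, (lo v : ℝ) ≤ S ends x₀ v ∧ S ends x₀ v ≤ (hi v : ℝ)) :
    ∃ x : E → ℝ, ((∀ e, 0 ≤ x e ∧ x e ≤ 1) ∧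
      ∀ v, (lo v : ℝ) ≤ S ends x v ∧ S ends x v ≤ (hi v : ℝ)) ∧
      ∀ e, x e = 0 ∨ x e = 1 := by
  classical
  set K : Set (E → ℝ) := {x | (∀ e, 0 ≤ x e ∧ x e ≤ 1) ∧
    ∀ v, (lo v : ℝ) ≤ S ends x v ∧ S ends x v ≤ (hi v : ℝ)} with hK
  have hKeq : K = (⋂ e, ({x | 0 ≤ x e} ∩ {x | x e ≤ 1})) ∩
      ⋂ v, ({x | (lo v : ℝ) ≤ S ends x v} ∩ {x | S ends x v ≤ (hi v : ℝ)}) := by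
    ext w
    simp only [hK, Set.mem_setOf_eq, Set.mem_inter_iff, Set.mem_iInter, Set.mem_setOf_eq,
      forall_and]
  have hKclosed : IsClosed K := by
    rw [hKeq]
    apply IsClosed.inter
    · exact isClosed_iInter fun e => IsClosed.inter
        (isClosed_le continuous_const (continuous_apply e))
        (isClosed_le (continuous_apply e) continuous_const)
    · exact isClosed_iInter fun v => IsClosed.inter
        (isClosed_le continuous_const (continuous_S ends v))
        (isClosed_le (continuous_S ends v) continuous_const)
  have hKsub : K ⊆ Set.Icc 0 1 := fun w hw =>
    ⟨fun e => (hw.1 e).1, fun e => (hw.1 e).2⟩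
  have hKcompact : IsCompact K := isCompact_Icc.of_isClosed_subset hKclosed hKsub
  have hΦ : Continuous (fun w : E → ℝ => ∑ e, w e * (1 - w e)) :=
    continuous_finset_sum _ fun e _ =>
      (continuous_apply e).mul (continuous_const.sub (continuous_apply e))
  obtain ⟨x, hxK, hmin⟩ := hKcompact.exists_isMinOn ⟨x₀, h₀⟩ hΦ.continuousOn
  refine ⟨x, hxK, ?_⟩
  by_contra hbad
  push_neg at hbad
  obtain ⟨e0, he00, he01⟩ := hbad
  obtain ⟨y, hyne, hysupp, hytight⟩ :=
    exists_direction ends side hbip x hxK.1 e0 ⟨he00, he01⟩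
  -- eventually-in-K
  have hev : ∀ᶠ t : ℝ in nhds 0, (x + t • y) ∈ K := by
    have h1 : ∀ᶠ t : ℝ in nhds 0, ∀ e, 0 ≤ (x + t • y) e ∧ (x + t • y) e ≤ 1 := by
      rw [Filter.eventually_all]
      intro e
      by_cases hxe : x e = 0 ∨ x e = 1
      · have hy0 : y e = 0 := hysupp e hxe
        apply Filter.Eventually.of_forall
        intro t
        simp only [Pi.add_apply, Pi.smul_apply, smul_eq_mul, hy0, mul_zero, add_zero]
        exact hxK.1 e
      · push_neg at hxe
        have hx0 : 0 < x e := lt_of_le_of_ne (hxK.1 e).1 (Ne.symm hxe.1)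
        have hx1 : x e < 1 := lt_of_le_of_ne (hxK.1 e).2 hxe.2
        have hcont : Continuous (fun t : ℝ => x e + t * y e) :=
          continuous_const.add (continuous_id.mul continuous_const)
        have htend : Filter.Tendsto (fun t : ℝ => x e + t * y e) (nhds 0) (nhds (x e)) := by
          have := hcont.tendsto 0
          simpa using this
        have hmem : ∀ᶠ s : ℝ in nhds (x e), s ∈ Set.Ioo (0:ℝ) 1 :=
          isOpen_Ioo.eventually_mem ⟨hx0, hx1⟩
        filter_upwards [htend.eventually hmem] with t ht
        simp only [Pi.add_apply, Pi.smul_apply, smul_eq_mul]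
        exact ⟨ht.1.le, ht.2.le⟩
    have h2 : ∀ᶠ t : ℝ in nhds 0, ∀ v, (lo v : ℝ) ≤ S ends (x + t • y) v ∧
        S ends (x + t • y) v ≤ (hi v : ℝ) := by
      rw [Filter.eventually_all]
      intro v
      have hrw : ∀ t : ℝ, S ends (x + t • y) v = S ends x v + t * S ends y v := by
        intro t; rw [S_add, S_smul]
      by_cases hSy : S ends y v = 0
      · apply Filter.Eventually.of_forall
        intro t
        rw [hrw, hSy, mul_zero, add_zero]
        exact hxK.2 v
      · have hnt : ¬ ∃ n : ℤ, S ends x v = n := fun h => hSy (hytight v h)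
        have hlt1 : (lo v : ℝ) < S ends x v :=
          lt_of_le_of_ne (hxK.2 v).1 (fun h => hnt ⟨lo v, h.symm⟩)
        have hlt2 : S ends x v < (hi v : ℝ) :=
          lt_of_le_of_ne (hxK.2 v).2 (fun h => hnt ⟨hi v, h⟩)
        have hcont : Continuous (fun t : ℝ => S ends x v + t * S ends y v) :=
          continuous_const.add (continuous_id.mul continuous_const)
        have htend : Filter.Tendsto (fun t : ℝ => S ends x v + t * S ends y v)
            (nhds 0) (nhds (S ends x v)) := by
          have := hcont.tendsto 0
          simpa using this
        have hmem : ∀ᶠ s : ℝ in nhds (S ends x v), s ∈ Set.Ioo ((lo v : ℝ)) ((hi v : ℝ)) :=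
          isOpen_Ioo.eventually_mem ⟨hlt1, hlt2⟩
        filter_upwards [htend.eventually hmem] with t ht
        rw [hrw]
        exact ⟨ht.1.le, ht.2.le⟩
    filter_upwards [h1, h2] with t ht1 ht2
    exact ⟨ht1, ht2⟩
  obtain ⟨δ, hδpos, hδ⟩ := Metric.eventually_nhds_iff.mp hev
  set a := ∑ e, y e * (1 - 2 * x e) with ha
  set b := ∑ e, (y e)^2 with hb
  have hbpos : 0 < b := by
    obtain ⟨w, hw⟩ := Function.ne_iff.mp hyne
    have hw' : y w ≠ 0 := hw
    apply Finset.sum_pos'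
    · intro e _; exact sq_nonneg _
    · exact ⟨w, Finset.mem_univ _, by positivity⟩
  set t : ℝ := if a ≤ 0 then δ/2 else -(δ/2) with ht_def
  have ht0 : t ≠ 0 := by
    rw [ht_def]; split_ifs <;> [positivity; (intro h; nlinarith)]
  have habs : |t| = δ/2 := by
    rw [ht_def]; split_ifs
    · exact abs_of_pos (by linarith)
    · rw [abs_neg]; exact abs_of_pos (by linarith)
  have hdist : dist t 0 < δ := by
    rw [Real.dist_eq, sub_zero, habs]; linarith
  have hmem : x + t • y ∈ K := hδ hdist
  have hta : t * a ≤ 0 := by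
    rw [ht_def]; split_ifs with h
    · exact mul_nonpos_of_nonneg_of_nonpos (by linarith) h
    · push_neg at h; nlinarith
  have htb : 0 < t^2 * b := by
    apply mul_pos _ hbpos
    exact lt_of_le_of_ne (sq_nonneg t) (Ne.symm (pow_ne_zero 2 ht0))
  have hexpand : ∑ e, ((x + t • y) e * (1 - (x + t • y) e))
      = (∑ e, x e * (1 - x e)) + t * a - t^2 * b := by
    rw [ha, hb, Finset.mul_sum, Finset.mul_sum, ← Finset.sum_add_distrib,
      ← Finset.sum_sub_distrib]
    apply Finset.sum_congr rfl
    intro e _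
    simp only [Pi.add_apply, Pi.smul_apply, smul_eq_mul]
    ring
  have hminle : (∑ e, x e * (1 - x e)) ≤ ∑ e, ((x + t • y) e * (1 - (x + t • y) e)) :=
    isMinOn_iff.mp hmin _ hmem
  rw [hexpand] at hminle
  linarith

end Stmt19

open Stmt19 in
/-- Hoffman: ε-factors of bipartite multigraphs with degree error < 1. -/
theorem stmt19 (ends : E → V × V) (side : V → Bool)
    (hbip : ∀ e : E, side (ends e).1 ≠ side (ends e).2)
    (ε : ℝ) (h0 : 0 ≤ ε) (h1 : ε ≤ 1) :
    ∃ F : Finset E, ∀ v : V,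
      |(mdeg ends F v : ℝ) - ε * (mdeg ends Finset.univ v : ℝ)| < 1 := by
  classical
  have hS0 : ∀ v, S ends (fun _ => ε) v = ε * (mdeg ends Finset.univ v : ℝ) := by
    intro v
    rw [S, mdeg_eq_sum_incN]
    push_cast
    rw [Finset.mul_sum]
  obtain ⟨x, ⟨hx01, hxb⟩, hint⟩ := exists_integral ends side hbip
    (fun v => ⌊ε * (mdeg ends Finset.univ v : ℝ)⌋)
    (fun v => ⌈ε * (mdeg ends Finset.univ v : ℝ)⌉)
    (fun _ => ε)
    ⟨fun e => ⟨h0, h1⟩, fun v => by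
      rw [hS0]
      exact ⟨Int.floor_le _, Int.le_ceil _⟩⟩
  refine ⟨univ.filter (fun e => x e = 1), fun v => ?_⟩
  have hmd : (mdeg ends (univ.filter (fun e => x e = 1)) v : ℝ) = S ends x v := by
    rw [mdeg_eq_sum_incN, S]
    push_cast
    rw [← Finset.sum_filter_add_sum_filter_not univ (fun e => x e = 1)
      (fun e => x e * (incN ends e v : ℝ))]
    have hz : ∑ e ∈ univ.filter (fun e => ¬ x e = 1), x e * (incN ends e v : ℝ) = 0 := by
      apply Finset.sum_eq_zero
      intro e he
      have hne := (mem_filter.mp he).2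
      rcases hint e with h | h
      · rw [h, zero_mul]
      · exact absurd h hne
    rw [hz, add_zero]
    apply Finset.sum_congr rfl
    intro e he
    rw [(mem_filter.mp he).2, one_mul]
  set σ := ε * (mdeg ends Finset.univ v : ℝ) with hσ
  have hb1 := (hxb v).1
  have hb2 := (hxb v).2
  rw [abs_lt]
  constructor
  · have := Int.sub_one_lt_floor σ
    rw [hmd]
    linarith
  · have := Int.ceil_lt_add_one σ
    rw [hmd]
    linarith
end
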